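/- arXiv:1405.4629 — 10 statements merged into one kernel-verified Lean document; each statement's English description precedes it below -/
import Mathlib

section
/- For any graph G=(V,E) with V a finite subset of the positive integers, and for each j with 0≤j≤|E| and each composition α of |V|, the coefficient of x_1^{α_1}⋯x_m^{α_m} t^j in X_G(x,t) equals the coefficient of x_m^{α_1} x_{m-1}^{α_2} ⋯ x_1^{α_m} t^{|E|−j} in X_G(x,t). -/
/-- A graph on a finite set of positive integers, with edges stored as ordered
pairs `(i, j)` with `i < j`. -/
structure FinGraph where
  V : Finset ℕ
  E : Finset (ℕ × ℕ)
  mem_fst : ∀ e ∈ E, e.1 ∈ V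
  mem_snd : ∀ e ∈ E, e.2 ∈ V
  fst_lt_snd : ∀ e ∈ E, e.1 < e.2
  pos : ∀ v ∈ V, 0 < v

/-- A proper coloring of `G` by positive integers (set to `0` off the vertex set). -/
def IsProperColoring (G : FinGraph) (κ : ℕ → ℕ) : Prop :=
  (∀ v ∈ G.V, 0 < κ v) ∧ (∀ v, v ∉ G.V → κ v = 0) ∧ ∀ e ∈ G.E, κ e.1 ≠ κ e.2

/-- `asc κ`: the number of edges `{i,j}` with `i < j` and `κ i < κ j`. -/
def ascNum (G : FinGraph) (κ : ℕ → ℕ) : ℕ :=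
  (G.E.filter fun e => κ e.1 < κ e.2).card

/-- The monomial `x_κ = ∏_{v ∈ V} x_{κ v}`, recorded as an exponent vector. -/
noncomputable def xmonom (G : FinGraph) (κ : ℕ → ℕ) : ℕ →₀ ℕ :=
  ∑ v ∈ G.V, Finsupp.single (κ v) 1

/-- The chromatic quasisymmetric function `X_G(x,t)`, as a formal power series in
the variables `x_1, x_2, …` whose coefficients are polynomials in `t`. -/
noncomputable def XG (G : FinGraph) : MvPowerSeries ℕ (Polynomial ℚ) :=
  fun d => ∑ᶠ κ ∈ {κ : ℕ → ℕ | IsProperColoring G κ ∧ xmonom G κ = d},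
    (Polynomial.X : Polynomial ℚ) ^ ascNum G κ

/-- `[k]_t = 1 + t + ⋯ + t^(k-1)`. -/
noncomputable def tnum (R : Type*) [CommSemiring R] (k : ℕ) : Polynomial R :=
  ∑ j ∈ Finset.range k, Polynomial.X ^ j


/-
On colorings with colors in `[1, m]`, the involution `κ ↦ m + 1 - κ` preserves properness,
exchanges ascents and descents of the edges, and reflects the exponent vector of `x_κ` by
`c ↦ m + 1 - c`. So it is a bijection between the colorings of `x^α` and those of the reversed
monomial, sending ascent number `a` to `|E| - a`: the `t`-polynomial of the reversed monomial is
the reflection at degree `|E|` of the `t`-polynomial of `x^α`.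
-/

open Finset Polynomial

namespace FinGraph

variable (G : FinGraph)

def properColorings (d : ℕ →₀ ℕ) : Set (ℕ → ℕ) :=
  {κ | IsProperColoring G κ ∧ xmonom G κ = d}

lemma coeff_XG (d : ℕ →₀ ℕ) :
    MvPowerSeries.coeff d (XG G) = ∑ᶠ κ ∈ G.properColorings d, (X : ℚ[X]) ^ ascNum G κ :=
  rfl

lemma xmonom_apply (κ : ℕ → ℕ) (c : ℕ) : xmonom G κ c = #{v ∈ G.V | κ v = c} := by
  classical
  simp only [xmonom, Finsupp.finsetSum_apply, Finsupp.single_apply, card_filter]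

lemma mem_support_xmonom {κ : ℕ → ℕ} {v : ℕ} (hv : v ∈ G.V) : κ v ∈ (xmonom G κ).support := by
  rw [Finsupp.mem_support_iff, xmonom_apply, ← Nat.pos_iff_ne_zero, card_pos]
  exact ⟨v, mem_filter.2 ⟨hv, rfl⟩⟩

lemma finite_properColorings (d : ℕ →₀ ℕ) : (G.properColorings d).Finite := by
  refine (Set.finite_range fun f : G.V → d.support ↦
    fun v ↦ if h : v ∈ G.V then (f ⟨v, h⟩ : ℕ) else 0).subset ?_
  rintro κ ⟨hκ, rfl⟩
  refine ⟨fun v ↦ ⟨κ v, G.mem_support_xmonom v.2⟩, funext fun v ↦ ?_⟩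
  by_cases hv : v ∈ G.V
  · simp [hv]
  · simp [hv, hκ.2.1 v hv]

lemma ascNum_le (κ : ℕ → ℕ) : ascNum G κ ≤ #G.E :=
  card_filter_le _ _

/-- The involution `κ ↦ m₁ + m₂ - κ`, with the color range `[m₁, m₂]` widened to `[1, m]`. -/
def reverseColoring (m : ℕ) (κ : ℕ → ℕ) : ℕ → ℕ :=
  fun v ↦ if v ∈ G.V then m + 1 - κ v else 0

section reverseColoring

variable {G} {m : ℕ} {κ : ℕ → ℕ}

lemma reverseColoring_of_mem {v : ℕ} (hv : v ∈ G.V) : G.reverseColoring m κ v = m + 1 - κ v :=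
  if_pos hv

lemma xmonom_reverseColoring :
    xmonom G (G.reverseColoring m κ) = (xmonom G κ).mapDomain (m + 1 - ·) := by
  rw [xmonom, xmonom, Finsupp.mapDomain_finsetSum]
  refine sum_congr rfl fun v hv ↦ ?_
  rw [Finsupp.mapDomain_single, reverseColoring_of_mem hv]

variable (hκ : IsProperColoring G κ) (hm : ∀ v ∈ G.V, κ v ≤ m)
include hκ hm

lemma isProperColoring_reverseColoring : IsProperColoring G (G.reverseColoring m κ) := by
  refine ⟨fun v hv ↦ ?_, fun v hv ↦ if_neg hv, fun e he ↦ ?_⟩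
  · rw [reverseColoring_of_mem hv]
    have := hm v hv
    omega
  · have h₁ := hm _ (G.mem_fst e he)
    have h₂ := hm _ (G.mem_snd e he)
    have hne := hκ.2.2 e he
    rw [reverseColoring_of_mem (G.mem_fst e he), reverseColoring_of_mem (G.mem_snd e he)]
    omega

lemma reverseColoring_reverseColoring : G.reverseColoring m (G.reverseColoring m κ) = κ := by
  funext v
  by_cases hv : v ∈ G.V
  · rw [reverseColoring_of_mem hv, reverseColoring_of_mem hv]
    have := hm v hv
    omega
  · rw [reverseColoring, if_neg hv, hκ.2.1 v hv]

/-- Since `κ` is proper, every edge that is not an ascent of `κ` is an ascent of its reverse. -/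
lemma ascNum_reverseColoring : ascNum G (G.reverseColoring m κ) = #G.E - ascNum G κ := by
  classical
  rw [ascNum, ascNum, ← card_sdiff_of_subset (filter_subset _ _), ← filter_not]
  congr 1
  refine filter_congr fun e he ↦ ?_
  have h₁ := hm _ (G.mem_fst e he)
  have h₂ := hm _ (G.mem_snd e he)
  have hne := hκ.2.2 e he
  rw [reverseColoring_of_mem (G.mem_fst e he), reverseColoring_of_mem (G.mem_snd e he)]
  omega

end reverseColoring

section reflect

variable {m : ℕ} {d : ℕ →₀ ℕ}

lemma support_mapDomain_reflect_subset (hd : d.support ⊆ Icc 1 m) :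
    (d.mapDomain (m + 1 - ·)).support ⊆ Icc 1 m := by
  classical
  refine Finsupp.mapDomain_support.trans fun c hc ↦ ?_
  obtain ⟨a, ha, rfl⟩ := mem_image.1 hc
  have := mem_Icc.1 (hd ha)
  exact mem_Icc.2 (by omega)

lemma mapDomain_reflect_reflect (hd : d.support ⊆ Icc 1 m) :
    (d.mapDomain (m + 1 - ·)).mapDomain (m + 1 - ·) = d := by
  rw [← Finsupp.mapDomain_comp]
  refine (Finsupp.mapDomain_congr fun c hc ↦ ?_).trans Finsupp.mapDomain_id
  have := mem_Icc.1 (hd hc)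
  simp only [Function.comp_apply, id]
  omega

lemma le_of_mem_properColorings (hd : d.support ⊆ Icc 1 m) {κ : ℕ → ℕ}
    (hκ : κ ∈ G.properColorings d) : ∀ v ∈ G.V, κ v ≤ m :=
  fun _ hv ↦ (mem_Icc.1 (hd (hκ.2 ▸ G.mem_support_xmonom hv))).2

lemma mapsTo_reverseColoring (hd : d.support ⊆ Icc 1 m) :
    Set.MapsTo (G.reverseColoring m) (G.properColorings d)
      (G.properColorings (d.mapDomain (m + 1 - ·))) := fun κ hκ ↦
  ⟨isProperColoring_reverseColoring hκ.1 (G.le_of_mem_properColorings hd hκ),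
    by rw [xmonom_reverseColoring, hκ.2]⟩

lemma bijOn_reverseColoring (hd : d.support ⊆ Icc 1 m) :
    Set.BijOn (G.reverseColoring m) (G.properColorings d)
      (G.properColorings (d.mapDomain (m + 1 - ·))) := by
  have hd' := support_mapDomain_reflect_subset hd
  have hback := G.mapsTo_reverseColoring hd'
  rw [mapDomain_reflect_reflect hd] at hback
  refine Set.InvOn.bijOn ⟨fun κ hκ ↦ ?_, fun κ hκ ↦ ?_⟩ (G.mapsTo_reverseColoring hd) hback
  · exact reverseColoring_reverseColoring hκ.1 (G.le_of_mem_properColorings hd hκ)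
  · exact reverseColoring_reverseColoring hκ.1 (G.le_of_mem_properColorings hd' hκ)

theorem coeff_XG_mapDomain_reflect (hd : d.support ⊆ Icc 1 m) :
    MvPowerSeries.coeff (d.mapDomain (m + 1 - ·)) (XG G)
      = reflect #G.E (MvPowerSeries.coeff d (XG G)) := by
  let reflectHom : ℚ[X] →+ ℚ[X] := AddMonoidHom.mk' (reflect #G.E) (reflect_add · · _)
  rw [coeff_XG, coeff_XG]
  change _ = reflectHom _
  rw [reflectHom.map_finsum_mem _ (G.finite_properColorings d)]
  refine (finsum_mem_eq_of_bijOn _ (G.bijOn_reverseColoring hd) fun κ hκ ↦ ?_).symm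
  rw [AddMonoidHom.mk'_apply, reflect_monomial, revAt_le (G.ascNum_le κ),
    ascNum_reverseColoring hκ.1 (G.le_of_mem_properColorings hd hκ)]

end reflect

end FinGraph

theorem coeff_reverse_palindromic_general (G : FinGraph) (m : ℕ) (α : ℕ → ℕ)
    (j : ℕ) (hj : j ≤ G.E.card) :
    (MvPowerSeries.coeff (R := Polynomial ℚ) (∑ i ∈ Finset.Icc 1 m, Finsupp.single i (α i))
        (XG G)).coeff j
      = (MvPowerSeries.coeff (R := Polynomial ℚ)
          (∑ i ∈ Finset.Icc 1 m, Finsupp.single (m + 1 - i) (α i)) (XG G)).coeff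
            (G.E.card - j) := by
  set d : ℕ →₀ ℕ := ∑ i ∈ Icc 1 m, Finsupp.single i (α i)
  have hd : d.support ⊆ Icc 1 m :=
    Finsupp.support_finsetSum.trans <| biUnion_subset.2 fun i hi ↦
      Finsupp.support_single_subset.trans (singleton_subset_iff.2 hi)
  have hreflect : ∑ i ∈ Icc 1 m, Finsupp.single (m + 1 - i) (α i) = d.mapDomain (m + 1 - ·) := by
    simp only [d, Finsupp.mapDomain_finsetSum, Finsupp.mapDomain_single]
  rw [hreflect, G.coeff_XG_mapDomain_reflect hd, coeff_reflect, revAt_le (Nat.sub_le _ _),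
    Nat.sub_sub_self hj]

/-- For any graph `G`, for `0 ≤ j ≤ |E|` and any composition `α = (α_1,…,α_m)` of `|V|`,
the coefficient of `x_1^{α_1} ⋯ x_m^{α_m} t^j` in `X_G(x,t)` equals the coefficient of
`x_m^{α_1} x_{m-1}^{α_2} ⋯ x_1^{α_m} t^{|E|-j}`. -/
theorem coeff_reverse_palindromic (G : FinGraph) (m : ℕ) (α : ℕ → ℕ)
    (hα : ∀ i ∈ Finset.Icc 1 m, 0 < α i)
    (hsum : ∑ i ∈ Finset.Icc 1 m, α i = G.V.card)
    (j : ℕ) (hj : j ≤ G.E.card) :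
    (MvPowerSeries.coeff (R := Polynomial ℚ) (∑ i ∈ Finset.Icc 1 m, Finsupp.single i (α i))
        (XG G)).coeff j
      = (MvPowerSeries.coeff (R := Polynomial ℚ)
          (∑ i ∈ Finset.Icc 1 m, Finsupp.single (m + 1 - i) (α i)) (XG G)).coeff
            (G.E.card - j) :=
  coeff_reverse_palindromic_general G m α j hj
end

section
/- If the coefficients of X_G(x,t) (as a polynomial in t) are symmetric functions, then X_G(x,t) is palindromic in t: X_G(x,t) = t^{|E|} X_G(x, t^{-1}). -/
open Finset Polynomial

namespace Polynomial

theorem reflect_finsetSum {R ι : Type*} [Semiring R] (N : ℕ) (s : Finset ι) (f : ι → R[X]) :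
    reflect N (∑ i ∈ s, f i) = ∑ i ∈ s, reflect N (f i) :=
  map_sum ({ toFun := reflect N
             map_zero' := reflect_zero
             map_add' := fun p q => reflect_add p q N } : R[X] →+ R[X]) f s

end Polynomial

def colorReversal (N : ℕ) : Equiv.Perm ℕ :=
  Function.Involutive.toPerm (fun k => if 1 ≤ k ∧ k ≤ N then N + 1 - k else k) fun k => by
    dsimp only
    split_ifs <;> omega

theorem colorReversal_apply (N k : ℕ) :
    colorReversal N k = if 1 ≤ k ∧ k ≤ N then N + 1 - k else k :=
  rfl

theorem colorReversal_zero (N : ℕ) : colorReversal N 0 = 0 := by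
  simp [colorReversal_apply]

theorem colorReversal_lt_colorReversal_iff {N a b : ℕ} (ha : a ∈ Icc 1 N) (hb : b ∈ Icc 1 N) :
    colorReversal N a < colorReversal N b ↔ b < a := by
  simp only [mem_Icc] at ha hb
  rw [colorReversal_apply, colorReversal_apply, if_pos ha, if_pos hb]
  omega

section

variable (G : FinGraph)

theorem ascNum_le_card (κ : ℕ → ℕ) : ascNum G κ ≤ #G.E :=
  card_filter_le _ _

theorem ascNum_add_ascNum_of_iff_not {κ κ' : ℕ → ℕ}
    (h : ∀ e ∈ G.E, κ' e.1 < κ' e.2 ↔ ¬ κ e.1 < κ e.2) :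
    ascNum G κ + ascNum G κ' = #G.E := by
  rw [ascNum, ascNum, filter_congr h]
  exact card_filter_add_card_filter_not _

theorem mem_support_xmonom (κ : ℕ → ℕ) {v : ℕ} (hv : v ∈ G.V) :
    κ v ∈ (xmonom G κ).support := by
  rw [Finsupp.mem_support_iff, xmonom, Finsupp.finsetSum_apply]
  exact (sum_pos' (fun _ _ => Nat.zero_le _) ⟨v, hv, by simp⟩).ne'

theorem xmonom_perm_comp (π : Equiv.Perm ℕ) (κ : ℕ → ℕ) :
    xmonom G (π ∘ κ) = Finsupp.equivMapDomain π (xmonom G κ) := by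
  rw [Finsupp.equivMapDomain_eq_mapDomain, xmonom, xmonom, Finsupp.mapDomain_finsetSum]
  exact sum_congr rfl fun v _ => by rw [Finsupp.mapDomain_single]; rfl

theorem IsProperColoring.perm_comp {κ : ℕ → ℕ} (hκ : IsProperColoring G κ)
    {π : Equiv.Perm ℕ} (hπ : π 0 = 0) : IsProperColoring G (π ∘ κ) := by
  obtain ⟨hpos, hzero, hedge⟩ := hκ
  refine ⟨fun v hv => ?_, fun v hv => ?_, fun e he h => hedge e he (π.injective h)⟩
  · exact Nat.pos_of_ne_zero fun h => (hpos v hv).ne' (π.injective (h.trans hπ.symm))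
  · simp [hzero v hv, hπ]

def coloringsWith (d : ℕ →₀ ℕ) : Set (ℕ → ℕ) :=
  {κ | IsProperColoring G κ ∧ xmonom G κ = d}

theorem coloringsWith_finite (d : ℕ →₀ ℕ) : (coloringsWith G d).Finite := by
  have hrange : ∀ κ ∈ coloringsWith G d, ∀ v, κ v ∈ insert 0 (d.support : Set ℕ) := by
    rintro κ ⟨hκ, rfl⟩ v
    by_cases hv : v ∈ G.V
    · exact Or.inr (mem_support_xmonom G κ hv)
    · exact Or.inl (hκ.2.1 v hv)
  -- a coloring is determined by its restriction to the finite vertex set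
  refine Set.Finite.of_finite_image (f := fun κ (v : G.V) => κ v) ?_ ?_
  · refine (Set.Finite.pi' fun _ => d.support.finite_toSet.insert 0).subset ?_
    rintro _ ⟨κ, hκ, rfl⟩ v
    exact hrange κ hκ v
  · rintro κ₁ hκ₁ κ₂ hκ₂ h
    funext v
    by_cases hv : v ∈ G.V
    · exact congrFun h ⟨v, hv⟩
    · rw [hκ₁.1.2.1 v hv, hκ₂.1.2.1 v hv]

theorem coeff_XG (d : ℕ →₀ ℕ) :
    MvPowerSeries.coeff d (XG G) = ∑ κ ∈ (coloringsWith_finite G d).toFinset, X ^ ascNum G κ := by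
  rw [MvPowerSeries.coeff_apply, ← finsum_mem_coe_finset, Set.Finite.coe_toFinset]
  rfl

theorem coeff_XG_equivMapDomain {π : Equiv.Perm ℕ} (hπ : π 0 = 0) (d : ℕ →₀ ℕ) :
    MvPowerSeries.coeff (Finsupp.equivMapDomain π d) (XG G) =
      ∑ κ ∈ (coloringsWith_finite G d).toFinset, X ^ ascNum G (π ∘ κ) := by
  have hπ' : π.symm 0 = 0 := π.symm_apply_eq.mpr hπ.symm
  rw [coeff_XG]
  refine (sum_nbij' (π ∘ ·) (π.symm ∘ ·) ?_ ?_ ?_ ?_ ?_).symm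
  · intro κ hκ
    rw [Set.Finite.mem_toFinset] at hκ ⊢
    obtain ⟨hproper, rfl⟩ := hκ
    exact ⟨hproper.perm_comp G hπ, xmonom_perm_comp G π κ⟩
  · intro κ hκ
    rw [Set.Finite.mem_toFinset] at hκ ⊢
    obtain ⟨hproper, hd⟩ := hκ
    refine ⟨hproper.perm_comp G hπ', ?_⟩
    rw [xmonom_perm_comp, hd, ← Finsupp.equivMapDomain_trans, Equiv.self_trans_symm,
      Finsupp.equivMapDomain_refl]
  · intro κ _
    simp [← Function.comp_assoc]
  · intro κ _
    simp [← Function.comp_assoc]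
  · intro κ _
    simp

theorem ascNum_add_ascNum_colorReversal_comp {κ : ℕ → ℕ} (hκ : IsProperColoring G κ) {N : ℕ}
    (hN : ∀ v ∈ G.V, κ v ≤ N) : ascNum G κ + ascNum G (colorReversal N ∘ κ) = #G.E := by
  have hcolor : ∀ v ∈ G.V, κ v ∈ Icc 1 N := fun v hv => mem_Icc.mpr ⟨hκ.1 v hv, hN v hv⟩
  refine ascNum_add_ascNum_of_iff_not G fun e he => ?_
  rw [Function.comp_apply, Function.comp_apply, colorReversal_lt_colorReversal_iff
    (hcolor _ (G.mem_fst e he)) (hcolor _ (G.mem_snd e he))]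
  have := hκ.2.2 e he
  omega

theorem coeff_XG_colorReversal {d : ℕ →₀ ℕ} {N : ℕ} (hN : ∀ a ∈ d.support, a ≤ N) :
    MvPowerSeries.coeff (Finsupp.equivMapDomain (colorReversal N) d) (XG G) =
      reflect #G.E (MvPowerSeries.coeff d (XG G)) := by
  rw [coeff_XG_equivMapDomain G (colorReversal_zero N), coeff_XG, reflect_finsetSum]
  refine sum_congr rfl fun κ hκ => ?_
  rw [Set.Finite.mem_toFinset] at hκ
  obtain ⟨hproper, rfl⟩ := hκ
  have hsum := ascNum_add_ascNum_colorReversal_comp G hproper fun v hv =>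
    hN _ (mem_support_xmonom G κ hv)
  rw [reflect_monomial, revAt_le (ascNum_le_card G κ)]
  congr 1
  omega

end

/-- If the coefficients of `X_G(x,t)` (as a polynomial in `t`) are symmetric functions
(invariant under all permutations of the variables `x_1, x_2, …`), then `X_G(x,t)` is
palindromic in `t`: `X_G(x,t) = t^{|E|} X_G(x,t⁻¹)`. -/
theorem palindromic_of_symmetric (G : FinGraph)
    (hsym : ∀ π : Equiv.Perm ℕ, π 0 = 0 → ∀ d : ℕ →₀ ℕ,
      MvPowerSeries.coeff (Finsupp.equivMapDomain π d) (XG G) =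
        MvPowerSeries.coeff d (XG G)) :
    ∀ d : ℕ →₀ ℕ, ∀ j ≤ G.E.card,
      (MvPowerSeries.coeff d (XG G)).coeff j =
        (MvPowerSeries.coeff d (XG G)).coeff (G.E.card - j) := by
  intro d j hj
  obtain ⟨N, hN⟩ := d.support.bddAbove
  calc (MvPowerSeries.coeff d (XG G)).coeff j
      = (MvPowerSeries.coeff (Finsupp.equivMapDomain (colorReversal N) d) (XG G)).coeff j := by
        rw [hsym _ (colorReversal_zero _)]
    _ = (MvPowerSeries.coeff d (XG G)).coeff (G.E.card - j) := by
        rw [coeff_XG_colorReversal G hN, coeff_reflect, revAt_le hj]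
end

section
/- Let m = (m_1,…,m_{n-1}) be a sequence of positive integers with m_1 ≤ m_2 ≤ ⋯ ≤ m_{n-1} ≤ n and m_i ≥ i for all i, and let P(m) be the poset on [n] with i <_P j iff i < n and j > m_i. Then there exist real numbers y_1 < y_2 < ⋯ < y_n such that for all i,j ∈ [n], y_i + 1 < y_j if and only if i <_{P(m)} j. -/
open Classical in
noncomputable def ua (n : ℕ) (m : ℕ → ℕ) : ℕ → ℝ
  | 0 => -1
  | (j+1) =>
    if ∃ i, 1 ≤ i ∧ i ≤ n - 1 ∧ m i < j + 1 ∧ i ≤ j then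
      max (ua n m j)
        (ua n m (min (Nat.findGreatest (fun i => 1 ≤ i ∧ i ≤ n - 1 ∧ m i < j + 1) j) j) + 1)
        + (1/2 : ℝ)^(j+1)
    else ua n m j + (1/2 : ℝ)^(j+1)
  decreasing_by all_goals omega

lemma ua_step (n : ℕ) (m : ℕ → ℕ) (j : ℕ) :
    ua n m j + (1/2 : ℝ)^(j+1) ≤ ua n m (j+1) := by
  rw [ua]
  split
  · have := le_max_left (ua n m j)
      (ua n m (min (Nat.findGreatest (fun i => 1 ≤ i ∧ i ≤ n - 1 ∧ m i < j + 1) j) j) + 1)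
    linarith
  · exact le_refl _

lemma ua_mono (n : ℕ) (m : ℕ → ℕ) {i j : ℕ} (h : i ≤ j) : ua n m i ≤ ua n m j := by
  induction j with
  | zero => simp_all
  | succ j ih =>
    rcases Nat.lt_succ_iff_lt_or_eq.mp (Nat.lt_succ_of_le h) with h' | h'
    · have h1 := ua_step n m j
      have h2 := ih (Nat.lt_succ_iff.mp h')
      have h3 : (0:ℝ) < (1/2 : ℝ)^(j+1) := by positivity
      linarith
    · rw [h']

lemma ua_gap (n : ℕ) (m : ℕ → ℕ) {i j : ℕ} (h : i < j) :
    ua n m i + (1/2 : ℝ)^j ≤ ua n m j := by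
  obtain ⟨j', rfl⟩ : ∃ j', j = j' + 1 := ⟨j - 1, by omega⟩
  have h1 := ua_mono n m (Nat.lt_succ_iff.mp h)
  have h2 := ua_step n m j'
  linarith

lemma ua_lower (n : ℕ) (m : ℕ → ℕ) {i j : ℕ} (h1 : 1 ≤ i) (h2 : i ≤ n - 1)
    (h3 : m i < j + 1) (h4 : i ≤ j) :
    ua n m i + 1 + (1/2 : ℝ)^(j+1) ≤ ua n m (j+1) := by
  rw [ua, if_pos ⟨i, h1, h2, h3, h4⟩]
  set g := Nat.findGreatest (fun i => 1 ≤ i ∧ i ≤ n - 1 ∧ m i < j + 1) j with hg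
  have hgle : g ≤ j := Nat.findGreatest_le j
  have hig : i ≤ g := Nat.le_findGreatest h4 ⟨h1, h2, h3⟩
  rw [min_eq_left hgle]
  have hm1 := ua_mono n m hig
  have hm2 := le_max_right (ua n m j) (ua n m g + 1)
  linarith

lemma ua_upper (n : ℕ) (m : ℕ → ℕ)
    (hmono : ∀ i j, 1 ≤ i → i ≤ j → j ≤ n - 1 → m i ≤ m j) :
    ∀ j i, 1 ≤ i → i ≤ n - 1 → i < j → j ≤ m i →
      ua n m j ≤ ua n m i + 1 - (1/2 : ℝ)^j := by
  intro j
  induction j using Nat.strong_induction_on with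
  | _ j IH =>
    intro i hi1 hi2 hij hjm
    obtain ⟨j', rfl⟩ : ∃ j', j = j' + 1 := ⟨j - 1, by omega⟩
    have hps : (1/2 : ℝ)^(j'+1) = (1/2 : ℝ)^j' * (1/2) := pow_succ _ _
    have hA : ua n m j' + (1/2:ℝ)^(j'+1) ≤ ua n m i + 1 - (1/2:ℝ)^(j'+1) := by
      rcases eq_or_lt_of_le (Nat.lt_succ_iff.mp hij) with he | hlt
      · subst he
        have hle : (1/2:ℝ)^(i+1) ≤ (1/2:ℝ)^1 :=
          pow_le_pow_of_le_one (by norm_num) (by norm_num) (by omega)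
        have h1 : ((1/2:ℝ)^1 : ℝ) = 1/2 := by norm_num
        linarith
      · have hIH := IH j' (by omega) i hi1 hi2 hlt (by omega)
        linarith
    rw [ua]
    split
    · rename_i h
      set g := Nat.findGreatest (fun i => 1 ≤ i ∧ i ≤ n - 1 ∧ m i < j' + 1) j' with hgdef
      have hgle : g ≤ j' := Nat.findGreatest_le j'
      rw [min_eq_left hgle]
      obtain ⟨i0, hi01, hi02, hi03, hi04⟩ := h
      have hQg := Nat.findGreatest_spec
        (P := fun i => 1 ≤ i ∧ i ≤ n - 1 ∧ m i < j' + 1) hi04 ⟨hi01, hi02, hi03⟩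
      simp only [← hgdef] at hQg
      have hgi : g < i := by
        by_contra hc
        push_neg at hc
        have := hmono i g hi1 hc hQg.2.1
        omega
      have h1 : ua n m g + (1/2:ℝ)^i ≤ ua n m i := ua_gap n m hgi
      have h2 : (1/2:ℝ)^j' ≤ (1/2:ℝ)^i :=
        pow_le_pow_of_le_one (by norm_num) (by norm_num) (by omega)
      have hB : ua n m g + 1 ≤ ua n m i + 1 - (1/2:ℝ)^(j'+1) - (1/2:ℝ)^(j'+1) := by
        linarith
      have := max_le (by linarith : ua n m j' ≤ ua n m i + 1 - (1/2:ℝ)^(j'+1) - (1/2:ℝ)^(j'+1)) hB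
      linarith
    · linarith

/-- Every poset `P(m)` (for a weakly increasing sequence `m = (m_1,…,m_{n-1})` with
`i ≤ m_i ≤ n`, with order relation `i <_P j ↔ i < n ∧ m_i < j ≤ n`) can be realized by
real numbers `y_1 < ⋯ < y_n` with `y_i + 1 < y_j ↔ i <_P j`. -/
theorem natUnitIntervalOrder_realizable (n : ℕ) (m : ℕ → ℕ)
    (hmono : ∀ i j, 1 ≤ i → i ≤ j → j ≤ n - 1 → m i ≤ m j)
    (hub : ∀ i, 1 ≤ i → i ≤ n - 1 → m i ≤ n)
    (hlb : ∀ i, 1 ≤ i → i ≤ n - 1 → i ≤ m i) :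
    ∃ y : ℕ → ℝ,
      (∀ i j, 1 ≤ i → i < j → j ≤ n → y i < y j) ∧
      (∀ i j, 1 ≤ i → i ≤ n → 1 ≤ j → j ≤ n →
        (y i + 1 < y j ↔ (i < n ∧ m i < j))) := by
  refine ⟨fun k => ua n m k, ?_, ?_⟩
  · intro i j _ hij _
    have h1 := ua_gap n m hij
    have h2 : (0:ℝ) < (1/2:ℝ)^j := by positivity
    linarith
  · intro i j hi hin hj hjn
    constructor
    · intro hlt
      by_contra hc
      push_neg at hc
      by_cases hn : i < n
      · have hji : j ≤ m i := hc hn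
        rcases lt_or_ge i j with hij | hij
        · have hup := ua_upper n m hmono j i hi (by omega) hij hji
          have h2 : (0:ℝ) < (1/2:ℝ)^j := by positivity
          linarith
        · have := ua_mono n m hij
          linarith
      · have hji : j ≤ i := by omega
        have := ua_mono n m hji
        linarith
    · rintro ⟨h1, h2⟩
      obtain ⟨j', rfl⟩ : ∃ j', j = j' + 1 := ⟨j - 1, by omega⟩
      have hmi : i ≤ m i := hlb i hi (by omega)
      have hlow := ua_lower n m hi (by omega : i ≤ n - 1) h2 (by omega)
      have hp : (0:ℝ) < (1/2:ℝ)^(j'+1) := by positivity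
      linarith
end

section
/- Let P be a natural unit interval order on a finite subset of ℙ with incomparability graph G, let κ be a proper coloring of G, and let a be an integer. Then each connected component of the induced subgraph of G on the vertices colored a or a+1 is a path i_1 − i_2 − ⋯ − i_j with i_1 < i_2 < ⋯ < i_j. -/
/-!
In the subgraph of `inc(P)` on the colours `a` and `a+1`, two neighbours of a vertex `x` both
carry the colour other than `κ x`, so by properness they are `P`-comparable, and the natural unit
interval axiom puts `x` strictly between them. Hence every vertex has at most one larger and at
most one smaller neighbour. Starting at the least vertex of the (finite) component and repeatedly
stepping to the larger neighbour gives an increasing path that is closed under adjacency, so it is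
the whole component.
-/

namespace List

variable {α : Type*} {l : List α} {x : α}

theorem getLast?_eq_or_exists_pair_infix (hx : x ∈ l) :
    l.getLast? = some x ∨ ∃ y, [x, y] <:+: l := by
  induction l with
  | nil => simp at hx
  | cons a t ih =>
    rcases t with _ | ⟨b, t⟩
    · simp_all
    rcases mem_cons.1 hx with rfl | hx
    · exact .inr ⟨b, (prefix_append [x, b] t).isInfix⟩
    · rcases ih hx with h | ⟨y, hy⟩
      · exact .inl (by simpa using h)
      · exact .inr ⟨y, hy.trans (suffix_cons a _).isInfix⟩

theorem head?_eq_or_exists_pair_infix (hx : x ∈ l) :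
    l.head? = some x ∨ ∃ y, [y, x] <:+: l := by
  induction l with
  | nil => simp at hx
  | cons a t ih =>
    rcases mem_cons.1 hx with rfl | hx
    · exact .inl rfl
    rcases ih hx with h | ⟨y, hy⟩
    · obtain ⟨t, rfl⟩ := head?_eq_some_iff.1 h
      exact .inr ⟨a, (prefix_append [a, x] t).isInfix⟩
    · exact .inr ⟨y, hy.trans (suffix_cons a _).isInfix⟩

end List

theorem exists_maximal_isChain_from {α : Type*} [Preorder α] {R : α → α → Prop}
    (hR : ∀ x y, R x y → x < y) {s : Set α} (hs : s.Finite) (hsR : ∀ x ∈ s, ∀ y, R x y → y ∈ s)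
    {x : α} (hx : x ∈ s) :
    ∃ l : List α, l.IsChain R ∧ l.head? = some x ∧ ∀ z ∈ l.getLast?, ∀ y, ¬ R z y := by
  refine (hs.wellFoundedOn (r := (· > ·))).induction hx
    (P := fun x => ∃ l : List α, l.IsChain R ∧ l.head? = some x ∧ ∀ z ∈ l.getLast?, ∀ y, ¬ R z y)
    fun x hx ih => ?_
  by_cases hnext : ∃ y, R x y
  · obtain ⟨y, hxy⟩ := hnext
    obtain ⟨l, hl, hhead, hlast⟩ := ih y (hsR x hx y hxy) (hR x y hxy)
    obtain ⟨t, rfl⟩ := List.head?_eq_some_iff.1 hhead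
    exact ⟨x :: y :: t, hl.cons_cons hxy, rfl, by simpa using hlast⟩
  · push Not at hnext
    exact ⟨[x], .singleton x, rfl, by simpa using hnext⟩

namespace SimpleGraph

theorem setOf_reachable_subset_insert_support {α : Type*} (G : SimpleGraph α) (v : α) :
    {x | G.Reachable v x} ⊆ insert v G.support := fun x hx =>
  (eq_or_ne x v).imp id fun hne => mem_support_of_reachable hne hx.symm

variable {α : Type*} [LinearOrder α] {G : SimpleGraph α}

def BetweenNeighbors (G : SimpleGraph α) : Prop :=
  ∀ ⦃x y z⦄, G.Adj x y → G.Adj x z → y < z → y < x ∧ x < z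

namespace BetweenNeighbors

theorem eq_of_lt_of_lt (hG : G.BetweenNeighbors) {x y z : α} (hy : G.Adj x y) (hz : G.Adj x z)
    (hxy : x < y) (hxz : x < z) : y = z := by
  by_contra hne
  rcases lt_or_gt_of_ne hne with h | h
  · exact (hG hy hz h).1.not_gt hxy
  · exact (hG hz hy h).1.not_gt hxz

theorem eq_of_gt_of_gt (hG : G.BetweenNeighbors) {x y z : α} (hy : G.Adj x y) (hz : G.Adj x z)
    (hxy : y < x) (hxz : z < x) : y = z := by
  by_contra hne
  rcases lt_or_gt_of_ne hne with h | h
  · exact (hG hy hz h).2.not_gt hxz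
  · exact (hG hz hy h).2.not_gt hxy

theorem adj_and_mem_iff_infix (hG : G.BetweenNeighbors) {l : List α}
    (hl : l.IsChain fun x y => G.Adj x y ∧ x < y)
    (hhead : ∀ x ∈ l.head?, ∀ y, G.Adj x y → x < y)
    (hlast : ∀ x ∈ l.getLast?, ∀ y, G.Adj x y → y < x) (x y : α) :
    G.Adj x y ∧ x ∈ l ↔ [x, y] <:+: l ∨ [y, x] <:+: l := by
  constructor
  · rintro ⟨hxy, hx⟩
    rcases hxy.ne.lt_or_gt with hlt | hgt
    · refine .inl ?_
      rcases List.getLast?_eq_or_exists_pair_infix hx with hx' | ⟨w, hw⟩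
      · exact absurd (hlast x hx' y hxy) hlt.not_gt
      · obtain ⟨hxw, hxw'⟩ := List.isChain_pair.1 (hl.infix hw)
        rwa [hG.eq_of_lt_of_lt hxy hxw hlt hxw']
    · refine .inr ?_
      rcases List.head?_eq_or_exists_pair_infix hx with hx' | ⟨w, hw⟩
      · exact absurd (hhead x hx' y hxy) hgt.not_gt
      · obtain ⟨hwx, hwx'⟩ := List.isChain_pair.1 (hl.infix hw)
        rwa [hG.eq_of_gt_of_gt hxy hwx.symm hgt hwx']
  · rintro (h | h)
    · exact ⟨(List.isChain_pair.1 (hl.infix h)).1, h.subset (by simp)⟩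
    · exact ⟨(List.isChain_pair.1 (hl.infix h)).1.symm, h.subset (by simp)⟩

theorem exists_increasing_path (hG : G.BetweenNeighbors) (v : α)
    (hfin : {x | G.Reachable v x}.Finite) :
    ∃ l : List α, l.IsChain (· < ·) ∧ (∀ x, x ∈ l ↔ G.Reachable v x) ∧
      ∀ x y, G.Adj x y ∧ x ∈ l ↔ [x, y] <:+: l ∨ [y, x] <:+: l := by
  have hclosed : ∀ x ∈ {x | G.Reachable v x}, ∀ y, G.Adj x y → y ∈ {x | G.Reachable v x} :=
    fun x hx y hxy => Reachable.trans hx hxy.reachable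
  obtain ⟨m, hvm, hmin⟩ := Set.exists_min_image _ id hfin ⟨v, Reachable.refl v⟩
  obtain ⟨l, hl, hhead, hlast⟩ := exists_maximal_isChain_from (R := fun x y => G.Adj x y ∧ x < y)
    (fun _ _ h => h.2) hfin (fun x hx y hxy => hclosed x hx y hxy.1) hvm
  obtain ⟨t, rfl⟩ := List.head?_eq_some_iff.1 hhead
  have hpath := hG.adj_and_mem_iff_infix hl
    (fun x hx y hxy => by
      obtain rfl : x = m := (Option.mem_some_iff.1 hx).symm
      exact (hmin y (hclosed x hvm y hxy)).lt_of_ne hxy.ne)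
    (fun x hx y hxy => (not_lt.1 fun h => hlast x hx y ⟨hxy, h⟩).lt_of_ne hxy.ne')
  have hreach_of_mem : ∀ x ∈ m :: t, G.Reachable m x :=
    hl.induction _ _ (fun _ _ h hx => hx.trans h.1.reachable) fun _ => Reachable.refl m
  have hmem_of_reach : ∀ x, G.Reachable m x → x ∈ m :: t := by
    intro x hx
    rw [reachable_iff_reflTransGen] at hx
    induction hx with
    | refl => exact List.mem_cons_self
    | tail _ hyx ih =>
      exact ((hpath _ _).1 ⟨hyx, ih⟩).elim (·.subset (by simp)) (·.subset (by simp))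
  exact ⟨m :: t, hl.imp fun _ _ h => h.2,
    fun x => ⟨fun hx => Reachable.trans hvm (hreach_of_mem x hx),
      fun hx => hmem_of_reach x (hvm.symm.trans hx)⟩, hpath⟩

end BetweenNeighbors

end SimpleGraph

section TwoColourIncGraph

variable {α : Type*} {V : Set α} {ltP : α → α → Prop} {κ : α → ℕ} {a : ℕ}

def twoColourIncGraph (V : Set α) (ltP : α → α → Prop) (κ : α → ℕ) (a : ℕ) : SimpleGraph α :=
  SimpleGraph.fromRel fun p q => p ∈ V ∧ q ∈ V ∧ ¬ ltP p q ∧ ¬ ltP q p ∧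
    (κ p = a ∨ κ p = a + 1) ∧ (κ q = a ∨ κ q = a + 1)

theorem twoColourIncGraph_adj {x y : α} :
    (twoColourIncGraph V ltP κ a).Adj x y ↔ x ≠ y ∧ x ∈ V ∧ y ∈ V ∧ ¬ ltP x y ∧ ¬ ltP y x ∧
      (κ x = a ∨ κ x = a + 1) ∧ (κ y = a ∨ κ y = a + 1) := by
  simp only [twoColourIncGraph, SimpleGraph.fromRel_adj]
  tauto

theorem support_twoColourIncGraph_subset : (twoColourIncGraph V ltP κ a).support ⊆ V :=
  fun _ ⟨_, hxy⟩ => (twoColourIncGraph_adj.1 hxy).2.1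

theorem betweenNeighbors_twoColourIncGraph [LinearOrder α]
    (hnuio : ∀ x y z, x ∈ V → y ∈ V → z ∈ V → y ≠ x → y ≠ z → ltP x z →
      ¬ ltP x y → ¬ ltP y x → ¬ ltP y z → ¬ ltP z y → x < y ∧ y < z)
    (hproper : ∀ x ∈ V, ∀ y ∈ V, x ≠ y → ¬ ltP x y → ¬ ltP y x → κ x ≠ κ y) :
    (twoColourIncGraph V ltP κ a).BetweenNeighbors := by
  intro x y z hxy hxz hyz
  obtain ⟨hxy, hx, hy, hPxy, hPyx, hκx, hκy⟩ := twoColourIncGraph_adj.1 hxy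
  obtain ⟨hxz, -, hz, hPxz, hPzx, -, hκz⟩ := twoColourIncGraph_adj.1 hxz
  have hκyz : κ y = κ z := by
    have := hproper x hx y hy hxy hPxy hPyx
    have := hproper x hx z hz hxz hPxz hPzx
    omega
  rcases or_iff_not_and_not.2 fun h => hproper y hy z hz hyz.ne h.1 h.2 hκyz with hPyz | hPzy
  · exact hnuio y x z hy hx hz hxy hxz hPyz hPyx hPxy hPxz hPzx
  · have := hnuio z x y hz hx hy hxz hxy hPzy hPzx hPxz hPxy hPyx
    exact absurd (this.1.trans this.2) hyz.not_gt

end TwoColourIncGraph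

theorem component_is_increasing_path_general (V : Finset ℕ) (ltP : ℕ → ℕ → Prop)
    (hnuio : ∀ x y z, x ∈ V → y ∈ V → z ∈ V → y ≠ x → y ≠ z → ltP x z →
      ¬ ltP x y → ¬ ltP y x → ¬ ltP y z → ¬ ltP z y → x < y ∧ y < z)
    (κ : ℕ → ℕ)
    (hproper : ∀ x ∈ V, ∀ y ∈ V, x ≠ y → ¬ ltP x y → ¬ ltP y x → κ x ≠ κ y)
    (a : ℕ) (v : ℕ) :
    ∃ l : List ℕ, l.Chain' (· < ·) ∧
      (∀ x, x ∈ l ↔ (SimpleGraph.fromRel fun p q =>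
          p ∈ V ∧ q ∈ V ∧ ¬ ltP p q ∧ ¬ ltP q p ∧
          (κ p = a ∨ κ p = a + 1) ∧ (κ q = a ∨ κ q = a + 1)).Reachable v x) ∧
      (∀ x y, ((SimpleGraph.fromRel fun p q =>
          p ∈ V ∧ q ∈ V ∧ ¬ ltP p q ∧ ¬ ltP q p ∧
          (κ p = a ∨ κ p = a + 1) ∧ (κ q = a ∨ κ q = a + 1)).Adj x y ∧ x ∈ l)
        ↔ ([x, y] <:+: l ∨ [y, x] <:+: l)) := by
  have hfin : {x | (twoColourIncGraph (V : Set ℕ) ltP κ a).Reachable v x}.Finite :=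
    (V.finite_toSet.insert v).subset <|
      (SimpleGraph.setOf_reachable_subset_insert_support _ v).trans
        (Set.insert_subset_insert support_twoColourIncGraph_subset)
  exact (betweenNeighbors_twoColourIncGraph hnuio hproper).exists_increasing_path v hfin

/-- Let `P` be a natural unit interval order on a finite set `V` of positive integers
(strict order `ltP`, satisfying: `x <_P y → x < y`, and if `x <_P z` with `y` incomparable
to both `x` and `z` then `x < y < z`), let `κ` be a proper coloring of its incomparability
graph, and let `a` be a color.  Then every connected component of the induced subgraph on
the vertices colored `a` or `a+1` is a path `i_1 − i_2 − ⋯ − i_j` with `i_1 < i_2 < ⋯ < i_j`: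
there is a strictly increasing list `l` whose members are exactly the vertices of the
component, with edges exactly between consecutive members of `l`. -/
theorem component_is_increasing_path (V : Finset ℕ) (ltP : ℕ → ℕ → Prop)
    (hpos : ∀ v ∈ V, 0 < v)
    (hmem : ∀ x y, ltP x y → x ∈ V ∧ y ∈ V)
    (htrans : ∀ x y z, ltP x y → ltP y z → ltP x z)
    (hnat : ∀ x y, ltP x y → x < y)
    (hnuio : ∀ x y z, x ∈ V → y ∈ V → z ∈ V → y ≠ x → y ≠ z → ltP x z →
      ¬ ltP x y → ¬ ltP y x → ¬ ltP y z → ¬ ltP z y → x < y ∧ y < z)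
    (κ : ℕ → ℕ)
    (hproper : ∀ x ∈ V, ∀ y ∈ V, x ≠ y → ¬ ltP x y → ¬ ltP y x → κ x ≠ κ y)
    (a : ℕ) (v : ℕ) (hv : v ∈ V) (hva : κ v = a ∨ κ v = a + 1) :
    ∃ l : List ℕ, l.Chain' (· < ·) ∧
      (∀ x, x ∈ l ↔ (SimpleGraph.fromRel fun p q =>
          p ∈ V ∧ q ∈ V ∧ ¬ ltP p q ∧ ¬ ltP q p ∧
          (κ p = a ∨ κ p = a + 1) ∧ (κ q = a ∨ κ q = a + 1)).Reachable v x) ∧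
      (∀ x y, ((SimpleGraph.fromRel fun p q =>
          p ∈ V ∧ q ∈ V ∧ ¬ ltP p q ∧ ¬ ltP q p ∧
          (κ p = a ∨ κ p = a + 1) ∧ (κ q = a ∨ κ q = a + 1)).Adj x y ∧ x ∈ l)
        ↔ ([x, y] <:+: l ∨ [y, x] <:+: l)) :=
  component_is_increasing_path_general V ltP hnuio κ hproper a v
end

section
/- If G is the incomparability graph of a natural unit interval order, then X_G(x,t) is a polynomial in t whose coefficients are symmetric functions: for every j, the coefficient of t^j in X_G(x,t) is invariant under permutations of the variables x_1, x_2, …. -/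
section PermGeneration

open Equiv Finsupp

def invariantPerms {ι M α : Type*} [Zero M] (f : (ι →₀ M) → α) : Subgroup (Perm ι) where
  carrier := {σ | ∀ d, f (equivMapDomain σ d) = f d}
  one_mem' d := by rw [Perm.one_def, equivMapDomain_refl]
  mul_mem' {σ τ} hσ hτ d := by rw [Perm.mul_def, equivMapDomain_trans, hσ, hτ]
  inv_mem' {σ} hσ d := by
    rw [← hσ, ← equivMapDomain_trans, Perm.inv_def, Equiv.symm_trans_self, equivMapDomain_refl]

lemma swap_mem_of_forall_adjacent_swap_mem {H : Subgroup (Perm ℕ)}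
    (hH : ∀ i, i ≠ 0 → swap i (i + 1) ∈ H) {a b : ℕ} (ha : a ≠ 0) (hb : b ≠ 0) :
    swap a b ∈ H := by
  wlog hab : a < b generalizing a b
  · rcases (not_lt.1 hab).eq_or_lt with rfl | hba
    · rw [swap_self]; exact H.one_mem
    · rw [swap_comm]; exact this hb ha hba
  induction b, hab using Nat.le_induction with
  | base => exact hH a ha
  | succ b hab ih =>
    rw [← swap_mul_swap_mul_swap (x := b + 1) (y := b) (z := a) (by omega) (by omega)]
    rw [swap_comm b a, swap_comm (b + 1) b]
    exact H.mul_mem (H.mul_mem (ih (by omega)) (hH b (by omega))) (ih (by omega))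

lemma exists_mem_apply_eq_of_forall_swap_mem {H : Subgroup (Perm ℕ)}
    (hH : ∀ a b, a ≠ 0 → b ≠ 0 → swap a b ∈ H) {π : Perm ℕ} (hπ : π 0 = 0)
    (s : Finset ℕ) :
    ∃ σ ∈ H, σ 0 = 0 ∧ ∀ x ∈ s, σ x = π x := by
  induction s using Finset.induction_on with
  | empty => exact ⟨1, H.one_mem, rfl, by simp⟩
  | @insert a s ha ih =>
    obtain ⟨σ, hσH, hσ0, hσπ⟩ := ih
    by_cases hσa : σ a = π a
    · exact ⟨σ, hσH, hσ0, Finset.forall_mem_insert .. |>.2 ⟨hσa, hσπ⟩⟩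
    have ha0 : a ≠ 0 := by rintro rfl; exact hσa (hσ0.trans hπ.symm)
    have hσa0 : σ a ≠ 0 := fun h => ha0 (σ.injective (h.trans hσ0.symm))
    have hπa0 : π a ≠ 0 := fun h => ha0 (π.injective (h.trans hπ.symm))
    refine ⟨swap (σ a) (π a) * σ, H.mul_mem (hH _ _ hσa0 hπa0) hσH, ?_, ?_⟩
    · rw [Perm.mul_apply, hσ0, swap_apply_of_ne_of_ne (Ne.symm hσa0) (Ne.symm hπa0)]
    · refine (Finset.forall_mem_insert ..).2
        ⟨by rw [Perm.mul_apply, swap_apply_left], fun x hx => ?_⟩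
      have hxa : x ≠ a := fun h => ha (h ▸ hx)
      rw [Perm.mul_apply, hσπ x hx]
      exact swap_apply_of_ne_of_ne (fun h => hxa (σ.injective ((hσπ x hx).trans h)))
        (fun h => hxa (π.injective h))

lemma apply_equivMapDomain_eq_of_adjacent_swap {α : Type*} (f : (ℕ →₀ ℕ) → α)
    (hf : ∀ i, i ≠ 0 → ∀ d, f (equivMapDomain (swap i (i + 1)) d) = f d)
    {π : Perm ℕ} (hπ : π 0 = 0) (d : ℕ →₀ ℕ) : f (equivMapDomain π d) = f d := by
  obtain ⟨σ, hσ, -, hσπ⟩ := exists_mem_apply_eq_of_forall_swap_mem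
    (fun a b ha hb => swap_mem_of_forall_adjacent_swap_mem (H := invariantPerms f) hf ha hb)
    hπ d.support
  have hπσ : equivMapDomain π d = equivMapDomain σ d := by
    simp only [equivMapDomain_eq_mapDomain]
    exact mapDomain_congr fun x hx => (hσπ x hx).symm
  rw [hπσ]
  exact hσ d

end PermGeneration

namespace Finset

variable {α : Type*} [LinearOrder α] {C : Finset α} {v w x : α}

noncomputable def reflect (C : Finset α) (v : α) : α :=
  if h : v ∈ C then (C.orderIsoOfFin rfl ((C.orderIsoOfFin rfl).symm ⟨v, h⟩).rev : α) else v

lemma reflect_orderIsoOfFin (k : Fin #C) :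
    C.reflect (C.orderIsoOfFin rfl k) = C.orderIsoOfFin rfl k.rev := by
  rw [reflect, dif_pos (C.orderIsoOfFin rfl k).2, Subtype.coe_eta, OrderIso.symm_apply_apply]

lemma exists_orderIsoOfFin_eq (hv : v ∈ C) : ∃ k : Fin #C, (C.orderIsoOfFin rfl k : α) = v :=
  ⟨(C.orderIsoOfFin rfl).symm ⟨v, hv⟩, by simp⟩

lemma reflect_mem (hv : v ∈ C) : C.reflect v ∈ C := by
  obtain ⟨k, rfl⟩ := exists_orderIsoOfFin_eq hv
  rw [reflect_orderIsoOfFin]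
  exact (C.orderIsoOfFin rfl _).2

lemma reflect_reflect (hv : v ∈ C) : C.reflect (C.reflect v) = v := by
  obtain ⟨k, rfl⟩ := exists_orderIsoOfFin_eq hv
  rw [reflect_orderIsoOfFin, reflect_orderIsoOfFin, Fin.rev_rev]

lemma reflect_lt_reflect (hv : v ∈ C) (hw : w ∈ C) (hvw : v < w) :
    C.reflect w < C.reflect v := by
  obtain ⟨j, rfl⟩ := exists_orderIsoOfFin_eq hv
  obtain ⟨k, rfl⟩ := exists_orderIsoOfFin_eq hw
  rw [reflect_orderIsoOfFin, reflect_orderIsoOfFin, Subtype.coe_lt_coe, OrderIso.lt_iff_lt,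
    Fin.rev_lt_rev]
  rwa [Subtype.coe_lt_coe, OrderIso.lt_iff_lt] at hvw

lemma not_lt_reflect_and_lt_reflect (hv : v ∈ C) (hw : w ∈ C)
    (hgap : ∀ x ∈ C, ¬(v < x ∧ x < w)) (hx : x ∈ C) :
    ¬(C.reflect w < x ∧ x < C.reflect v) := by
  rintro ⟨hwx, hxv⟩
  refine hgap _ (reflect_mem hx) ⟨?_, ?_⟩
  · simpa [reflect_reflect hv] using reflect_lt_reflect hx (reflect_mem hv) hxv
  · simpa [reflect_reflect hw] using reflect_lt_reflect (reflect_mem hw) hx hwx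

end Finset

namespace FinGraph

open Finset
open scoped Classical

def Adj (G : FinGraph) (u v : ℕ) : Prop := (u, v) ∈ G.E ∨ (v, u) ∈ G.E

variable {G : FinGraph}

lemma mem_E_of_adj_of_lt {u v : ℕ} (h : G.Adj u v) (huv : u < v) : (u, v) ∈ G.E :=
  h.resolve_right fun h' => (G.fst_lt_snd _ h').not_gt huv

def AdjConsecutive (G : FinGraph) (W : Finset ℕ) : Prop :=
  ∀ u x w, u ∈ W → x ∈ W → w ∈ W → u < x → x < w → ¬ G.Adj u w

def HasLowerNbrIn (G : FinGraph) (W : Finset ℕ) (v : ℕ) : Prop :=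
  ∃ u ∈ W, u < v ∧ G.Adj u v

/-- When `G.AdjConsecutive W`, the graph `G[W]` is a union of paths along `<`; this is the least
vertex of the path through `v`. -/
noncomputable def blockStart (G : FinGraph) (W : Finset ℕ) (v : ℕ) : ℕ :=
  if h : (W.filter fun u => u ≤ v ∧ ¬ G.HasLowerNbrIn W u).Nonempty
  then (W.filter fun u => u ≤ v ∧ ¬ G.HasLowerNbrIn W u).max' h else v

noncomputable def block (G : FinGraph) (W : Finset ℕ) (v : ℕ) : Finset ℕ :=
  W.filter fun w => G.blockStart W w = G.blockStart W v

noncomputable def blockReflect (G : FinGraph) (W : Finset ℕ) (v : ℕ) : ℕ :=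
  (G.block W v).reflect v

variable {W : Finset ℕ} {u v w : ℕ}

lemma blockStart_candidates_nonempty (hv : v ∈ W) :
    (W.filter fun u => u ≤ v ∧ ¬ G.HasLowerNbrIn W u).Nonempty := by
  refine ⟨W.min' ⟨v, hv⟩, mem_filter.2 ⟨W.min'_mem _, W.min'_le _ hv, ?_⟩⟩
  rintro ⟨u, hu, hlt, -⟩
  exact (W.min'_le _ hu).not_gt hlt

lemma blockStart_spec (hv : v ∈ W) :
    G.blockStart W v ∈ W ∧ G.blockStart W v ≤ v ∧
      ¬ G.HasLowerNbrIn W (G.blockStart W v) := by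
  have h := blockStart_candidates_nonempty (G := G) hv
  rw [blockStart, dif_pos h]
  simpa only [mem_filter] using max'_mem _ h

lemma le_blockStart (hv : v ∈ W) (hu : u ∈ W) (huv : u ≤ v) (hu' : ¬ G.HasLowerNbrIn W u) :
    u ≤ G.blockStart W v := by
  rw [blockStart, dif_pos (blockStart_candidates_nonempty hv)]
  exact le_max' _ u (mem_filter.2 ⟨hu, huv, hu'⟩)

lemma blockStart_eq_of_adj (hW : G.AdjConsecutive W) (hu : u ∈ W) (hv : v ∈ W)
    (huv : u < v) (hadj : G.Adj u v) : G.blockStart W u = G.blockStart W v := by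
  obtain ⟨hsu, hsu_le, hsu_nbr⟩ := blockStart_spec (G := G) hu
  obtain ⟨hsv, hsv_le, hsv_nbr⟩ := blockStart_spec (G := G) hv
  refine le_antisymm (le_blockStart hv hsu (hsu_le.trans huv.le) hsu_nbr)
    (le_blockStart hu hsv ?_ hsv_nbr)
  have hsv_lt : G.blockStart W v < v :=
    hsv_le.lt_of_ne fun h => hsv_nbr (by rw [h]; exact ⟨u, hu, huv, hadj⟩)
  by_contra! hlt
  exact hW u (G.blockStart W v) v hu hsv hv hlt hsv_lt hadj

lemma mem_block_self (hv : v ∈ W) : v ∈ G.block W v := mem_filter.2 ⟨hv, rfl⟩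

lemma block_subset (v : ℕ) : G.block W v ⊆ W := filter_subset _ _

lemma block_eq_of_mem (h : w ∈ G.block W v) : G.block W w = G.block W v := by
  unfold block
  rw [(mem_filter.1 h).2]

lemma block_eq_of_adj (hW : G.AdjConsecutive W) (hu : u ∈ W) (hv : v ∈ W)
    (huv : u < v) (hadj : G.Adj u v) : G.block W u = G.block W v := by
  simp only [block, blockStart_eq_of_adj hW hu hv huv hadj]

lemma adj_of_consecutive_mem_block (hW : G.AdjConsecutive W) (hu : u ∈ G.block W v)
    (hw : w ∈ G.block W v) (huw : u < w) (hgap : ∀ x ∈ G.block W v, ¬(u < x ∧ x < w)) :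
    G.Adj u w := by
  have huW := block_subset v hu
  have hwW := block_subset v hw
  obtain ⟨x, hx, hxw, hadj⟩ : G.HasLowerNbrIn W w := by
    by_contra hw_nbr
    have hstart : G.blockStart W w ≤ G.blockStart W u := by
      simp only [block, mem_filter] at hu hw
      rw [hu.2, hw.2]
    have := le_blockStart hwW hwW le_rfl hw_nbr
    have := (blockStart_spec (G := G) huW).2.1
    omega
  have hxb : x ∈ G.block W v := by
    rw [← block_eq_of_mem hw, ← block_eq_of_adj hW hx hwW hxw hadj]
    exact mem_block_self hx
  obtain hxu | rfl | hux := lt_trichotomy x u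
  · exact absurd hadj (hW x u w hx huW hwW hxu huw)
  · exact hadj
  · exact absurd ⟨hux, hxw⟩ (hgap x hxb)

lemma blockReflect_mem_block (hv : v ∈ W) : G.blockReflect W v ∈ G.block W v :=
  reflect_mem (mem_block_self hv)

lemma blockReflect_mem (hv : v ∈ W) : G.blockReflect W v ∈ W :=
  block_subset v (blockReflect_mem_block hv)

lemma blockReflect_blockReflect (hv : v ∈ W) : G.blockReflect W (G.blockReflect W v) = v := by
  rw [blockReflect, block_eq_of_mem (blockReflect_mem_block hv)]
  exact reflect_reflect (mem_block_self hv)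

lemma blockReflect_adj (hW : G.AdjConsecutive W) (hu : u ∈ W) (hv : v ∈ W) (huv : u < v)
    (hadj : G.Adj u v) :
    G.blockReflect W v < G.blockReflect W u ∧
      G.Adj (G.blockReflect W v) (G.blockReflect W u) := by
  have hblock := block_eq_of_adj (G := G) hW hu hv huv hadj
  have hub := mem_block_self (G := G) hu
  have hvb : v ∈ G.block W u := hblock ▸ mem_block_self hv
  have hgap : ∀ x ∈ G.block W u, ¬(u < x ∧ x < v) := fun x hx ⟨h1, h2⟩ =>
    hW u x v hu (block_subset u hx) hv h1 h2 hadj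
  rw [blockReflect, blockReflect, ← hblock]
  have hlt := reflect_lt_reflect hub hvb huv
  exact ⟨hlt, adj_of_consecutive_mem_block hW (reflect_mem hvb) (reflect_mem hub) hlt
    fun x hx => not_lt_reflect_and_lt_reflect hub hvb hgap hx⟩

noncomputable def reflectEdge (G : FinGraph) (W : Finset ℕ) (e : ℕ × ℕ) : ℕ × ℕ :=
  if e.1 ∈ W ∧ e.2 ∈ W then (G.blockReflect W e.2, G.blockReflect W e.1) else e

lemma reflectEdge_of_mem {e : ℕ × ℕ} (h : e.1 ∈ W ∧ e.2 ∈ W) :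
    G.reflectEdge W e = (G.blockReflect W e.2, G.blockReflect W e.1) := if_pos h

lemma reflectEdge_of_not_mem {e : ℕ × ℕ} (h : ¬(e.1 ∈ W ∧ e.2 ∈ W)) :
    G.reflectEdge W e = e := if_neg h

lemma reflectEdge_mem (hW : G.AdjConsecutive W) {e : ℕ × ℕ} (he : e ∈ G.E) :
    G.reflectEdge W e ∈ G.E := by
  by_cases h : e.1 ∈ W ∧ e.2 ∈ W
  · obtain ⟨hlt, hadj⟩ := blockReflect_adj hW h.1 h.2 (G.fst_lt_snd e he) (Or.inl he)
    rw [reflectEdge_of_mem h]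
    exact mem_E_of_adj_of_lt hadj hlt
  · rwa [reflectEdge_of_not_mem h]

lemma reflectEdge_reflectEdge (e : ℕ × ℕ) : G.reflectEdge W (G.reflectEdge W e) = e := by
  by_cases h : e.1 ∈ W ∧ e.2 ∈ W
  · rw [reflectEdge_of_mem h, reflectEdge_of_mem ⟨blockReflect_mem h.2, blockReflect_mem h.1⟩,
      blockReflect_blockReflect h.1, blockReflect_blockReflect h.2]
  · rw [reflectEdge_of_not_mem h, reflectEdge_of_not_mem h]

end FinGraph

open Equiv Finset FinGraph

def bicolored (G : FinGraph) (i : ℕ) (κ : ℕ → ℕ) : Finset ℕ :=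
  G.V.filter fun v => κ v = i ∨ κ v = i + 1

noncomputable def flipColoring (G : FinGraph) (i : ℕ) (κ : ℕ → ℕ) (v : ℕ) : ℕ :=
  if v ∈ bicolored G i κ then swap i (i + 1) (κ (G.blockReflect (bicolored G i κ) v)) else κ v

section Flip

variable {G : FinGraph} {i : ℕ} {κ : ℕ → ℕ} {v : ℕ}

lemma mem_bicolored : v ∈ bicolored G i κ ↔ v ∈ G.V ∧ (κ v = i ∨ κ v = i + 1) :=
  mem_filter

lemma swap_eq_or_eq {c : ℕ} (h : c = i ∨ c = i + 1) :
    swap i (i + 1) c = i ∨ swap i (i + 1) c = i + 1 := by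
  rcases h with rfl | rfl <;> simp

lemma flipColoring_of_mem (hv : v ∈ bicolored G i κ) :
    flipColoring G i κ v = swap i (i + 1) (κ (G.blockReflect (bicolored G i κ) v)) := if_pos hv

lemma flipColoring_of_not_mem (hv : v ∉ bicolored G i κ) : flipColoring G i κ v = κ v :=
  if_neg hv

lemma color_blockReflect (hv : v ∈ bicolored G i κ) :
    κ (G.blockReflect (bicolored G i κ) v) = i ∨
      κ (G.blockReflect (bicolored G i κ) v) = i + 1 :=
  (mem_bicolored.1 (blockReflect_mem hv)).2

lemma flipColoring_eq_or_eq (hv : v ∈ bicolored G i κ) :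
    flipColoring G i κ v = i ∨ flipColoring G i κ v = i + 1 := by
  rw [flipColoring_of_mem hv]
  exact swap_eq_or_eq (color_blockReflect hv)

lemma bicolored_flipColoring : bicolored G i (flipColoring G i κ) = bicolored G i κ := by
  ext v
  by_cases hv : v ∈ bicolored G i κ
  · simp only [hv, iff_true, mem_bicolored]
    exact ⟨(mem_bicolored.1 hv).1, flipColoring_eq_or_eq hv⟩
  · rw [mem_bicolored, flipColoring_of_not_mem hv, ← mem_bicolored]

lemma flipColoring_flipColoring : flipColoring G i (flipColoring G i κ) = κ := by
  funext v
  by_cases hv : v ∈ bicolored G i κ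
  · rw [flipColoring_of_mem (by rwa [bicolored_flipColoring]), bicolored_flipColoring,
      flipColoring_of_mem (blockReflect_mem hv), blockReflect_blockReflect hv, swap_apply_self]
  · rw [flipColoring_of_not_mem (by rwa [bicolored_flipColoring]), flipColoring_of_not_mem hv]

lemma IsProperColoring.ne_of_adj (hκ : IsProperColoring G κ) {u v : ℕ} (h : G.Adj u v) :
    κ u ≠ κ v := by
  rcases h with h | h
  · exact hκ.2.2 _ h
  · exact (hκ.2.2 _ h).symm

lemma IsProperColoring.flipColoring (hκ : IsProperColoring G κ)
    (hW : G.AdjConsecutive (bicolored G i κ)) (hi : i ≠ 0) :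
    IsProperColoring G (flipColoring G i κ) := by
  refine ⟨fun v hv => ?_, fun v hv => ?_, fun e he => ?_⟩
  · by_cases hb : v ∈ bicolored G i κ
    · have := flipColoring_eq_or_eq hb
      omega
    · rw [flipColoring_of_not_mem hb]; exact hκ.1 v hv
  · rw [flipColoring_of_not_mem fun hb => hv (mem_bicolored.1 hb).1]; exact hκ.2.1 v hv
  · have h1V := G.mem_fst e he
    have h2V := G.mem_snd e he
    by_cases h1 : e.1 ∈ bicolored G i κ <;> by_cases h2 : e.2 ∈ bicolored G i κ
    · rw [flipColoring_of_mem h1, flipColoring_of_mem h2, (swap i (i + 1)).injective.ne_iff]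
      exact (hκ.ne_of_adj (blockReflect_adj hW h1 h2 (G.fst_lt_snd e he) (Or.inl he)).2).symm
    · have := flipColoring_eq_or_eq h1
      have : ¬(κ e.2 = i ∨ κ e.2 = i + 1) := fun h => h2 (mem_bicolored.2 ⟨h2V, h⟩)
      rw [flipColoring_of_not_mem h2]
      omega
    · have := flipColoring_eq_or_eq h2
      have : ¬(κ e.1 = i ∨ κ e.1 = i + 1) := fun h => h1 (mem_bicolored.2 ⟨h1V, h⟩)
      rw [flipColoring_of_not_mem h1]
      omega
    · rw [flipColoring_of_not_mem h1, flipColoring_of_not_mem h2]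
      exact hκ.2.2 e he

lemma flipColoring_lt_iff {e : ℕ × ℕ} (he : e ∈ G.E) :
    flipColoring G i κ e.1 < flipColoring G i κ e.2 ↔
      κ (G.reflectEdge (bicolored G i κ) e).1 < κ (G.reflectEdge (bicolored G i κ) e).2 := by
  have h1V := G.mem_fst e he
  have h2V := G.mem_snd e he
  by_cases h1 : e.1 ∈ bicolored G i κ <;> by_cases h2 : e.2 ∈ bicolored G i κ
  · rw [reflectEdge_of_mem ⟨h1, h2⟩, flipColoring_of_mem h1, flipColoring_of_mem h2]
    rcases color_blockReflect h1 with h | h <;> rcases color_blockReflect h2 with h' | h' <;>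
      simp [h, h']
  · rw [reflectEdge_of_not_mem fun h => h2 h.2, flipColoring_of_not_mem h2]
    have := flipColoring_eq_or_eq h1
    have := (mem_bicolored.1 h1).2
    have : ¬(κ e.2 = i ∨ κ e.2 = i + 1) := fun h => h2 (mem_bicolored.2 ⟨h2V, h⟩)
    omega
  · rw [reflectEdge_of_not_mem fun h => h1 h.1, flipColoring_of_not_mem h1]
    have := flipColoring_eq_or_eq h2
    have := (mem_bicolored.1 h2).2
    have : ¬(κ e.1 = i ∨ κ e.1 = i + 1) := fun h => h1 (mem_bicolored.2 ⟨h1V, h⟩)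
    omega
  · rw [reflectEdge_of_not_mem fun h => h1 h.1, flipColoring_of_not_mem h1,
      flipColoring_of_not_mem h2]

lemma ascNum_flipColoring (hW : G.AdjConsecutive (bicolored G i κ)) :
    ascNum G (flipColoring G i κ) = ascNum G κ := by
  refine card_nbij' (G.reflectEdge (bicolored G i κ)) (G.reflectEdge (bicolored G i κ))
    (fun e he => ?_) (fun e he => ?_)
    (fun e _ => reflectEdge_reflectEdge e) (fun e _ => reflectEdge_reflectEdge e)
  · rw [coe_filter] at he ⊢
    exact ⟨reflectEdge_mem hW he.1, (flipColoring_lt_iff he.1).1 he.2⟩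
  · rw [coe_filter] at he ⊢
    have hre := reflectEdge_mem hW he.1
    refine ⟨hre, (flipColoring_lt_iff hre).2 ?_⟩
    rw [reflectEdge_reflectEdge]
    exact he.2

lemma xmonom_flipColoring :
    xmonom G (flipColoring G i κ) = Finsupp.equivMapDomain (swap i (i + 1)) (xmonom G κ) := by
  rw [xmonom, xmonom, Finsupp.equivMapDomain_eq_mapDomain, Finsupp.mapDomain_finsetSum]
  simp only [Finsupp.mapDomain_single]
  rw [← sum_filter_add_sum_filter_not G.V (· ∈ bicolored G i κ),
    ← sum_filter_add_sum_filter_not G.V (· ∈ bicolored G i κ)]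
  have hfilter : G.V.filter (· ∈ bicolored G i κ) = bicolored G i κ := by
    ext v
    simp only [mem_filter, mem_bicolored]
    tauto
  congr 1
  · rw [hfilter]
    exact sum_nbij' (G.blockReflect _) (G.blockReflect _) (fun v hv => blockReflect_mem hv)
      (fun v hv => blockReflect_mem hv) (fun v hv => blockReflect_blockReflect hv)
      (fun v hv => blockReflect_blockReflect hv) (fun v hv => by rw [flipColoring_of_mem hv])
  · refine sum_congr rfl fun v hv => ?_
    rw [mem_filter] at hv
    have : ¬(κ v = i ∨ κ v = i + 1) := fun h => hv.2 (mem_bicolored.2 ⟨hv.1, h⟩)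
    rw [flipColoring_of_not_mem hv.2, swap_apply_of_ne_of_ne (by omega) (by omega)]

end Flip

lemma coeff_XG_swap (G : FinGraph) {i : ℕ} (hi : i ≠ 0)
    (hW : ∀ κ, IsProperColoring G κ → G.AdjConsecutive (bicolored G i κ))
    (d : ℕ →₀ ℕ) :
    MvPowerSeries.coeff (Finsupp.equivMapDomain (swap i (i + 1)) d) (XG G) =
      MvPowerSeries.coeff d (XG G) := by
  rw [MvPowerSeries.coeff_apply, MvPowerSeries.coeff_apply, XG, XG]
  refine (finsum_mem_eq_of_bijOn (flipColoring G i) ⟨?_, ?_, ?_⟩ ?_).symm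
  · rintro κ ⟨hκ, rfl⟩
    exact ⟨hκ.flipColoring (hW κ hκ) hi, xmonom_flipColoring⟩
  · intro κ₁ _ κ₂ _ h
    rw [← flipColoring_flipColoring (G := G) (i := i) (κ := κ₁), h, flipColoring_flipColoring]
  · rintro κ ⟨hκ, hd⟩
    refine ⟨flipColoring G i κ, ⟨hκ.flipColoring (hW κ hκ) hi, ?_⟩,
      flipColoring_flipColoring⟩
    rw [xmonom_flipColoring, hd, ← Finsupp.equivMapDomain_trans, swap_swap,
      Finsupp.equivMapDomain_refl]
  · rintro κ ⟨hκ, -⟩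
    rw [ascNum_flipColoring (hW κ hκ)]

section NaturalUnitIntervalOrder

variable {G : FinGraph} {ltP : ℕ → ℕ → Prop}
  (htrans : ∀ x y z, ltP x y → ltP y z → ltP x z)
  (hnat : ∀ x y, ltP x y → x < y)
  (hnuio : ∀ x y z, x ∈ G.V → y ∈ G.V → z ∈ G.V → y ≠ x → y ≠ z → ltP x z →
    ¬ ltP x y → ¬ ltP y x → ¬ ltP y z → ¬ ltP z y → x < y ∧ y < z)
  (hinc : ∀ p : ℕ × ℕ, p ∈ G.E ↔
    (p.1 ∈ G.V ∧ p.2 ∈ G.V ∧ p.1 < p.2 ∧ ¬ ltP p.1 p.2 ∧ ¬ ltP p.2 p.1))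

include htrans hnat hnuio in
lemma ltP_of_ltP_of_lt {u x w : ℕ} (hu : u ∈ G.V) (hx : x ∈ G.V) (hw : w ∈ G.V)
    (hux : ltP u x) (hxw : x < w) : ltP u w := by
  have hux_lt := hnat u x hux
  by_contra huw
  by_cases hwu : ltP w u
  · exact absurd (hnat w u hwu) (by omega)
  by_cases hxw_P : ltP x w
  · exact huw (htrans u x w hux hxw_P)
  by_cases hwx : ltP w x
  · exact absurd (hnat w x hwx) (by omega)
  have := hnuio u w x hu hw hx (by omega) (by omega) hux huw hwu hwx hxw_P
  omega

include htrans hnat hnuio in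
lemma ltP_of_lt_of_ltP {u x w : ℕ} (hu : u ∈ G.V) (hx : x ∈ G.V) (hw : w ∈ G.V)
    (hux : u < x) (hxw : ltP x w) : ltP u w := by
  have hxw_lt := hnat x w hxw
  by_contra huw
  by_cases hwu : ltP w u
  · exact absurd (hnat w u hwu) (by omega)
  by_cases hux_P : ltP u x
  · exact huw (htrans u x w hux_P hxw)
  by_cases hxu : ltP x u
  · exact absurd (hnat x u hxu) (by omega)
  have := hnuio x u w hx hu hw (by omega) (by omega) hxw hxu hux_P huw hwu
  omega

include hnat hinc in
lemma ltP_of_not_adj {u v : ℕ} (hu : u ∈ G.V) (hv : v ∈ G.V) (huv : u < v)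
    (hna : ¬ G.Adj u v) : ltP u v := by
  by_contra h
  refine hna (Or.inl ((hinc (u, v)).2 ⟨hu, hv, huv, h, fun h' => ?_⟩))
  exact absurd (hnat v u h') (by omega)

include htrans hnat hnuio hinc in
lemma adjConsecutive_bicolored {κ : ℕ → ℕ} (hκ : IsProperColoring G κ) (i : ℕ) :
    G.AdjConsecutive (bicolored G i κ) := by
  intro u x w hu hx hw hux hxw hadj
  rw [mem_bicolored] at hu hx hw
  have huw_inc := ((hinc (u, w)).1 (mem_E_of_adj_of_lt hadj (hux.trans hxw))).2.2.2
  have hκuw := hκ.ne_of_adj hadj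
  rcases (by omega : κ x = κ u ∨ κ x = κ w) with hxu | hxw'
  · have hux' := ltP_of_not_adj hnat hinc hu.1 hx.1 hux fun h => hκ.ne_of_adj h hxu.symm
    exact huw_inc.1 (ltP_of_ltP_of_lt htrans hnat hnuio hu.1 hx.1 hw.1 hux' hxw)
  · have hxw'' := ltP_of_not_adj hnat hinc hx.1 hw.1 hxw fun h => hκ.ne_of_adj h hxw'
    exact huw_inc.1 (ltP_of_lt_of_ltP htrans hnat hnuio hu.1 hx.1 hw.1 hux hxw'')

end NaturalUnitIntervalOrder

theorem chromatic_symmetric_of_nuio_general (G : FinGraph) (ltP : ℕ → ℕ → Prop)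
    (htrans : ∀ x y z, ltP x y → ltP y z → ltP x z)
    (hnat : ∀ x y, ltP x y → x < y)
    (hnuio : ∀ x y z, x ∈ G.V → y ∈ G.V → z ∈ G.V → y ≠ x → y ≠ z → ltP x z →
      ¬ ltP x y → ¬ ltP y x → ¬ ltP y z → ¬ ltP z y → x < y ∧ y < z)
    (hinc : ∀ p : ℕ × ℕ, p ∈ G.E ↔
      (p.1 ∈ G.V ∧ p.2 ∈ G.V ∧ p.1 < p.2 ∧ ¬ ltP p.1 p.2 ∧ ¬ ltP p.2 p.1)) :
    ∀ π : Equiv.Perm ℕ, π 0 = 0 → ∀ d : ℕ →₀ ℕ,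
      MvPowerSeries.coeff (Finsupp.equivMapDomain π d) (XG G) =
        MvPowerSeries.coeff d (XG G) := by
  intro π hπ d
  refine apply_equivMapDomain_eq_of_adjacent_swap (fun d => MvPowerSeries.coeff d (XG G)) ?_ hπ d
  exact fun i hi => coeff_XG_swap G hi fun κ hκ =>
    adjConsecutive_bicolored htrans hnat hnuio hinc hκ i

/-- If `G` is the incomparability graph of a natural unit interval order, then each
coefficient of `t^j` in `X_G(x,t)` is a symmetric function: it is invariant under all
permutations of the variables `x_1, x_2, …`. -/
theorem chromatic_symmetric_of_nuio (G : FinGraph) (ltP : ℕ → ℕ → Prop)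
    (hmem : ∀ x y, ltP x y → x ∈ G.V ∧ y ∈ G.V)
    (htrans : ∀ x y z, ltP x y → ltP y z → ltP x z)
    (hnat : ∀ x y, ltP x y → x < y)
    (hnuio : ∀ x y z, x ∈ G.V → y ∈ G.V → z ∈ G.V → y ≠ x → y ≠ z → ltP x z →
      ¬ ltP x y → ¬ ltP y x → ¬ ltP y z → ¬ ltP z y → x < y ∧ y < z)
    (hinc : ∀ p : ℕ × ℕ, p ∈ G.E ↔
      (p.1 ∈ G.V ∧ p.2 ∈ G.V ∧ p.1 < p.2 ∧ ¬ ltP p.1 p.2 ∧ ¬ ltP p.2 p.1)) :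
    ∀ π : Equiv.Perm ℕ, π 0 = 0 → ∀ d : ℕ →₀ ℕ,
      MvPowerSeries.coeff (Finsupp.equivMapDomain π d) (XG G) =
        MvPowerSeries.coeff d (XG G) :=
  chromatic_symmetric_of_nuio_general G ltP htrans hnat hnuio hinc
end

section
/- Let P be a natural unit interval order on [n] with incomparability graph G=([n],E), and let a_j = |{ {j,i} ∈ E : j < i }| for j ∈ [n-1]. Then ∑_{σ ∈ ND_P} t^{inv_G(σ)} = ∏_{j=1}^{n-1} (1 + t·[a_j]_t), where ND_P is the set of permutations σ ∈ S_n with no P-descent (no i with σ(i) >_P σ(i+1)), and [k]_t = 1+t+⋯+t^{k-1}. -/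
/-- `[n]_t! = ∏_{i=1}^n [i]_t`. -/
noncomputable def tfact (R : Type*) [CommSemiring R] (n : ℕ) : Polynomial R :=
  ∏ i ∈ Finset.range n, tnum R (i + 1)

/-- The word `σ(1), σ(2), …, σ(n)` of a permutation, in 0-based positions:
`word n σ i = σ(i+1)` for `i < n` (letters taken in `{1,…,n}`), and `0` otherwise. -/
def word (n : ℕ) (σ : Equiv.Perm (Fin n)) (i : ℕ) : ℕ :=
  if h : i < n then (σ ⟨i, h⟩).1 + 1 else 0

/-- `inv_G(σ)`: the number of pairs of positions `i < j` with `{σ(i), σ(j)}` an edge of the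
incomparability graph `G` of `P` (i.e. a `P`-incomparable pair) and `σ(i) > σ(j)`. -/
def invG (n : ℕ) (ltP : ℕ → ℕ → Prop) [DecidableRel ltP] (σ : Equiv.Perm (Fin n)) : ℕ :=
  ((Finset.range n ×ˢ Finset.range n).filter fun p =>
    p.1 < p.2 ∧ word n σ p.2 < word n σ p.1 ∧
      ¬ ltP (word n σ p.1) (word n σ p.2) ∧ ¬ ltP (word n σ p.2) (word n σ p.1)).card


/-!
Every word on `{j, …, n}` arises exactly once by inserting its smallest letter `j` into a word `w`
on `{j+1, …, n}`. Being minimal, `j` never forms a `P`-descent with its right neighbour, and forms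
one with its left neighbour `x` exactly when `j <_P x`. Nor can the insertion repair a descent
`y <_P x` of `w`: the unit interval axiom then forces `j <_P x`. So for `w` without descent the
admissible slots are the front of `w` and the slots right after each of the `c` letters of `w`
incomparable to `j`, and the slot after the `m`-th of them creates exactly `m` new `G`-inversions.
Insertion therefore multiplies the generating function by `1 + t + ⋯ + t^c = 1 + t·[a_j]_t`.
-/

open Finset Polynomial

theorem tnum_succ (R : Type*) [CommSemiring R] (k : ℕ) : tnum R (k + 1) = 1 + X * tnum R k := by
  simp only [tnum, sum_range_succ', pow_succ', pow_zero, ← mul_sum]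
  ring

namespace UnitIntervalOrder

section PairCount

variable {α : Type*} (r : α → α → Prop) [DecidableRel r]

def pairCount : List α → ℕ
  | [] => 0
  | x :: l => l.countP (r x ·) + pairCount l

theorem countP_eq_sum_range (p : α → Prop) [DecidablePred p] (d : α) (l : List α) :
    l.countP (p ·) = ∑ i ∈ range l.length, if p (l.getD i d) then 1 else 0 := by
  induction l with
  | nil => simp
  | cons x l ih =>
    rw [List.countP_cons, ih, List.length_cons, sum_range_succ']
    simp only [List.getD_cons_succ, List.getD_cons_zero, decide_eq_true_eq]

theorem pairCount_eq_card (d : α) (l : List α) :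
    pairCount r l = #{q ∈ range l.length ×ˢ range l.length |
      q.1 < q.2 ∧ r (l.getD q.1 d) (l.getD q.2 d)} := by
  rw [card_filter, sum_product]
  induction l with
  | nil => rfl
  | cons x l ih =>
    rw [pairCount, ih, countP_eq_sum_range (r x) d, List.length_cons, sum_range_succ', add_comm]
    simp only [sum_range_succ', List.getD_cons_succ, List.getD_cons_zero, Nat.succ_lt_succ_iff,
      Nat.not_lt_zero, false_and, if_false, add_zero, Nat.succ_pos, true_and]

end PairCount

theorem countP_range' (p : ℕ → Prop) [DecidablePred p] (a k : ℕ) :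
    (List.range' a k).countP (p ·) = #{i ∈ Ico a (a + k) | p i} := by
  simp [Nat.Ico_eq_range', Finset.filter, List.countP_eq_length_filter]

theorem isChain_iff_getD {α : Type*} {R : α → α → Prop} {l : List α} (d : α) :
    l.IsChain R ↔ ∀ i ∈ range (l.length - 1), R (l.getD i d) (l.getD (i + 1) d) := by
  rw [List.isChain_iff_getElem]
  refine forall_congr' fun i => ?_
  rw [mem_range]
  constructor
  · intro h hi
    rw [List.getD_eq_getElem _ _ (by omega), List.getD_eq_getElem _ _ (by omega)]
    exact h (by omega)
  · intro h hi
    have := h (by omega)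
    rwa [List.getD_eq_getElem _ _ (by omega), List.getD_eq_getElem _ _ (by omega)] at this

theorem perm_cons_of_mem_permutations'Aux {α : Type*} {x : α} {l v : List α}
    (hv : v ∈ l.permutations'Aux x) : v.Perm (x :: l) :=
  List.mem_permutations'.1 (List.mem_flatMap.2 ⟨l, List.mem_permutations'.2 (.refl l), hv⟩)

section Weight

variable (R : Type*) [CommSemiring R] {ltP : ℕ → ℕ → Prop}

variable (ltP) in
def NoDescent (l : List ℕ) : Prop := l.IsChain fun a b => ¬ ltP b a

theorem noDescent_cons_cons {a b : ℕ} {l : List ℕ} :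
    NoDescent ltP (a :: b :: l) ↔ ¬ ltP b a ∧ NoDescent ltP (b :: l) :=
  List.isChain_cons_cons

variable (ltP) [DecidableRel ltP]

instance : DecidablePred (NoDescent ltP) := fun l => inferInstanceAs (Decidable (l.IsChain _))

def incInv (l : List ℕ) : ℕ := pairCount (fun a b => b < a ∧ ¬ ltP a b ∧ ¬ ltP b a) l

noncomputable def weight (l : List ℕ) : R[X] :=
  if NoDescent ltP l then X ^ incInv ltP l else 0

noncomputable def tailWeight (p : ℕ) (l : List ℕ) : R[X] :=
  if NoDescent ltP (p :: l) then X ^ incInv ltP l else 0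

variable {R ltP}

theorem weight_nil : weight R ltP [] = 1 := by
  simp [weight, NoDescent, incInv, pairCount]

theorem weight_cons (x : ℕ) (l : List ℕ) :
    weight R ltP (x :: l) =
      X ^ l.countP (fun y => y < x ∧ ¬ ltP x y ∧ ¬ ltP y x) * tailWeight R ltP x l := by
  simp only [weight, tailWeight, incInv, pairCount, pow_add, mul_ite, mul_zero]

theorem tailWeight_nil (p : ℕ) : tailWeight R ltP p [] = 1 := by
  simp [tailWeight, NoDescent, incInv, pairCount]

theorem tailWeight_cons (p x : ℕ) (l : List ℕ) :
    tailWeight R ltP p (x :: l) = if ltP x p then 0 else weight R ltP (x :: l) := by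
  by_cases h : ltP x p <;> simp [tailWeight, weight, noDescent_cons_cons, h]

theorem tailWeight_eq_weight (hnat : ∀ x y, ltP x y → x < y) {p : ℕ} {l : List ℕ}
    (hl : ∀ y ∈ l, p ≤ y) : tailWeight R ltP p l = weight R ltP l := by
  cases l with
  | nil => rw [tailWeight_nil, weight_nil]
  | cons x l => rw [tailWeight_cons, if_neg fun h => (hnat x p h).not_ge (hl x (by simp))]

theorem weight_cons_of_forall_lt (hnat : ∀ x y, ltP x y → x < y) {x : ℕ} {l : List ℕ}
    (hl : ∀ y ∈ l, x < y) : weight R ltP (x :: l) = weight R ltP l := by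
  rw [weight_cons, List.countP_eq_zero.2 fun y hy h => by simp at h; exact (hl y hy).not_gt h.1,
    pow_zero, one_mul, tailWeight_eq_weight hnat fun y hy => (hl y hy).le]

/-- `p` is the letter standing just before the word, so that the induction keeps track of the
descent at the left end of each insertion slot. -/
theorem sum_tailWeight_permutations'Aux (hnat : ∀ x y, ltP x y → x < y) (j : ℕ) :
    ∀ (p : ℕ) (w : List ℕ), (∀ x ∈ w, j < x) → (∀ x ∈ w, ∀ y ∈ w, ltP x y → ltP j y) →
      (∀ x ∈ w, ltP x p → ltP j p) →
      ((w.permutations'Aux j).map (tailWeight R ltP p)).sum =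
        tailWeight R ltP p w *
          (X * tnum R (w.countP fun y => ¬ ltP j y ∧ ¬ ltP y j) + if ltP j p then 0 else 1)
  | p, [], _, _, _ => by
    by_cases hjp : ltP j p <;> simp [List.permutations'Aux, tailWeight_cons, tailWeight_nil,
      weight_cons, hjp, tnum]
  | p, x :: t, hj, hup, hp => by
    have hjx : j < x := hj x (by simp)
    have ih := sum_tailWeight_permutations'Aux hnat j x t (fun y hy => hj y (by simp [hy]))
      (fun y hy z hz => hup y (by simp [hy]) z (by simp [hz]))
      (fun y hy => hup y (by simp [hy]) x (by simp))
    set e := t.countP fun y => y < x ∧ ¬ ltP x y ∧ ¬ ltP y x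
    set c := t.countP fun y => ¬ ltP j y ∧ ¬ ltP y j
    have hinsert : ∀ v ∈ t.permutations'Aux j, (tailWeight R ltP p ∘ List.cons x) v =
        (if ltP x p then 0 else X ^ (e + if ltP j x then 0 else 1)) * tailWeight R ltP x v := by
      intro v hv
      rw [Function.comp_apply, tailWeight_cons, weight_cons,
        (perm_cons_of_mem_permutations'Aux hv).countP_eq, List.countP_cons]
      by_cases hxp : ltP x p <;> simp [hxp, hjx, (hnat x j).mt hjx.not_gt, e]
    simp only [List.permutations'Aux, List.map_cons, List.sum_cons, List.map_map]
    rw [List.map_congr_left hinsert, List.sum_map_mul_left, ih, tailWeight_cons, tailWeight_cons,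
      weight_cons_of_forall_lt hnat (by simpa using hj), weight_cons, List.countP_cons]
    have hxj : ¬ ltP x j := (hnat x j).mt hjx.not_gt
    by_cases hxp : ltP x p
    · simp [hxp, hp x (by simp) hxp]
    by_cases hjxP : ltP j x <;> by_cases hjp : ltP j p <;>
      simp [hxp, hjp, hjxP, hxj, tnum_succ, e, c] <;> ring

theorem sum_weight_permutations'Aux (hnat : ∀ x y, ltP x y → x < y) {j : ℕ} {w : List ℕ}
    (hj : ∀ x ∈ w, j < x) (hup : ∀ x ∈ w, ∀ y ∈ w, ltP x y → ltP j y) :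
    ((w.permutations'Aux j).map (weight R ltP)).sum =
      weight R ltP w * tnum R (w.countP (fun y => ¬ ltP j y ∧ ¬ ltP y j) + 1) := by
  have hge : ∀ v ∈ w.permutations'Aux j, ∀ y ∈ v, j ≤ y := fun v hv y hy => by
    rcases List.mem_cons.1 ((perm_cons_of_mem_permutations'Aux hv).subset hy) with rfl | hy
    exacts [le_rfl, (hj y hy).le]
  have hirr : ¬ ltP j j := fun h => (hnat j j h).false
  rw [List.map_congr_left fun v hv => (tailWeight_eq_weight hnat (hge v hv)).symm,
    sum_tailWeight_permutations'Aux hnat j j w hj hup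
      fun x hx h => absurd (hnat x j h) (hj x hx).not_gt,
    tailWeight_eq_weight hnat fun y hy => (hj y hy).le, if_neg hirr, tnum_succ]
  ring

theorem sum_weight_permutations'_cons (hnat : ∀ x y, ltP x y → x < y) {j : ℕ} {L : List ℕ}
    (hj : ∀ x ∈ L, j < x) (hup : ∀ x ∈ L, ∀ y ∈ L, ltP x y → ltP j y) :
    ((j :: L).permutations'.map (weight R ltP)).sum =
      tnum R (L.countP (fun y => ¬ ltP j y ∧ ¬ ltP y j) + 1) *
        (L.permutations'.map (weight R ltP)).sum := by
  have hinsert : ∀ w ∈ L.permutations', ((w.permutations'Aux j).map (weight R ltP)).sum =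
      tnum R (L.countP (fun y => ¬ ltP j y ∧ ¬ ltP y j) + 1) * weight R ltP w := by
    intro w hw
    have hwL := List.mem_permutations'.1 hw
    rw [sum_weight_permutations'Aux hnat (fun x hx => hj x (hwL.subset hx))
      (fun x hx y hy => hup x (hwL.subset hx) y (hwL.subset hy)), hwL.countP_eq, mul_comm]
  rw [List.permutations', List.map_flatMap, List.flatMap_def, List.sum_flatten, List.map_map]
  rw [List.map_congr_left (f := List.sum ∘ _) hinsert, List.sum_map_mul_left]

theorem sum_weight_permutations'_range' (hnat : ∀ x y, ltP x y → x < y) (k : ℕ) :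
    ∀ j : ℕ, (∀ i x y, j ≤ i → i < x → y < j + k → ltP x y → ltP i y) →
      ((List.range' j k).permutations'.map (weight R ltP)).sum =
        ∏ i ∈ Ico j (j + k), tnum R (#{y ∈ Ico (i + 1) (j + k) | ¬ ltP i y ∧ ¬ ltP y i} + 1) := by
  induction k with
  | zero => intro j _; simp [List.permutations', weight_nil]
  | succ k ih =>
    intro j hup
    have hmem : ∀ y ∈ List.range' (j + 1) k, j + 1 ≤ y ∧ y < j + (k + 1) := fun y hy => by
      rw [List.mem_range'_1] at hy; omega
    rw [List.range'_succ, sum_weight_permutations'_cons hnat (fun y hy => (hmem y hy).1)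
      (fun x hx y hy => hup j x y le_rfl (hmem x hx).1 (hmem y hy).2),
      ih (j + 1) fun i x y hi hix hy => hup i x y (by omega) hix (by omega), countP_range',
      show j + 1 + k = j + (k + 1) by omega,
      prod_eq_prod_Ico_succ_bot (by omega : j < j + (k + 1))]

end Weight

section Word

variable {n : ℕ}

def toWord (σ : Equiv.Perm (Fin n)) : List ℕ := List.ofFn fun i => (σ i : ℕ) + 1

theorem length_toWord (σ : Equiv.Perm (Fin n)) : (toWord σ).length = n := List.length_ofFn

theorem word_eq_getD (σ : Equiv.Perm (Fin n)) (i : ℕ) : word n σ i = (toWord σ).getD i 0 := by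
  by_cases h : i < n
  · rw [List.getD_eq_getElem _ _ (by rwa [length_toWord])]
    simp [word, toWord, h]
  · rw [List.getD_eq_default _ _ (by rw [length_toWord]; omega)]
    simp [word, h]

theorem toWord_injective : Function.Injective (toWord (n := n)) := fun σ τ h =>
  Equiv.ext fun i => Fin.ext (by simpa using congrFun (List.ofFn_injective h) i)

theorem toWord_perm (σ : Equiv.Perm (Fin n)) : (toWord σ).Perm (List.range' 1 n) := by
  have hid : List.ofFn (fun i : Fin n => (i : ℕ) + 1) = List.range' 1 n :=
    List.ext_getElem (by simp) fun i _ _ => by simp [add_comm]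
  exact hid ▸ σ.ofFn_comp_perm fun i => (i : ℕ) + 1

theorem sum_comp_toWord {M : Type*} [AddCommMonoid M] (f : List ℕ → M) :
    ∑ σ : Equiv.Perm (Fin n), f (toWord σ) = ((List.range' 1 n).permutations'.map f).sum := by
  have hperm := List.permutations_perm_permutations' (List.range' 1 n)
  have hnodup : (List.range' 1 n).permutations'.Nodup :=
    hperm.nodup_iff.1 (List.nodup_permutations _ List.nodup_range')
  have himage : univ.image (toWord (n := n)) = (List.range' 1 n).permutations'.toFinset := by
    refine eq_of_subset_of_card_le (fun l hl => ?_) ?_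
    · obtain ⟨σ, -, rfl⟩ := mem_image.1 hl
      exact List.mem_toFinset.2 (List.mem_permutations'.2 (toWord_perm σ))
    · rw [card_image_of_injective _ toWord_injective, List.toFinset_card_of_nodup hnodup,
        ← hperm.length_eq, List.length_permutations, List.length_range', card_univ,
        Fintype.card_perm, Fintype.card_fin]
  rw [← List.sum_toFinset f hnodup, ← himage, sum_image fun σ _ τ _ h => toWord_injective h]

theorem noDescent_toWord_iff (ltP : ℕ → ℕ → Prop) (σ : Equiv.Perm (Fin n)) :
    NoDescent ltP (toWord σ) ↔ ∀ i ∈ range (n - 1), ¬ ltP (word n σ (i + 1)) (word n σ i) := by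
  simp only [NoDescent, isChain_iff_getD 0, length_toWord, word_eq_getD]

theorem invG_eq_incInv (ltP : ℕ → ℕ → Prop) [DecidableRel ltP] (σ : Equiv.Perm (Fin n)) :
    invG n ltP σ = incInv ltP (toWord σ) := by
  simp only [invG, incInv, pairCount_eq_card _ 0, length_toWord, word_eq_getD]

end Word

theorem prod_Ico_tnum_eq_prod_Icc (R : Type*) [CommSemiring R] (P : ℕ → ℕ → Prop)
    [DecidableRel P] (n : ℕ) :
    ∏ i ∈ Ico 1 (1 + n), tnum R (#{y ∈ Ico (i + 1) (1 + n) | P i y} + 1) =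
      ∏ j ∈ Icc 1 (n - 1), (1 + X * tnum R #{i ∈ Icc 1 n | j < i ∧ P j i}) := by
  obtain _ | m := n
  · simp
  rw [add_comm 1, prod_Ico_succ_top (by omega), Ico_self, filter_empty, card_empty,
    show tnum R (0 + 1) = 1 by simp [tnum], mul_one]
  refine prod_congr (by ext; simp) fun i _ => ?_
  rw [tnum_succ]
  congr 4
  ext y
  simp only [mem_filter, mem_Ico, mem_Icc]
  grind

/-- This is why inserting `i` below `x` cannot repair a descent `x <_P y`. -/
theorem ltP_of_lt_of_ltP {n : ℕ} {ltP : ℕ → ℕ → Prop}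
    (htrans : ∀ x y z, ltP x y → ltP y z → ltP x z)
    (hnat : ∀ x y, ltP x y → x < y)
    (hnuio : ∀ x y z, x ∈ Finset.Icc 1 n → y ∈ Finset.Icc 1 n → z ∈ Finset.Icc 1 n →
      y ≠ x → y ≠ z → ltP x z →
      ¬ ltP x y → ¬ ltP y x → ¬ ltP y z → ¬ ltP z y → x < y ∧ y < z)
    {i x y : ℕ} (hi : i ∈ Icc 1 n) (hx : x ∈ Icc 1 n) (hy : y ∈ Icc 1 n) (hix : i < x)
    (hxy : ltP x y) : ltP i y := by
  by_contra hiy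
  have hxy' := hnat x y hxy
  have hnot : ∀ z, i < z → ¬ ltP z i := fun z hz h => (hnat z i h).not_gt hz
  have hix' : ¬ ltP i x := fun h => hiy (htrans _ _ _ h hxy)
  exact hix.not_gt (hnuio x i y hx hi hy hix.ne (hix.trans hxy').ne hxy (hnot x hix) hix' hiy
    (hnot y (hix.trans hxy'))).1

end UnitIntervalOrder

open UnitIntervalOrder

theorem sum_no_descent_eq_prod_general (n : ℕ) (ltP : ℕ → ℕ → Prop) [DecidableRel ltP]
    (htrans : ∀ x y z, ltP x y → ltP y z → ltP x z)
    (hnat : ∀ x y, ltP x y → x < y)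
    (hnuio : ∀ x y z, x ∈ Finset.Icc 1 n → y ∈ Finset.Icc 1 n → z ∈ Finset.Icc 1 n →
      y ≠ x → y ≠ z → ltP x z →
      ¬ ltP x y → ¬ ltP y x → ¬ ltP y z → ¬ ltP z y → x < y ∧ y < z) :
    ∑ σ : Equiv.Perm (Fin n),
      (if ∀ i ∈ Finset.range (n - 1), ¬ ltP (word n σ (i + 1)) (word n σ i)
       then (Polynomial.X : Polynomial ℚ) ^ invG n ltP σ else 0)
    = ∏ j ∈ Finset.Icc 1 (n - 1),
        (1 + Polynomial.X *
          tnum ℚ (((Finset.Icc 1 n).filter fun i => j < i ∧ ¬ ltP j i ∧ ¬ ltP i j).card)) := by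
  have hup : ∀ i x y, 1 ≤ i → i < x → y < 1 + n → ltP x y → ltP i y :=
    fun i x y hi hix hy hxy => by
      have hxy' := hnat x y hxy
      exact ltP_of_lt_of_ltP htrans hnat hnuio (mem_Icc.2 ⟨hi, by omega⟩)
        (mem_Icc.2 ⟨by omega, by omega⟩) (mem_Icc.2 ⟨by omega, by omega⟩) hix hxy
  calc _ = ∑ σ : Equiv.Perm (Fin n), weight ℚ ltP (toWord σ) := by
        simp only [weight, noDescent_toWord_iff, invG_eq_incInv]
    _ = ((List.range' 1 n).permutations'.map (weight ℚ ltP)).sum := sum_comp_toWord _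
    _ = ∏ i ∈ Ico 1 (1 + n), tnum ℚ (#{y ∈ Ico (i + 1) (1 + n) | ¬ ltP i y ∧ ¬ ltP y i} + 1) :=
        sum_weight_permutations'_range' hnat n 1 hup
    _ = _ := prod_Ico_tnum_eq_prod_Icc ℚ _ n

/-- For a natural unit interval order `P` on `[n]` with incomparability graph `G`:
`∑_{σ ∈ ND_P} t^{inv_G(σ)} = ∏_{j=1}^{n-1} (1 + t·[a_j]_t)`, where `ND_P` is the set of
permutations with no `P`-descent and `a_j = #{i : {j,i} ∈ E, j < i}`. -/
theorem sum_no_descent_eq_prod (n : ℕ) (ltP : ℕ → ℕ → Prop) [DecidableRel ltP]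
    (hmem : ∀ x y, ltP x y → x ∈ Finset.Icc 1 n ∧ y ∈ Finset.Icc 1 n)
    (htrans : ∀ x y z, ltP x y → ltP y z → ltP x z)
    (hnat : ∀ x y, ltP x y → x < y)
    (hnuio : ∀ x y z, x ∈ Finset.Icc 1 n → y ∈ Finset.Icc 1 n → z ∈ Finset.Icc 1 n →
      y ≠ x → y ≠ z → ltP x z →
      ¬ ltP x y → ¬ ltP y x → ¬ ltP y z → ¬ ltP z y → x < y ∧ y < z) :
    ∑ σ : Equiv.Perm (Fin n),
      (if ∀ i ∈ Finset.range (n - 1), ¬ ltP (word n σ (i + 1)) (word n σ i)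
       then (Polynomial.X : Polynomial ℚ) ^ invG n ltP σ else 0)
    = ∏ j ∈ Finset.Icc 1 (n - 1),
        (1 + Polynomial.X *
          tnum ℚ (((Finset.Icc 1 n).filter fun i => j < i ∧ ¬ ltP j i ∧ ¬ ltP i j).card)) :=
  sum_no_descent_eq_prod_general n ltP htrans hnat hnuio
end

section
/- Let P be a natural unit interval order on [n] with incomparability graph G, and let b_i = |{ {j,i} ∈ E(G) : j < i }| for 2 ≤ i ≤ n. Let N_P be the set of permutations of [n] (as words) having no P-descent and no nontrivial left-to-right P-maximum. Then ∑_{σ ∈ N_P} t^{inv_G(σ)} = [n]_t · ∏_{i=2}^n [b_i]_t. -/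
/-!
Let `m` be the largest letter and `B` the set of letters incomparable to `m`. The axioms of a
natural unit interval order make `B` an interval `{m - b_m, …, m - 1}` of `P`-maximal letters,
and a `P`-maximal letter in a prefix is a witness against every later left-to-right maximum.
So inserting `m` into a word `τ` of `N_P` on `{1, …, m - 1}` keeps it in `N_P` exactly when `m`
goes after the first letter of `B` in `τ`, just before a letter of `B` or at the end (`b_m`
positions, contributing `[b_m]_t` since `m` adds one `G`-inversion per later letter of `B`), or
in front of `τ` when `τ` starts with a letter of `B` (contributing `t^{b_m}`). Refining by the
first letter `a`, the generating function is `t^{a-1} ∏_{i ≤ m} [b_i]_t` by induction on `m`,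
and summing over `a` gives the theorem.
-/

open scoped Polynomial
open Polynomial (X)
open List

namespace NPWords

open Classical

structure IsNatUnitIntervalOrder (ltP : ℕ → ℕ → Prop) (n : ℕ) : Prop where
  trans : ∀ x y z, ltP x y → ltP y z → ltP x z
  lt_of_ltP : ∀ x y, ltP x y → x < y
  lt_lt_of_incomp : ∀ x y z, x ∈ Finset.Icc 1 n → y ∈ Finset.Icc 1 n →
    z ∈ Finset.Icc 1 n → y ≠ x → y ≠ z → ltP x z →
    ¬ ltP x y → ¬ ltP y x → ¬ ltP y z → ¬ ltP z y → x < y ∧ y < z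

namespace IsNatUnitIntervalOrder

variable {ltP : ℕ → ℕ → Prop} {n m : ℕ}

lemma not_ltP_of_le (hP : IsNatUnitIntervalOrder ltP n) {x y : ℕ} (h : y ≤ x) : ¬ ltP x y :=
  fun hxy => (hP.lt_of_ltP x y hxy).not_ge h

lemma not_ltP_of_not_ltP_top (hP : IsNatUnitIntervalOrder ltP n) (hmn : m ≤ n) {y c : ℕ}
    (hy : y ∈ Finset.Ico 1 m) (hyB : ¬ ltP y m) (hc : c ≤ m) : ¬ ltP y c := by
  intro hyc
  obtain ⟨hy1, hym⟩ := Finset.mem_Ico.1 hy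
  have hyc' := hP.lt_of_ltP y c hyc
  have hcm : c < m := lt_of_le_of_ne hc (by rintro rfl; exact hyB hyc)
  by_cases hcm' : ltP c m
  · exact hyB (hP.trans y c m hyc hcm')
  · have := hP.lt_lt_of_incomp y m c (by simp; omega) (by simp; omega) (by simp; omega)
      (by omega) (by omega) hyc hyB (hP.not_ltP_of_le hym.le) (hP.not_ltP_of_le hcm.le) hcm'
    omega

lemma not_ltP_top_mono (hP : IsNatUnitIntervalOrder ltP n) (hmn : m ≤ n) {j j' : ℕ}
    (hj : 1 ≤ j) (hjj' : j ≤ j') (hj'm : j' < m) (hjB : ¬ ltP j m) : ¬ ltP j' m := by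
  intro hj'
  have hlt : j < j' := lt_of_le_of_ne hjj' (by rintro rfl; exact hjB hj')
  by_cases hjj : ltP j j'
  · exact hjB (hP.trans j j' m hjj hj')
  · have := hP.lt_lt_of_incomp j' j m (by simp; omega) (by simp; omega) (by simp; omega)
      (by omega) (by omega) hj' (hP.not_ltP_of_le hlt.le) hjj hjB (hP.not_ltP_of_le (by omega))
    omega

end IsNatUnitIntervalOrder

lemma filter_Ico_eq_Ico_of_mono {p : ℕ → Prop} [DecidablePred p] {a b : ℕ}
    (hp : ∀ i j, a ≤ i → i ≤ j → j < b → p i → p j) :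
    (Finset.Ico a b).filter p = Finset.Ico (b - ((Finset.Ico a b).filter p).card) b := by
  set S := (Finset.Ico a b).filter p
  rcases S.eq_empty_or_nonempty with hS | hS
  · simp [hS]
  have hmin := Finset.mem_filter.1 (S.min'_mem hS)
  have hSeq : S = Finset.Ico (S.min' hS) b := by
    ext j
    constructor
    · intro hj
      exact Finset.mem_Ico.2 ⟨S.min'_le j hj, (Finset.mem_Ico.1 (Finset.mem_filter.1 hj).1).2⟩
    · intro hj
      obtain ⟨hmj, hjb⟩ := Finset.mem_Ico.1 hj
      have ha := (Finset.mem_Ico.1 hmin.1).1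
      exact Finset.mem_filter.2 ⟨Finset.mem_Ico.2 ⟨by omega, hjb⟩, hp _ j ha hmj hjb hmin.2⟩
  conv_rhs => rw [hSeq, Nat.card_Ico, Nat.sub_sub_self (Finset.mem_Ico.1 hmin.1).2.le]
  exact hSeq

section Tnum

variable (R : Type*) [CommSemiring R]

lemma sum_Ico_X_pow_pred {c : ℕ} (hc : 1 ≤ c) (N : ℕ) :
    ∑ a ∈ Finset.Ico c N, (X : R[X]) ^ (a - 1) = X ^ (c - 1) * tnum R (N - c) := by
  rw [Finset.sum_Ico_eq_sum_range, tnum, Finset.mul_sum]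
  refine Finset.sum_congr rfl fun k _ => ?_
  rw [← pow_add]
  congr 1
  omega

lemma tnum_succ (k : ℕ) : tnum R (k + 1) = tnum R k + X ^ k :=
  Finset.sum_range_succ _ _

lemma tnum_add_ite (k : ℕ) (p : Prop) [Decidable p] :
    tnum R (k + if p then 1 else 0) = tnum R k + if p then X ^ k else 0 := by
  split_ifs <;> simp [tnum_succ]

end Tnum

lemma perm_of_mem_permutations'Aux {α : Type*} {t : α} {l ρ : List α}
    (h : ρ ∈ permutations'Aux t l) : ρ ~ t :: l :=
  mem_permutations'.1 (mem_flatMap.2 ⟨l, mem_permutations'.2 (Perm.refl l), h⟩)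

lemma sum_map_flatMap {α β M : Type*} [AddCommMonoid M] (l : List α) (g : α → List β)
    (f : β → M) :
    ((l.flatMap g).map f).sum = (l.map fun a => ((g a).map f).sum).sum := by
  simp [List.flatMap, map_flatten, sum_flatten, Function.comp_def]

section Words

variable (ltP : ℕ → ℕ → Prop)

/-- `Fits ltP q x`: appending the letter `x` to a word whose *reversal* is `q` creates neither a
`P`-descent nor a nontrivial left-to-right `P`-maximum. -/
def Fits : List ℕ → ℕ → Prop
  | [], _ => True
  | c :: q, x => ¬ ltP x c ∧ ∃ u ∈ c :: q, ¬ ltP u x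

def FitsAfter : List ℕ → List ℕ → Prop
  | _, [] => True
  | q, x :: w => Fits ltP q x ∧ FitsAfter (x :: q) w

def IsNP (w : List ℕ) : Prop := FitsAfter ltP [] w

def invGList [DecidableRel ltP] : List ℕ → ℕ
  | [] => 0
  | x :: w => w.countP (fun z => z < x ∧ ¬ ltP x z ∧ ¬ ltP z x) + invGList w

noncomputable def headWeight (R : Type*) [CommSemiring R] [DecidableRel ltP] (A : Finset ℕ)
    (w : List ℕ) : R[X] :=
  if (∃ a ∈ A, w.head? = some a) ∧ IsNP ltP w then X ^ invGList ltP w else 0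

def words (m : ℕ) : List (List ℕ) := (range' 1 m).reverse.permutations'

variable {ltP}

lemma fits_cons_iff_of_witness {c x u : ℕ} {q : List ℕ} (hu : u ∈ c :: q) (hux : ¬ ltP u x) :
    Fits ltP (c :: q) x ↔ ¬ ltP x c :=
  ⟨And.left, fun h => ⟨h, u, hu, hux⟩⟩

lemma fitsAfter_congr_of_witness {q q' w : List ℕ} (hhead : q.head? = q'.head?)
    (hq : ∃ u ∈ q, ∀ x ∈ w, ¬ ltP u x) (hq' : ∃ u ∈ q', ∀ x ∈ w, ¬ ltP u x) :
    FitsAfter ltP q w ↔ FitsAfter ltP q' w := by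
  induction w generalizing q q' with
  | nil => exact Iff.rfl
  | cons x w ih =>
    obtain ⟨u, hu, hux⟩ := hq
    obtain ⟨u', hu', hux'⟩ := hq'
    obtain ⟨c, q, rfl⟩ := exists_cons_of_ne_nil (ne_nil_of_mem hu)
    obtain ⟨c', q', rfl⟩ := exists_cons_of_ne_nil (ne_nil_of_mem hu')
    obtain rfl : c = c' := by simpa using hhead
    have hw {v : ℕ} {l : List ℕ} (hv : v ∈ l) (hvx : ∀ y ∈ x :: w, ¬ ltP v y) :
        ∃ v ∈ x :: l, ∀ y ∈ w, ¬ ltP v y :=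
      ⟨v, mem_cons_of_mem _ hv, fun y hy => hvx y (mem_cons_of_mem _ hy)⟩
    simp only [FitsAfter]
    rw [fits_cons_iff_of_witness hu (hux x mem_cons_self),
      fits_cons_iff_of_witness hu' (hux' x mem_cons_self),
      ih (q := x :: c :: q) (q' := x :: c :: q') rfl (hw hu hux) (hw hu' hux')]

variable [DecidableRel ltP] {R : Type*} [CommSemiring R]

lemma invGList_cons_of_mem_permutations'Aux {m y : ℕ} {r ρ : List ℕ} (hym : y < m)
    (hρ : ρ ∈ permutations'Aux m r) :
    invGList ltP (y :: ρ)
      = r.countP (fun z => z < y ∧ ¬ ltP y z ∧ ¬ ltP z y) + invGList ltP ρ := by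
  rw [invGList, (perm_of_mem_permutations'Aux hρ).countP_eq, countP_cons]
  simp [hym.not_gt]

lemma sum_map_ite_invGList_cons (p : List ℕ → Prop) [DecidablePred p] {m y : ℕ} (hym : y < m)
    (r : List ℕ) :
    ((permutations'Aux m r).map fun ρ =>
        if p ρ then (X : R[X]) ^ invGList ltP (y :: ρ) else 0).sum
      = X ^ r.countP (fun z => z < y ∧ ¬ ltP y z ∧ ¬ ltP z y) *
          ((permutations'Aux m r).map fun ρ => if p ρ then X ^ invGList ltP ρ else 0).sum := by
  rw [← sum_map_mul_left]
  refine congrArg sum (map_congr_left fun ρ hρ => ?_)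
  rw [invGList_cons_of_mem_permutations'Aux hym hρ, pow_add, mul_ite, mul_zero]

lemma headWeight_cons (A : Finset ℕ) (y : ℕ) (w : List ℕ) :
    headWeight ltP R A (y :: w)
      = if y ∈ A then (if IsNP ltP (y :: w) then X ^ invGList ltP (y :: w) else 0) else 0 := by
  simp only [headWeight, head?_cons, Option.some.injEq, exists_eq_right']
  split_ifs <;> simp_all

end Words

section WordList

lemma words_succ (m : ℕ) : words (m + 1) = (words m).flatMap (permutations'Aux (m + 1)) := by
  simp [words, range'_concat, add_comm]

lemma mem_words {m : ℕ} {w : List ℕ} : w ∈ words m ↔ w ~ range' 1 m :=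
  mem_permutations'.trans
    ⟨fun h => h.trans (reverse_perm _), fun h => h.trans (reverse_perm _).symm⟩

lemma nodup_words (m : ℕ) : (words m).Nodup :=
  (permutations_perm_permutations' _).nodup_iff.1
    (nodup_permutations _ (nodup_reverse.2 nodup_range'))

lemma length_words (m : ℕ) : (words m).length = m.factorial := by
  rw [words, ← (permutations_perm_permutations' _).length_eq, length_permutations]
  simp

lemma mem_Ico_of_mem_words {m : ℕ} {w : List ℕ} (hw : w ∈ words m) {y : ℕ} (hy : y ∈ w) :
    y ∈ Finset.Ico 1 (m + 1) := by
  have := (mem_words.1 hw).mem_iff.1 hy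
  simp only [mem_range'_1] at this
  simp only [Finset.mem_Ico]
  omega

lemma ne_nil_of_mem_words {m : ℕ} (hm : 1 ≤ m) {w : List ℕ} (hw : w ∈ words m) : w ≠ [] :=
  ne_nil_of_length_pos (by rw [(mem_words.1 hw).length_eq, length_range']; omega)

lemma exists_head?_eq_of_mem_words {m : ℕ} (hm : 1 ≤ m) {w : List ℕ} (hw : w ∈ words m) :
    ∃ a ∈ Finset.Icc 1 m, w.head? = some a := by
  obtain ⟨y, r, rfl⟩ := exists_cons_of_ne_nil (ne_nil_of_mem_words hm hw)
  have := mem_Ico_of_mem_words hw mem_cons_self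
  simp only [Finset.mem_Ico, Finset.mem_Icc, head?_cons, Option.some.injEq] at this ⊢
  exact ⟨y, by omega, rfl⟩

lemma countP_of_mem_words {m : ℕ} {w : List ℕ} (hw : w ∈ words m) (p : ℕ → Prop)
    [DecidablePred p] :
    w.countP p = ((Finset.Ico 1 (m + 1)).filter p).card := by
  rw [(mem_words.1 hw).countP_eq, countP_eq_length_filter, Nat.Ico_eq_range']
  simp [Finset.card_def, Multiset.filter_coe]

end WordList

namespace IsNatUnitIntervalOrder

variable {ltP : ℕ → ℕ → Prop} {n m : ℕ}

lemma fits_top_iff (hP : IsNatUnitIntervalOrder ltP n) {q : List ℕ} (hq : q ≠ [])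
    (hqm : ∀ u ∈ q, u < m) : Fits ltP q m ↔ ∃ u ∈ q, ¬ ltP u m := by
  obtain ⟨c, q, rfl⟩ := exists_cons_of_ne_nil hq
  exact and_iff_right (hP.not_ltP_of_le (hqm c mem_cons_self).le)

lemma fitsAfter_top_cons (hP : IsNatUnitIntervalOrder ltP n) (hmn : m ≤ n) {q s : List ℕ}
    (hq : ∀ u ∈ q, u ∈ Finset.Ico 1 m) (hs : ∀ y ∈ s, y ∈ Finset.Ico 1 m) :
    FitsAfter ltP q (m :: s)
      ↔ Fits ltP q m ∧ (∀ y ∈ s.head?, ¬ ltP y m) ∧ FitsAfter ltP q s := by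
  cases s with
  | nil => simp [FitsAfter]
  | cons y r =>
    have hy := hs y mem_cons_self
    have hle {c : ℕ} (hc : c ∈ y :: r ∨ c ∈ q) : c ≤ m := by
      rcases hc with hc | hc
      · exact (Finset.mem_Ico.1 (hs c hc)).2.le
      · exact (Finset.mem_Ico.1 (hq c hc)).2.le
    have hrest (hyB : ¬ ltP y m) : FitsAfter ltP (y :: m :: q) r ↔ FitsAfter ltP (y :: q) r :=
      have hw {l : List ℕ} : ∃ u ∈ y :: l, ∀ x ∈ r, ¬ ltP u x :=
        ⟨y, mem_cons_self, fun x hx =>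
          hP.not_ltP_of_not_ltP_top hmn hy hyB (hle (Or.inl (mem_cons_of_mem _ hx)))⟩
      fitsAfter_congr_of_witness rfl hw hw
    have hfits (hqm : Fits ltP q m) (hyB : ¬ ltP y m) : Fits ltP q y := by
      cases q with
      | nil => trivial
      | cons c q =>
        obtain ⟨-, u, hu, huB⟩ := hqm
        exact ⟨hP.not_ltP_of_not_ltP_top hmn hy hyB (hle (Or.inr mem_cons_self)),
          u, hu, hP.not_ltP_of_not_ltP_top hmn (hq u hu) huB (Finset.mem_Ico.1 hy).2.le⟩
    simp only [FitsAfter, head?_cons, Option.mem_def, Option.some.injEq, forall_eq',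
      fits_cons_iff_of_witness mem_cons_self (hP.not_ltP_of_le (Finset.mem_Ico.1 hy).2.le)]
    constructor
    · rintro ⟨hqm, hyB, h⟩
      exact ⟨hqm, hyB, hfits hqm hyB, (hrest hyB).1 h⟩
    · rintro ⟨hqm, hyB, -, h⟩
      exact ⟨hqm, hyB, (hrest hyB).2 h⟩

variable [DecidableRel ltP] {R : Type*} [CommSemiring R]

lemma invGList_top_cons (hP : IsNatUnitIntervalOrder ltP n) {s : List ℕ}
    (hs : ∀ y ∈ s, y < m) :
    invGList ltP (m :: s) = s.countP (fun y => ¬ ltP y m) + invGList ltP s := by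
  rw [invGList]
  congr 1
  refine countP_congr fun y hy => ?_
  simp [hs y hy, hP.not_ltP_of_le (hs y hy).le]

/-- After a nonempty prefix with reversal `q`, the admissible positions for `m` in `s` are the
end and those just before a letter incomparable to `m` that has such a letter somewhere before
it; `inv_G` grows by the number of letters incomparable to `m` behind `m`. -/
lemma sum_permutations'Aux_fitsAfter (hP : IsNatUnitIntervalOrder ltP n) (hmn : m ≤ n)
    {s : List ℕ} (hs : ∀ y ∈ s, y ∈ Finset.Ico 1 m) {q : List ℕ} (hq : q ≠ [])
    (hqm : ∀ u ∈ q, u ∈ Finset.Ico 1 m) :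
    ((permutations'Aux m s).map fun ρ =>
        if FitsAfter ltP q ρ then (X : R[X]) ^ invGList ltP ρ else 0).sum
      = (if FitsAfter ltP q s then X ^ invGList ltP s else 0) *
          tnum R (s.countP (fun y => ¬ ltP y m) + if ∃ u ∈ q, ¬ ltP u m then 1 else 0) := by
  have hqm' : ∀ u ∈ q, u < m := fun u hu => (Finset.mem_Ico.1 (hqm u hu)).2
  induction s generalizing q with
  | nil =>
    simp only [permutations'Aux, map_cons, map_nil, sum_cons, sum_nil, add_zero, FitsAfter,
      and_true, hP.fits_top_iff hq hqm', if_true, countP_nil, zero_add, invGList, pow_zero,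
      one_mul]
    split_ifs <;> simp [tnum]
  | cons y r ih =>
    have hy := hs y mem_cons_self
    have hym := (Finset.mem_Ico.1 hy).2
    have hr : ∀ z ∈ r, z ∈ Finset.Ico 1 m := fun z hz => hs z (mem_cons_of_mem _ hz)
    have hinsert : ((permutations'Aux m r).map fun ρ =>
          if FitsAfter ltP q (y :: ρ) then (X : R[X]) ^ invGList ltP (y :: ρ) else 0).sum
        = (if Fits ltP q y then X ^ r.countP (fun z => z < y ∧ ¬ ltP y z ∧ ¬ ltP z y)
            else 0) *
          ((permutations'Aux m r).map fun ρ =>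
            if FitsAfter ltP (y :: q) ρ then (X : R[X]) ^ invGList ltP ρ else 0).sum := by
      by_cases hqy : Fits ltP q y
      · simp only [FitsAfter, hqy, true_and, if_true]
        exact sum_map_ite_invGList_cons _ hym r
      · simp [FitsAfter, hqy]
    simp only [permutations'Aux, map_cons, sum_cons, map_map, Function.comp_def]
    rw [hinsert, ih hr (cons_ne_nil y q) (forall_mem_cons.2 ⟨hy, hqm⟩)
        (forall_mem_cons.2 ⟨hym, hqm'⟩), hP.fitsAfter_top_cons hmn hqm hs,
      hP.fits_top_iff hq hqm', hP.invGList_top_cons fun z hz => (Finset.mem_Ico.1 (hs z hz)).2]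
    simp only [FitsAfter, invGList, head?_cons, Option.mem_def, Option.some.injEq, forall_eq',
      countP_cons, decide_eq_true_eq]
    generalize r.countP (fun z => ¬ ltP z m) = k
    generalize r.countP (fun z => z < y ∧ ¬ ltP y z ∧ ¬ ltP z y) = c
    by_cases hF : Fits ltP q y ∧ FitsAfter ltP (y :: q) r
    · simp only [hF, and_true, if_true, mem_cons, exists_eq_or_imp]
      by_cases hyB : ltP y m
      · simp only [hyB, not_true_eq_false, and_false, false_or, if_false, add_zero]
        ring
      · simp only [hyB, not_false_eq_true, and_true, true_or, if_true, tnum_add_ite, tnum_succ]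
        split_ifs <;> ring
    · by_cases hFy : Fits ltP q y <;> simp_all

/-- The first summand comes from `m` in front of `τ`, the second from all other positions. -/
lemma sum_permutations'Aux_headWeight (hP : IsNatUnitIntervalOrder ltP n) (hmn : m ≤ n)
    (A : Finset ℕ) {τ : List ℕ} (hτ : ∀ y ∈ τ, y ∈ Finset.Ico 1 m) (hne : τ ≠ []) :
    ((permutations'Aux m τ).map (headWeight ltP R A)).sum
      = (if m ∈ A then X ^ τ.countP (fun y => ¬ ltP y m) else 0) *
          headWeight ltP R ((Finset.Ico 1 m).filter fun j => ¬ ltP j m) τ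
        + tnum R (τ.countP fun y => ¬ ltP y m) * headWeight ltP R (A.erase m) τ := by
  obtain ⟨y, r, rfl⟩ := exists_cons_of_ne_nil hne
  have hy := hτ y mem_cons_self
  have hym := (Finset.mem_Ico.1 hy).2
  have hr : ∀ z ∈ r, z ∈ Finset.Ico 1 m := fun z hz => hτ z (mem_cons_of_mem _ hz)
  have hNP (ρ : List ℕ) : IsNP ltP (y :: ρ) ↔ FitsAfter ltP [y] ρ := and_iff_right trivial
  have hfront : IsNP ltP (m :: y :: r) ↔ ¬ ltP y m ∧ IsNP ltP (y :: r) := by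
    simp [IsNP, hP.fitsAfter_top_cons hmn (q := []) (by simp) hτ, Fits]
  have htail : ((permutations'Aux m r).map (headWeight ltP R A ∘ cons y)).sum
      = tnum R ((y :: r).countP fun z => ¬ ltP z m) * headWeight ltP R A (y :: r) := by
    simp only [Function.comp_def, headWeight_cons]
    by_cases hyA : y ∈ A
    · simp only [hyA, if_true, hNP]
      rw [sum_map_ite_invGList_cons _ hym r,
        hP.sum_permutations'Aux_fitsAfter hmn hr (cons_ne_nil _ _) (by simpa using hy)]
      simp only [mem_singleton, exists_eq_left, invGList, countP_cons, decide_eq_true_eq, pow_add]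
      split_ifs <;> ring
    · simp [hyA]
  simp only [permutations'Aux, map_cons, sum_cons, map_map, htail]
  simp only [headWeight_cons, hfront,
    hP.invGList_top_cons fun z hz => (Finset.mem_Ico.1 (hτ z hz)).2]
  have hyB : y ∈ (Finset.Ico 1 m).filter (fun j => ¬ ltP j m) ↔ ¬ ltP y m := by simp [hy]
  have hyA : y ∈ A.erase m ↔ y ∈ A := by simp [hym.ne]
  simp only [hyB, hyA]
  split_ifs <;> simp_all [pow_add]

lemma sum_X_pow_pred_filter_not_ltP_top (hP : IsNatUnitIntervalOrder ltP n) (hmn : m + 1 ≤ n) :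
    ∑ a ∈ (Finset.Ico 1 (m + 1)).filter (fun j => ¬ ltP j (m + 1)), (X : R[X]) ^ (a - 1)
      = X ^ (m - ((Finset.Ico 1 (m + 1)).filter fun j => ¬ ltP j (m + 1)).card) *
          tnum R ((Finset.Ico 1 (m + 1)).filter fun j => ¬ ltP j (m + 1)).card := by
  set b := ((Finset.Ico 1 (m + 1)).filter fun j => ¬ ltP j (m + 1)).card with hb
  have hbm : b ≤ m := (Finset.card_filter_le _ _).trans (by simp)
  have hB := filter_Ico_eq_Ico_of_mono fun i j hi hij hj => hP.not_ltP_top_mono hmn hi hij hj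
  rw [← hb] at hB
  rw [hB, sum_Ico_X_pow_pred R (by omega), Nat.sub_sub_self (by omega)]
  congr 2
  omega

theorem sum_headWeight_words (hP : IsNatUnitIntervalOrder ltP n) {m : ℕ} (hm : 1 ≤ m)
    (hmn : m ≤ n) {A : Finset ℕ} (hA : A ⊆ Finset.Icc 1 m) :
    ((words m).map (headWeight ltP R A)).sum
      = (∑ a ∈ A, X ^ (a - 1)) * ∏ i ∈ Finset.Icc 2 m,
          tnum R ((Finset.Ico 1 i).filter fun j => ¬ ltP j i ∧ ¬ ltP i j).card := by
  induction m, hm using Nat.le_induction generalizing A with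
  | base =>
    obtain rfl | rfl := Finset.subset_singleton_iff.1 (by simpa using hA) <;>
      simp [words, headWeight, IsNP, FitsAfter, Fits, invGList]
  | succ m hm ih =>
    set B := (Finset.Ico 1 (m + 1)).filter fun j => ¬ ltP j (m + 1)
    have hstep : ∀ τ ∈ words m, ((permutations'Aux (m + 1) τ).map (headWeight ltP R A)).sum
        = (if m + 1 ∈ A then X ^ B.card else 0) * headWeight ltP R B τ
          + tnum R B.card * headWeight ltP R (A.erase (m + 1)) τ := fun τ hτ => by
      rw [hP.sum_permutations'Aux_headWeight hmn A (fun y hy => mem_Ico_of_mem_words hτ hy)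
        (ne_nil_of_mem_words hm hτ),
        countP_of_mem_words hτ]
    have hBA : B ⊆ Finset.Icc 1 m := fun j hj => by
      simp only [B, Finset.mem_filter, Finset.mem_Ico, Finset.mem_Icc] at hj ⊢; omega
    have hAerase : A.erase (m + 1) ⊆ Finset.Icc 1 m := fun j hj => by
      have := hA (Finset.mem_of_mem_erase hj)
      simp only [Finset.mem_erase, Finset.mem_Icc] at hj this ⊢; omega
    have hb : ((Finset.Ico 1 (m + 1)).filter fun j => ¬ ltP j (m + 1) ∧ ¬ ltP (m + 1) j) = B :=
      Finset.filter_congr fun j hj =>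
        and_iff_left (hP.not_ltP_of_le (Finset.mem_Ico.1 hj).2.le)
    have hsplit : ∑ a ∈ A, (X : R[X]) ^ (a - 1)
        = (if m + 1 ∈ A then X ^ m else 0) + ∑ a ∈ A.erase (m + 1), X ^ (a - 1) := by
      split_ifs with h
      · rw [← Finset.add_sum_erase A _ h, Nat.add_sub_cancel]
      · rw [Finset.erase_eq_of_notMem h, zero_add]
    rw [words_succ, sum_map_flatMap, map_congr_left hstep, sum_map_add, sum_map_mul_left,
      sum_map_mul_left, ih (by omega) hBA, ih (by omega) hAerase,
      hP.sum_X_pow_pred_filter_not_ltP_top hmn, Finset.prod_Icc_succ_top (by omega), hb, hsplit]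
    have hbm : B.card ≤ m := (Finset.card_filter_le _ _).trans (by simp)
    have hpow : (X : R[X]) ^ B.card * X ^ (m - B.card) = X ^ m := by
      rw [← pow_add, Nat.add_sub_cancel' hbm]
    split_ifs
    · rw [← hpow]
      ring
    · ring

end IsNatUnitIntervalOrder

section Indices

variable {ltP : ℕ → ℕ → Prop}

lemma fitsAfter_iff_forall_take (q w : List ℕ) :
    FitsAfter ltP q w ↔ ∀ r < w.length, Fits ltP ((w.take r).reverse ++ q) (w.getD r 0) := by
  induction w generalizing q with
  | nil => simp [FitsAfter]
  | cons x w ih =>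
    rw [FitsAfter, ih, length_cons, Nat.forall_lt_succ_left]
    simp [take_succ_cons]

lemma exists_mem_take_iff {w : List ℕ} {r : ℕ} (hr : r ≤ w.length) (p : ℕ → Prop) :
    (∃ u ∈ w.take r, p u) ↔ ∃ s < r, p (w.getD s 0) := by
  simp only [mem_take_iff_getElem]
  constructor
  · rintro ⟨_, ⟨s, hs, rfl⟩, hp⟩
    exact ⟨s, by omega, by rwa [getD_eq_getElem]⟩
  · rintro ⟨s, hs, hp⟩
    exact ⟨_, ⟨s, by omega, rfl⟩, by rwa [getD_eq_getElem] at hp⟩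

lemma fits_reverse_take_iff {w : List ℕ} {r : ℕ} (hr : r < w.length) (hr1 : 1 ≤ r) :
    Fits ltP (w.take r).reverse (w.getD r 0)
      ↔ ¬ ltP (w.getD r 0) (w.getD (r - 1) 0) ∧
        ∃ s < r, ¬ ltP (w.getD s 0) (w.getD r 0) := by
  obtain ⟨i, rfl⟩ : ∃ i, r = i + 1 := ⟨r - 1, by omega⟩
  have hc : (w.take (i + 1)).reverse = w.getD i 0 :: (w.take i).reverse := by
    rw [take_add_one, getElem?_eq_getElem (by omega), reverse_append,
      getD_eq_getElem _ _ (by omega)]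
    rfl
  rw [hc]
  simp only [Fits]
  rw [← hc, Nat.add_sub_cancel,
    ← exists_mem_take_iff hr.le fun u => ¬ ltP u (w.getD (i + 1) 0)]
  simp only [mem_reverse]

lemma isNP_iff_getD (w : List ℕ) :
    IsNP ltP w ↔
      (∀ i ∈ Finset.range (w.length - 1), ¬ ltP (w.getD (i + 1) 0) (w.getD i 0)) ∧
      (∀ r ∈ Finset.range w.length, 1 ≤ r →
        ¬ ∀ s ∈ Finset.range r, ltP (w.getD s 0) (w.getD r 0)) := by
  rw [IsNP, fitsAfter_iff_forall_take]
  simp only [append_nil, Finset.mem_range, not_forall]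
  constructor
  · intro h
    refine ⟨fun i hi => ?_, fun r hr hr1 => ?_⟩
    · simpa using
        ((fits_reverse_take_iff (ltP := ltP) (by omega) le_add_self).1 (h (i + 1) (by omega))).1
    · obtain ⟨s, hs, hns⟩ := ((fits_reverse_take_iff hr hr1).1 (h r hr)).2
      exact ⟨s, hs, hns⟩
  · rintro ⟨hdesc, hmax⟩ r hr
    rcases Nat.eq_zero_or_pos r with rfl | hr1
    · simp [Fits]
    · refine (fits_reverse_take_iff hr hr1).2 ⟨?_, ?_⟩
      · have := hdesc (r - 1) (by omega)
        rwa [Nat.sub_add_cancel hr1] at this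
      · obtain ⟨s, hs, hns⟩ := hmax r hr hr1
        exact ⟨s, hs, hns⟩

lemma countP_eq_sum_range (p : ℕ → Prop) [DecidablePred p] (w : List ℕ) :
    w.countP p = ∑ j ∈ Finset.range w.length, if p (w.getD j 0) then 1 else 0 := by
  induction w with
  | nil => simp
  | cons x w ih =>
    rw [countP_cons, ih, length_cons, Finset.sum_range_succ']
    simp

variable [DecidableRel ltP]

lemma invGList_eq_card (w : List ℕ) :
    invGList ltP w = ((Finset.range w.length ×ˢ Finset.range w.length).filter fun p =>
      p.1 < p.2 ∧ w.getD p.2 0 < w.getD p.1 0 ∧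
        ¬ ltP (w.getD p.1 0) (w.getD p.2 0) ∧ ¬ ltP (w.getD p.2 0) (w.getD p.1 0)).card := by
  rw [Finset.card_filter, Finset.sum_product]
  induction w with
  | nil => simp [invGList]
  | cons x w ih =>
    rw [invGList, ih, countP_eq_sum_range, length_cons, Finset.sum_range_succ' _ w.length]
    simp [Finset.sum_range_succ', add_comm, -Finset.sum_boole]

end Indices

section Permutations

def permWord {n : ℕ} (σ : Equiv.Perm (Fin n)) : List ℕ := ofFn fun i => (σ i : ℕ) + 1

variable {n : ℕ}

@[simp] lemma length_permWord (σ : Equiv.Perm (Fin n)) : (permWord σ).length = n := by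
  simp [permWord]

@[simp] lemma getD_permWord (σ : Equiv.Perm (Fin n)) (i : ℕ) :
    (permWord σ).getD i 0 = word n σ i := by
  unfold word
  split_ifs with h <;> simp [permWord, h]

lemma permWord_injective : Function.Injective (permWord (n := n)) := fun σ τ h =>
  Equiv.ext fun i => Fin.ext <| by
    have := congrArg (fun w => w.getD i 0) h
    simpa only [getD_permWord, word, dif_pos i.isLt, Nat.add_right_cancel_iff] using this

lemma permWord_mem_words (σ : Equiv.Perm (Fin n)) : permWord σ ∈ words n := by
  have hrange : (finRange n).map (fun i : Fin n => (i : ℕ) + 1) = range' 1 n := by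
    apply ext_getElem <;> simp [add_comm]
  rw [mem_words, ← hrange, permWord, ofFn_eq_map]
  change map ((fun i : Fin n => (i : ℕ) + 1) ∘ σ) _ ~ _
  rw [← map_map]
  exact (Equiv.Perm.map_finRange_perm σ).map _

lemma sum_permWord_eq_sum_words {M : Type*} [AddCommMonoid M] (f : List ℕ → M) :
    ∑ σ : Equiv.Perm (Fin n), f (permWord σ) = ((words n).map f).sum := by
  have himage : Finset.univ.image (permWord (n := n)) = (words n).toFinset := by
    refine Finset.eq_of_subset_of_card_le (fun w hw => ?_) ?_
    · obtain ⟨σ, -, rfl⟩ := Finset.mem_image.1 hw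
      exact mem_toFinset.2 (permWord_mem_words σ)
    · rw [Finset.card_image_of_injective _ permWord_injective,
        toFinset_card_of_nodup (nodup_words n), length_words, Finset.card_univ,
        Fintype.card_perm, Fintype.card_fin]
  rw [← sum_toFinset f (nodup_words n), ← himage,
    Finset.sum_image fun σ _ τ _ h => permWord_injective h]

end Permutations

end NPWords

open NPWords

theorem sum_NP_eq_prod_general (n : ℕ) (hn : 1 ≤ n) (ltP : ℕ → ℕ → Prop) [DecidableRel ltP]
    (htrans : ∀ x y z, ltP x y → ltP y z → ltP x z)
    (hnat : ∀ x y, ltP x y → x < y)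
    (hnuio : ∀ x y z, x ∈ Finset.Icc 1 n → y ∈ Finset.Icc 1 n → z ∈ Finset.Icc 1 n →
      y ≠ x → y ≠ z → ltP x z →
      ¬ ltP x y → ¬ ltP y x → ¬ ltP y z → ¬ ltP z y → x < y ∧ y < z) :
    ∑ σ : Equiv.Perm (Fin n),
      (if (∀ i ∈ Finset.range (n - 1), ¬ ltP (word n σ (i + 1)) (word n σ i)) ∧
          (∀ r ∈ Finset.range n, 1 ≤ r →
            ¬ ∀ s ∈ Finset.range r, ltP (word n σ s) (word n σ r))
       then (Polynomial.X : Polynomial ℚ) ^ invG n ltP σ else 0)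
    = tnum ℚ n * ∏ i ∈ Finset.Icc 2 n,
        tnum ℚ (((Finset.Ico 1 i).filter fun j => ¬ ltP j i ∧ ¬ ltP i j).card) := by
  have hP : IsNatUnitIntervalOrder ltP n := ⟨htrans, hnat, hnuio⟩
  trans ∑ σ : Equiv.Perm (Fin n), headWeight ltP ℚ (Finset.Icc 1 n) (permWord σ)
  · refine Finset.sum_congr rfl fun σ _ => ?_
    have hNP := isNP_iff_getD (ltP := ltP) (permWord σ)
    have hinv := invGList_eq_card (ltP := ltP) (permWord σ)
    simp only [getD_permWord, length_permWord] at hNP hinv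
    rw [headWeight, hinv, invG]
    by_cases h : IsNP ltP (permWord σ)
    · rw [if_pos (hNP.1 h),
        if_pos ⟨exists_head?_eq_of_mem_words hn (permWord_mem_words σ), h⟩]
    · rw [if_neg (mt hNP.2 h), if_neg (mt And.right h)]
  · rw [sum_permWord_eq_sum_words, hP.sum_headWeight_words hn le_rfl subset_rfl,
      ← Finset.Ico_add_one_right_eq_Icc, sum_Ico_X_pow_pred ℚ le_rfl]
    simp

/-- For a natural unit interval order `P` on `[n]` (n ≥ 1) with incomparability graph `G`:
`∑_{σ ∈ N_P} t^{inv_G(σ)} = [n]_t · ∏_{i=2}^n [b_i]_t`, where `N_P` is the set of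
permutations (as words) with no `P`-descent and no nontrivial left-to-right `P`-maximum,
and `b_i = #{j < i : {j,i} ∈ E}`. -/
theorem sum_NP_eq_prod (n : ℕ) (hn : 1 ≤ n) (ltP : ℕ → ℕ → Prop) [DecidableRel ltP]
    (hmem : ∀ x y, ltP x y → x ∈ Finset.Icc 1 n ∧ y ∈ Finset.Icc 1 n)
    (htrans : ∀ x y z, ltP x y → ltP y z → ltP x z)
    (hnat : ∀ x y, ltP x y → x < y)
    (hnuio : ∀ x y z, x ∈ Finset.Icc 1 n → y ∈ Finset.Icc 1 n → z ∈ Finset.Icc 1 n →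
      y ≠ x → y ≠ z → ltP x z →
      ¬ ltP x y → ¬ ltP y x → ¬ ltP y z → ¬ ltP z y → x < y ∧ y < z) :
    ∑ σ : Equiv.Perm (Fin n),
      (if (∀ i ∈ Finset.range (n - 1), ¬ ltP (word n σ (i + 1)) (word n σ i)) ∧
          (∀ r ∈ Finset.range n, 1 ≤ r →
            ¬ ∀ s ∈ Finset.range r, ltP (word n σ s) (word n σ r))
       then (Polynomial.X : Polynomial ℚ) ^ invG n ltP σ else 0)
    = tnum ℚ n * ∏ i ∈ Finset.Icc 2 n,
        tnum ℚ (((Finset.Ico 1 i).filter fun j => ¬ ltP j i ∧ ¬ ltP i j).card) :=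
  sum_NP_eq_prod_general n hn ltP htrans hnat hnuio
end

section
/- Let P be a natural unit interval order on [n] with incomparability graph G, and b_i = |{ j < i : {j,i} ∈ E(G) }|. Let Ñ_P be the set of words of length n over P with distinct letters, starting with the smallest element of P (in the integer order), and with no P-ascent (no i with α_i <_P α_{i+1}). Then ∑_{σ ∈ Ñ_P} t^{inv_G(σ)} = ∏_{i=2}^n [b_i]_t. -/
/-!
Every word of `Ñ_P` on `[k + 1]` arises, exactly once, by inserting the letter `k + 1` into a word
of `Ñ_P` on `[k]`. Inserting it in front destroys the initial `1`; inserting it right after a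
letter `x` creates no `P`-ascent exactly when `x` is incomparable to `k + 1`, because in a natural
unit interval order `x <_P y < k + 1` forces `x <_P k + 1`. Such an insertion creates one new
`G`-inversion for each letter incomparable to `k + 1` to its right, so the admissible positions
contribute `1 + t + ⋯ + t^(b_{k+1} - 1)`, and induction on `k` gives the product.
-/

open Finset Polynomial

namespace List

variable {α : Type*}

theorem insertIdx_eq_take_append_cons_drop (a : α) :
    ∀ (l : List α) (p : ℕ), p ≤ l.length → l.insertIdx p a = l.take p ++ a :: l.drop p
  | l, 0, _ => by simp
  | [], _ + 1, h => by simp at h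
  | b :: l, p + 1, h => by
    simp [insertIdx_succ_cons, insertIdx_eq_take_append_cons_drop a l p (by simpa using h)]

theorem isChain_append_cons_iff {R : α → α → Prop} {l₁ l₂ : List α} {a : α}
    (hl₂ : ∀ y ∈ l₂.head?, R a y) (hl₁ : ∀ x ∈ l₁.getLast?, ∀ y ∈ l₂.head?, R x a → R x y) :
    IsChain R (l₁ ++ a :: l₂) ↔ IsChain R (l₁ ++ l₂) ∧ ∀ x ∈ l₁.getLast?, R x a := by
  simp only [isChain_append, isChain_cons, head?_cons, Option.mem_some_iff]
  grind

theorem isChain_iff_forall_getD {R : α → α → Prop} (l : List α) (d : α) :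
    IsChain R l ↔ ∀ i ∈ Finset.range (l.length - 1), R (l.getD i d) (l.getD (i + 1) d) := by
  rw [isChain_iff_getElem]
  refine forall_congr' fun i => ?_
  rw [Finset.mem_range]
  constructor <;> intro h hi
  · rw [getD_eq_getElem _ _ (by omega), getD_eq_getElem _ _ (by omega)]
    exact h (by omega)
  · simpa only [getD_eq_getElem _ _ hi, getD_eq_getElem _ _ (Nat.lt_of_succ_lt hi)] using
      h (by omega)

theorem countP_eq_sum_range_getD (p : α → Bool) (d : α) : ∀ l : List α,
    l.countP p = ∑ i ∈ Finset.range l.length, if p (l.getD i d) then 1 else 0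
  | [] => by simp
  | a :: l => by
    rw [countP_cons, length_cons, Finset.sum_range_succ', countP_eq_sum_range_getD p d l]
    simp

theorem permutations'Aux_eq_map_insertIdx (a : α) (l : List α) :
    permutations'Aux a l = (range (l.length + 1)).map (l.insertIdx · a) := by
  apply ext_getElem (by simp [length_permutations'Aux])
  intro i _ _
  simp [getElem_permutations'Aux]

theorem sum_map_permutations'_cons {M : Type*} [AddCommMonoid M] (f : List α → M) (a : α)
    (l : List α) :
    ((a :: l).permutations'.map f).sum =
      (l.permutations'.map fun w =>
        ∑ p ∈ Finset.range (w.length + 1), f (w.insertIdx p a)).sum := by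
  simp only [permutations', flatMap_def, map_flatten, sum_flatten, map_map]
  congr 1
  refine map_congr_left fun w _ => ?_
  rw [Function.comp_apply, Function.comp_apply, permutations'Aux_eq_map_insertIdx, map_map,
    ← sum_toFinset _ nodup_range, toFinset_range]
  rfl

theorem reverse_range'_one_succ (k : ℕ) :
    (range' 1 (k + 1)).reverse = (k + 1) :: (range' 1 k).reverse := by
  simp [range'_concat, add_comm]

end List

section PairCount

variable {α : Type*} (r : α → α → Prop) [DecidableRel r]

def pairCount : List α → ℕ
  | [] => 0
  | a :: l => l.countP (r a ·) + pairCount l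

theorem pairCount_eq_card_filter (l : List α) (d : α) :
    pairCount r l = #{p ∈ range l.length ×ˢ range l.length |
      p.1 < p.2 ∧ r (l.getD p.1 d) (l.getD p.2 d)} := by
  rw [card_filter, sum_product]
  induction l with
  | nil => rfl
  | cons a l ih =>
    rw [pairCount, ih, List.countP_eq_sum_range_getD _ d, List.length_cons, sum_range_succ',
      add_comm]
    simp only [sum_range_succ' _ l.length, List.getD_cons_succ, List.getD_cons_zero]
    simp

theorem pairCount_insertIdx {a : α} :
    ∀ (l : List α) (p : ℕ), (∀ b ∈ l, ¬ r b a) → p ≤ l.length →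
      pairCount r (l.insertIdx p a) = pairCount r l + (l.drop p).countP (r a ·)
  | l, 0, _, _ => by simp [pairCount, add_comm]
  | [], _ + 1, _, h => by simp at h
  | b :: l, p + 1, ha, h => by
    rw [List.insertIdx_succ_cons, pairCount, pairCount,
      (List.perm_insertIdx a l (by simpa using h)).countP_eq, List.countP_cons,
      pairCount_insertIdx l p (fun c hc => ha c (List.mem_cons_of_mem b hc)) (by simpa using h)]
    simp only [ha b List.mem_cons_self, decide_false, Bool.false_eq_true, ↓reduceIte, add_zero,
      List.drop_succ_cons]
    omega

end PairCount

theorem sum_pow_countP_drop_eq_tnum {R α : Type*} [CommSemiring R] (c : α → Prop)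
    [DecidablePred c] (d : α) :
    ∀ l : List α, ∑ q ∈ range l.length,
      (if c (l.getD q d) then (X : R[X]) ^ (l.drop (q + 1)).countP c else 0) =
        tnum R (l.countP c)
  | [] => by simp [tnum]
  | a :: l => by
    simp only [List.length_cons, sum_range_succ', List.getD_cons_succ, List.getD_cons_zero,
      List.drop_succ_cons]
    rw [sum_pow_countP_drop_eq_tnum c d l, List.countP_cons]
    by_cases h : c a <;> simp [h, tnum, sum_range_succ]

structure IsNatUnitIntervalOrder (n : ℕ) (ltP : ℕ → ℕ → Prop) : Prop where
  trans : ∀ x y z, ltP x y → ltP y z → ltP x z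
  lt_of_ltP : ∀ x y, ltP x y → x < y
  lt_of_incomparable : ∀ x y z, x ∈ Icc 1 n → y ∈ Icc 1 n → z ∈ Icc 1 n →
    y ≠ x → y ≠ z → ltP x z → ¬ ltP x y → ¬ ltP y x → ¬ ltP y z → ¬ ltP z y → x < y ∧ y < z

namespace IsNatUnitIntervalOrder

variable {n : ℕ} {ltP : ℕ → ℕ → Prop}

theorem ltP_of_ltP_of_lt (hP : IsNatUnitIntervalOrder n ltP) {x y m : ℕ} (hx : x ∈ Icc 1 n)
    (hy : y ∈ Icc 1 n) (hm : m ∈ Icc 1 n) (hxy : ltP x y) (hym : y < m) : ltP x m := by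
  by_contra hxm
  have hxy' := hP.lt_of_ltP x y hxy
  by_cases hyP : ltP y m
  · exact hxm (hP.trans x y m hxy hyP)
  · have := hP.lt_of_incomparable x m y hx hm hy (by omega) (by omega) hxy hxm
      (fun h => by have := hP.lt_of_ltP m x h; omega)
      (fun h => by have := hP.lt_of_ltP m y h; omega) hyP
    omega

theorem isChain_insertIdx_succ_iff (hP : IsNatUnitIntervalOrder n ltP) {m : ℕ} (hm : m ≤ n)
    {w : List ℕ} (hw : ∀ a ∈ w, a ∈ Ico 1 m) {q : ℕ} (hq : q < w.length) :
    (w.insertIdx (q + 1) m).IsChain (fun a b => ¬ ltP a b) ↔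
      w.IsChain (fun a b => ¬ ltP a b) ∧ ¬ ltP (w.getD q 0) m := by
  have hIcc : ∀ a ∈ w, a ∈ Icc 1 n := fun a ha => by
    have := mem_Ico.mp (hw a ha); exact mem_Icc.mpr (by omega)
  have hlast : (w.take (q + 1)).getLast? = some (w.getD q 0) := by
    simp [List.getLast?_take, hq]
  rw [List.insertIdx_eq_take_append_cons_drop m w (q + 1) hq, List.isChain_append_cons_iff,
    List.take_append_drop, hlast]
  · simp
  · intro y hy hmy
    have := hP.lt_of_ltP m y hmy
    have := mem_Ico.mp (hw y (List.mem_of_mem_drop (List.mem_of_mem_head? hy)))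
    omega
  · intro x hx y hy hxm hxy
    rw [hlast, Option.mem_some_iff] at hx
    have hyw := List.mem_of_mem_drop (List.mem_of_mem_head? hy)
    have hxw : x ∈ w := by rw [← hx, List.getD_eq_getElem _ _ hq]; exact List.getElem_mem hq
    have hym := mem_Ico.mp (hw y hyw)
    exact hxm (hP.ltP_of_ltP_of_lt (hIcc x hxw) (hIcc y hyw) (mem_Icc.mpr ⟨by omega, hm⟩) hxy
      hym.2)

end IsNatUnitIntervalOrder

section Weight

variable (ltP : ℕ → ℕ → Prop) [DecidableRel ltP]

abbrev IsGInversion (a b : ℕ) : Prop := b < a ∧ ¬ ltP a b ∧ ¬ ltP b a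

noncomputable def weight (L : List ℕ) : ℚ[X] :=
  if L.head? = some 1 ∧ L.IsChain (fun a b => ¬ ltP a b) then X ^ pairCount (IsGInversion ltP) L
  else 0

variable {ltP} {n m : ℕ}

theorem weight_insertIdx_zero (hm : 2 ≤ m) (w : List ℕ) : weight ltP (w.insertIdx 0 m) = 0 := by
  rw [weight, List.insertIdx_zero, if_neg fun h => by have := Option.some_injective _ h.1; omega]

theorem weight_insertIdx_succ (hP : IsNatUnitIntervalOrder n ltP) (hm : m ≤ n) {w : List ℕ}
    (hw : ∀ a ∈ w, a ∈ Ico 1 m) {q : ℕ} (hq : q < w.length) :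
    weight ltP (w.insertIdx (q + 1) m) = weight ltP w *
      if IsGInversion ltP m (w.getD q 0) then X ^ (w.drop (q + 1)).countP (IsGInversion ltP m)
      else 0 := by
  have hx : w.getD q 0 < m := by
    rw [List.getD_eq_getElem _ _ hq]; exact (mem_Ico.mp (hw _ (List.getElem_mem hq))).2
  have hhead : (w.insertIdx (q + 1) m).head? = w.head? := by
    obtain ⟨b, w, rfl⟩ := List.exists_cons_of_length_pos (Nat.zero_lt_of_lt hq)
    rfl
  have hG : IsGInversion ltP m (w.getD q 0) ↔ ¬ ltP (w.getD q 0) m :=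
    ⟨fun h => h.2.2, fun h => ⟨hx, fun h' => by have := hP.lt_of_ltP _ _ h'; omega, h⟩⟩
  rw [weight, weight, pairCount_insertIdx _ w (q + 1)
    (fun b hb h => by have := (mem_Ico.mp (hw b hb)).2; omega) (by omega)]
  simp only [hhead, hP.isChain_insertIdx_succ_iff hm hw hq, hG, ite_zero_mul_ite_zero, pow_add,
    and_assoc]

theorem sum_weight_insertIdx (hP : IsNatUnitIntervalOrder n ltP) (hm : m ∈ Icc 2 n) {w : List ℕ}
    (hw : ∀ a ∈ w, a ∈ Ico 1 m) :
    ∑ p ∈ range (w.length + 1), weight ltP (w.insertIdx p m) =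
      weight ltP w * tnum ℚ (w.countP (IsGInversion ltP m)) := by
  rw [sum_range_succ', weight_insertIdx_zero (mem_Icc.mp hm).1, add_zero,
    sum_congr rfl fun q hq => weight_insertIdx_succ hP (mem_Icc.mp hm).2 hw (mem_range.mp hq),
    ← mul_sum, sum_pow_countP_drop_eq_tnum]

theorem countP_isGInversion_reverse_range' (k : ℕ) :
    (List.range' 1 k).reverse.countP (IsGInversion ltP (k + 1)) =
      #{j ∈ Ico 1 (k + 1) | ¬ ltP j (k + 1) ∧ ¬ ltP (k + 1) j} := by
  rw [List.countP_reverse, List.countP_congr (q := fun j => ¬ ltP j (k + 1) ∧ ¬ ltP (k + 1) j)]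
  · -- `Ico 1 (k + 1)` is implemented as `List.range' 1 k`
    rw [List.countP_eq_length_filter, card_def, filter_val]
    rfl
  · intro j hj
    have := List.mem_range'_1.mp hj
    simp only [IsGInversion, decide_eq_true_eq]
    exact ⟨fun h => ⟨h.2.2, h.2.1⟩, fun h => ⟨by omega, h.2, h.1⟩⟩

theorem sum_map_weight_permutations' (hP : IsNatUnitIntervalOrder n ltP) {k : ℕ} (hk : 1 ≤ k)
    (hkn : k ≤ n) :
    ((List.range' 1 k).reverse.permutations'.map (weight ltP)).sum =
      ∏ i ∈ Icc 2 k, tnum ℚ #{j ∈ Ico 1 i | ¬ ltP j i ∧ ¬ ltP i j} := by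
  induction k, hk using Nat.le_induction with
  | base => simp [List.permutations', List.permutations'Aux, weight, pairCount]
  | succ k hk ih =>
    rw [List.reverse_range'_one_succ, List.sum_map_permutations'_cons,
      prod_Icc_succ_top (by omega), ← ih (by omega), ← List.sum_map_mul_right]
    refine congrArg List.sum (List.map_congr_left fun w hw => ?_)
    have hperm := List.mem_permutations'.mp hw
    rw [sum_weight_insertIdx hP (mem_Icc.mpr ⟨by omega, hkn⟩), hperm.countP_eq,
      countP_isGInversion_reverse_range']
    intro a ha
    have := List.mem_range'_1.mp (List.mem_reverse.mp (hperm.mem_iff.mp ha))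
    exact mem_Ico.mpr (by omega)

end Weight

def wordList (n : ℕ) (σ : Equiv.Perm (Fin n)) : List ℕ := List.ofFn fun i => (σ i : ℕ) + 1

theorem length_wordList (n : ℕ) (σ : Equiv.Perm (Fin n)) : (wordList n σ).length = n :=
  List.length_ofFn

theorem getD_wordList (n : ℕ) (σ : Equiv.Perm (Fin n)) (i : ℕ) :
    (wordList n σ).getD i 0 = word n σ i := by
  rw [wordList, word, List.getD_eq_getElem?_getD, List.getElem?_ofFn]
  split_ifs <;> simp [*]

theorem wordList_injective (n : ℕ) : Function.Injective (wordList n) := fun σ τ h =>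
  Equiv.ext fun i => Fin.ext (by simpa using congrFun (List.ofFn_injective h) i)

theorem wordList_perm (n : ℕ) (σ : Equiv.Perm (Fin n)) :
    (wordList n σ).Perm (List.range' 1 n).reverse := by
  have hid : List.ofFn (fun i : Fin n => (i : ℕ) + 1) = List.range' 1 n := by
    apply List.ext_getElem <;> simp [add_comm]
  exact (σ.ofFn_comp_perm fun i => (i : ℕ) + 1).trans (hid ▸ (List.reverse_perm _).symm)

theorem sum_wordList_eq_sum_permutations' {M : Type*} [AddCommMonoid M] (n : ℕ)
    (f : List ℕ → M) :
    ∑ σ : Equiv.Perm (Fin n), f (wordList n σ) =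
      ((List.range' 1 n).reverse.permutations'.map f).sum := by
  have hperm := List.permutations_perm_permutations' (List.range' 1 n).reverse
  have hnd :=
    hperm.nodup_iff.mp (List.nodup_permutations _ (List.nodup_reverse.mpr List.nodup_range'))
  rw [← List.sum_toFinset f hnd, ← sum_image fun σ _ τ _ h => wordList_injective n h]
  congr 1
  refine eq_of_subset_of_card_le (fun L hL => ?_) ?_
  · obtain ⟨σ, -, rfl⟩ := mem_image.mp hL
    exact List.mem_toFinset.mpr (List.mem_permutations'.mpr (wordList_perm n σ))
  · rw [card_image_of_injective _ (wordList_injective n), card_univ, Fintype.card_perm,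
      Fintype.card_fin, List.toFinset_card_of_nodup hnd, ← hperm.length_eq,
      List.length_permutations, List.length_reverse, List.length_range']

theorem weight_wordList (ltP : ℕ → ℕ → Prop) [DecidableRel ltP] (n : ℕ)
    (σ : Equiv.Perm (Fin n)) :
    weight ltP (wordList n σ) =
      if word n σ 0 = 1 ∧ (∀ i ∈ range (n - 1), ¬ ltP (word n σ i) (word n σ (i + 1)))
      then X ^ invG n ltP σ else 0 := by
  have hhead : (wordList n σ).head? = some 1 ↔ word n σ 0 = 1 := by
    rw [← getD_wordList, List.head?_eq_getElem?, List.getD_eq_getElem?_getD]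
    cases (wordList n σ)[0]? <;> simp
  have hinv : pairCount (IsGInversion ltP) (wordList n σ) = invG n ltP σ := by
    rw [pairCount_eq_card_filter _ _ 0, invG, length_wordList]
    simp only [getD_wordList]
  simp only [weight, List.isChain_iff_forall_getD _ 0, hhead, hinv, length_wordList,
    getD_wordList]

theorem sum_tildeNP_eq_prod_general (n : ℕ) (hn : 1 ≤ n) (ltP : ℕ → ℕ → Prop) [DecidableRel ltP]
    (htrans : ∀ x y z, ltP x y → ltP y z → ltP x z)
    (hnat : ∀ x y, ltP x y → x < y)
    (hnuio : ∀ x y z, x ∈ Finset.Icc 1 n → y ∈ Finset.Icc 1 n → z ∈ Finset.Icc 1 n →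
      y ≠ x → y ≠ z → ltP x z →
      ¬ ltP x y → ¬ ltP y x → ¬ ltP y z → ¬ ltP z y → x < y ∧ y < z) :
    ∑ σ : Equiv.Perm (Fin n),
      (if word n σ 0 = 1 ∧
          (∀ i ∈ Finset.range (n - 1), ¬ ltP (word n σ i) (word n σ (i + 1)))
       then (Polynomial.X : Polynomial ℚ) ^ invG n ltP σ else 0)
    = ∏ i ∈ Finset.Icc 2 n,
        tnum ℚ (((Finset.Ico 1 i).filter fun j => ¬ ltP j i ∧ ¬ ltP i j).card) := by
  have hP : IsNatUnitIntervalOrder n ltP := ⟨htrans, hnat, hnuio⟩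
  simp only [← weight_wordList]
  rw [sum_wordList_eq_sum_permutations', sum_map_weight_permutations' hP hn le_rfl]

/-- For a natural unit interval order `P` on `[n]` (n ≥ 1) with incomparability graph `G`:
`∑_{σ ∈ Ñ_P} t^{inv_G(σ)} = ∏_{i=2}^n [b_i]_t`, where `Ñ_P` is the set of words of length
`n` over `P` with distinct letters (i.e. permutations of `[n]`), starting with the smallest
element `1` of `P`, and having no `P`-ascent; `b_i = #{j < i : {j,i} ∈ E}`. -/
theorem sum_tildeNP_eq_prod (n : ℕ) (hn : 1 ≤ n) (ltP : ℕ → ℕ → Prop) [DecidableRel ltP]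
    (hmem : ∀ x y, ltP x y → x ∈ Finset.Icc 1 n ∧ y ∈ Finset.Icc 1 n)
    (htrans : ∀ x y z, ltP x y → ltP y z → ltP x z)
    (hnat : ∀ x y, ltP x y → x < y)
    (hnuio : ∀ x y z, x ∈ Finset.Icc 1 n → y ∈ Finset.Icc 1 n → z ∈ Finset.Icc 1 n →
      y ≠ x → y ≠ z → ltP x z →
      ¬ ltP x y → ¬ ltP y x → ¬ ltP y z → ¬ ltP z y → x < y ∧ y < z) :
    ∑ σ : Equiv.Perm (Fin n),
      (if word n σ 0 = 1 ∧
          (∀ i ∈ Finset.range (n - 1), ¬ ltP (word n σ i) (word n σ (i + 1)))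
       then (Polynomial.X : Polynomial ℚ) ^ invG n ltP σ else 0)
    = ∏ i ∈ Finset.Icc 2 n,
        tnum ℚ (((Finset.Ico 1 i).filter fun j => ¬ ltP j i ∧ ¬ ltP i j).card) :=
  sum_tildeNP_eq_prod_general n hn ltP htrans hnat hnuio
end

section
/- For every natural unit interval order P on [n] with incomparability graph G, the statistic maj_P + inv_G is Mahonian: ∑_{σ ∈ S_n} q^{maj_P(σ) + inv_G(σ)} = [n]_q!. -/
/-- The `P`-major index `maj_P(σ) = ∑_{i ∈ [n-1], σ(i) >_P σ(i+1)} i`. -/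
noncomputable def majP (n : ℕ) (ltP : ℕ → ℕ → Prop) [DecidableRel ltP]
    (σ : Equiv.Perm (Fin n)) : ℕ :=
  ∑ i ∈ Finset.range (n - 1), if ltP (word n σ (i + 1)) (word n σ i) then i + 1 else 0

open Finset Polynomial

namespace MahonAux

/-- reindexing of positions after inserting a new position at `j`. -/
def ePos (j i : ℕ) : ℕ := if i < j then i else i + 1

lemma ePos_lt_ePos {j a b : ℕ} : ePos j a < ePos j b ↔ a < b := by
  unfold ePos; split <;> split <;> omega

lemma ePos_ne (j i : ℕ) : ePos j i ≠ j := by unfold ePos; split <;> omega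

lemma lt_ePos {j i : ℕ} : j < ePos j i ↔ j ≤ i := by unfold ePos; split <;> omega

lemma ePos_lt {j i : ℕ} : ePos j i < j ↔ i < j := by unfold ePos; split <;> omega

lemma ePos_lt_succ {n j i : ℕ} (hj : j ≤ n) (hi : i < n) : ePos j i < n + 1 := by
  unfold ePos; split <;> omega

lemma range_decomp (n j : ℕ) (hj : j ≤ n) :
    range (n + 1) = insert j ((range n).image (ePos j)) := by
  ext a
  simp only [mem_range, mem_insert, mem_image]
  constructor
  · intro ha
    rcases eq_or_ne a j with rfl | hne
    · exact Or.inl rfl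
    · refine Or.inr ?_
      rcases lt_or_gt_of_ne hne with h | h
      · exact ⟨a, by omega, by unfold ePos; simp [h]⟩
      · exact ⟨a - 1, by omega, by unfold ePos; split <;> omega⟩
  · rintro (rfl | ⟨i, hi, rfl⟩)
    · omega
    · unfold ePos; split <;> omega

lemma sum_range_decomp {M : Type*} [AddCommMonoid M] (n j : ℕ) (hj : j ≤ n) (f : ℕ → M) :
    ∑ a ∈ range (n + 1), f a = f j + ∑ i ∈ range n, f (ePos j i) := by
  rw [range_decomp n j hj, Finset.sum_insert, Finset.sum_image]
  · intro a _ b _ hab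
    simp only [ePos] at hab
    split_ifs at hab <;> omega
  · simp only [mem_image]
    rintro ⟨i, _, hi⟩
    exact ePos_ne j i hi

/-- number of new inversions created by inserting the maximal letter in slot `j`. -/
def Acnt (L : ℕ) (c : ℕ → Prop) [DecidablePred c] (j : ℕ) : ℕ :=
  ∑ b ∈ range L, if j ≤ b ∧ ¬ c b then 1 else 0

/-- contribution of shifted descents. -/
def DScnt (L : ℕ) (d : ℕ → Prop) [DecidablePred d] (j : ℕ) : ℕ :=
  ∑ k ∈ range (L - 1), if j ≤ k ∧ d k then 1 else 0

/-- net contribution of the (possibly) new descent at the inserted letter. -/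
def Ecnt (L : ℕ) (c d : ℕ → Prop) [DecidablePred c] [DecidablePred d] (j : ℕ) : ℕ :=
  if j < L ∧ c j then (if 1 ≤ j ∧ d (j - 1) then 1 else j + 1) else 0

/-- total change of the statistic when inserting the maximal letter in slot `j`. -/
def Dlt (L : ℕ) (c d : ℕ → Prop) [DecidablePred c] [DecidablePred d] (j : ℕ) : ℕ :=
  Acnt L c j + DScnt L d j + Ecnt L c d j

lemma Dlt_self (L : ℕ) (c d : ℕ → Prop) [DecidablePred c] [DecidablePred d] :
    Dlt L c d L = 0 := by
  unfold Dlt Acnt DScnt Ecnt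
  rw [Finset.sum_eq_zero (fun k hk => if_neg (fun h => absurd h.1 (by simp only [mem_range] at hk; omega))),
    Finset.sum_eq_zero (fun k hk => if_neg (fun h => absurd h.1 (by simp only [mem_range] at hk; omega))),
    if_neg (by omega)]
  rfl

lemma Dlt_last (L : ℕ) (c d : ℕ → Prop) [DecidablePred c] [DecidablePred d]
    (hkey : ∀ i, d i → c (i + 1)) :
    Dlt (L + 1) c d L = if c L ∧ ¬ (1 ≤ L ∧ d (L - 1)) then L + 1 else 1 := by
  have hA : Acnt (L + 1) c L = if c L then 0 else 1 := by
    unfold Acnt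
    rw [Finset.sum_range_succ, Finset.sum_eq_zero]
    · simp only [le_refl, true_and, zero_add]
      by_cases h : c L <;> simp [h]
    · intro k hk; rw [if_neg]; simp only [mem_range] at hk; omega
  have hD : DScnt (L + 1) d L = 0 := by
    unfold DScnt
    rw [Finset.sum_eq_zero]
    intro k hk; rw [if_neg]; simp only [mem_range] at hk; omega
  have hE : Ecnt (L + 1) c d L =
      if c L then (if 1 ≤ L ∧ d (L - 1) then 1 else L + 1) else 0 := by
    unfold Ecnt
    by_cases h : c L <;> simp [h]
  unfold Dlt
  rw [hA, hD, hE]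
  by_cases h : c L
  · by_cases h2 : 1 ≤ L ∧ d (L - 1) <;> simp [h, h2]
  · have h2 : ¬ (1 ≤ L ∧ d (L - 1)) := by
      rintro ⟨h1, hd⟩
      exact h (by have := hkey (L - 1) hd; rwa [Nat.sub_add_cancel h1] at this)
    simp [h, h2]

lemma Dlt_step (L : ℕ) (c d : ℕ → Prop) [DecidablePred c] [DecidablePred d]
    {j : ℕ} (hj : j < L) :
    Dlt (L + 1) c d j =
      Dlt L c d j + ((if c L then 0 else 1) + (if 1 ≤ L ∧ d (L - 1) then 1 else 0)) := by
  have hL : 1 ≤ L := by omega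
  have hA : Acnt (L + 1) c j = Acnt L c j + (if c L then 0 else 1) := by
    unfold Acnt
    rw [Finset.sum_range_succ]
    congr 1
    by_cases h : c L <;> simp [h, Nat.le_of_lt hj]
  have hD : DScnt (L + 1) d j = DScnt L d j + (if 1 ≤ L ∧ d (L - 1) then 1 else 0) := by
    unfold DScnt
    have h1 : L + 1 - 1 = (L - 1) + 1 := by omega
    rw [h1, Finset.sum_range_succ]
    congr 1
    have h2 : j ≤ L - 1 := by omega
    by_cases h : d (L - 1) <;> simp [h, h2, hL]
  have hE : Ecnt (L + 1) c d j = Ecnt L c d j := by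
    unfold Ecnt
    have h1 : (j < L + 1 ∧ c j) ↔ (j < L ∧ c j) := by
      constructor
      · rintro ⟨_, h⟩; exact ⟨hj, h⟩
      · rintro ⟨_, h⟩; exact ⟨by omega, h⟩
    rw [if_congr h1 rfl rfl]
  unfold Dlt
  rw [hA, hD, hE]
  ring

/-- Key lemma: the generating function of the insertion increments is `[L+1]_q`. -/
lemma sum_X_pow_Dlt (L : ℕ) (c d : ℕ → Prop) [DecidablePred c] [DecidablePred d]
    (hkey : ∀ i, d i → c (i + 1)) :
    ∑ j ∈ range (L + 1), (X : Polynomial ℚ) ^ (Dlt L c d j) =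
      ∑ k ∈ range (L + 1), (X : Polynomial ℚ) ^ k := by
  induction L with
  | zero => simp [Dlt_self]
  | succ L ih =>
    have hS : ∑ j ∈ range L, (X : Polynomial ℚ) ^ (Dlt L c d j) =
        (∑ k ∈ range (L + 1), (X : Polynomial ℚ) ^ k) - 1 := by
      have := ih
      rw [Finset.sum_range_succ, Dlt_self] at this
      rw [eq_sub_iff_add_eq]
      simpa using this
    set q := (X : Polynomial ℚ) with hq
    set cst := (if c L then 0 else 1) + (if 1 ≤ L ∧ d (L - 1) then 1 else 0) with hcst
    have hstep : ∀ j ∈ range L, q ^ Dlt (L + 1) c d j = q ^ Dlt L c d j * q ^ cst :=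
      fun j hj => by rw [Dlt_step L c d (mem_range.1 hj), pow_add]
    have hXS : q * ∑ k ∈ range (L + 1), q ^ k = (∑ k ∈ range (L + 2), q ^ k) - 1 := by
      rw [Finset.mul_sum, Finset.sum_range_succ' (fun k => q ^ k) (L + 1)]
      simp [← pow_succ']
    calc ∑ j ∈ range (L + 2), q ^ Dlt (L + 1) c d j
        = ∑ j ∈ range (L + 1), q ^ Dlt (L + 1) c d j + q ^ Dlt (L + 1) c d (L + 1) :=
          Finset.sum_range_succ _ _
      _ = (∑ j ∈ range L, q ^ Dlt (L + 1) c d j) + q ^ Dlt (L + 1) c d L + 1 := by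
          rw [Finset.sum_range_succ, Dlt_self, pow_zero]
      _ = (∑ j ∈ range L, q ^ Dlt L c d j) * q ^ cst + q ^ Dlt (L + 1) c d L + 1 := by
          rw [Finset.sum_congr rfl hstep, ← Finset.sum_mul]
      _ = ((∑ k ∈ range (L + 1), q ^ k) - 1) * q ^ cst + q ^ Dlt (L + 1) c d L + 1 := by
          rw [hS]
      _ = ∑ k ∈ range (L + 2), q ^ k := by
          rw [Dlt_last L c d hkey]
          by_cases h : c L ∧ ¬ (1 ≤ L ∧ d (L - 1))
          · have hc0 : cst = 0 := by rw [hcst]; simp [h.1, h.2]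
            rw [if_pos h, hc0, pow_zero, Finset.sum_range_succ _ (L + 1)]
            ring
          · have hc1 : cst = 1 := by
              rw [hcst]
              by_cases hc : c L
              · have hd : 1 ≤ L ∧ d (L - 1) := by by_contra hh; exact h ⟨hc, hh⟩
                simp [hc, hd]
              · have hd : ¬ (1 ≤ L ∧ d (L - 1)) := by
                  rintro ⟨h1, hdd⟩
                  exact hc (by have := hkey (L - 1) hdd; rwa [Nat.sub_add_cancel h1] at this)
                simp [hc, hd]
            rw [if_neg h, hc1, pow_one]
            linear_combination hXS

section Insertion

variable {n : ℕ} (ltP : ℕ → ℕ → Prop) [DecidableRel ltP]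

/-- the permutation whose word is the word of `τ` with a new maximal letter inserted
in slot `j`. -/
def insPerm (τ : Equiv.Perm (Fin n)) (j : Fin (n + 1)) : Equiv.Perm (Fin (n + 1)) :=
  (finSuccEquiv' j).trans ((Equiv.optionCongr τ).trans (finSuccEquiv' (Fin.last n)).symm)

lemma insPerm_apply_self (τ : Equiv.Perm (Fin n)) (j : Fin (n + 1)) :
    insPerm τ j j = Fin.last n := by
  simp [insPerm, finSuccEquiv'_at]

lemma insPerm_apply_succAbove (τ : Equiv.Perm (Fin n)) (j : Fin (n + 1)) (i : Fin n) :
    insPerm τ j (j.succAbove i) = (τ i).castSucc := by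
  simp [insPerm, finSuccEquiv'_succAbove, finSuccEquiv'_symm_some, Fin.succAbove_last]

lemma word_le (m : ℕ) (τ : Equiv.Perm (Fin m)) (i : ℕ) : word m τ i ≤ m := by
  unfold word; split
  · exact Nat.succ_le_of_lt (Fin.is_lt _)
  · omega

lemma word_insPerm_self (τ : Equiv.Perm (Fin n)) (j : Fin (n + 1)) :
    word (n + 1) (insPerm τ j) j.1 = n + 1 := by
  unfold word
  rw [dif_pos j.isLt]
  have h : (⟨j.1, j.isLt⟩ : Fin (n + 1)) = j := rfl
  rw [h, insPerm_apply_self]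
  simp

lemma word_insPerm_ePos (τ : Equiv.Perm (Fin n)) (j : Fin (n + 1)) {i : ℕ} (hi : i < n) :
    word (n + 1) (insPerm τ j) (ePos j.1 i) = word n τ i := by
  have h1 : ePos j.1 i < n + 1 := ePos_lt_succ (Nat.lt_succ_iff.1 j.isLt) hi
  unfold word
  rw [dif_pos h1, dif_pos hi]
  have h2 : (⟨ePos j.1 i, h1⟩ : Fin (n + 1)) = j.succAbove ⟨i, hi⟩ := by
    rcases lt_or_ge i j.1 with h | h
    · rw [Fin.succAbove_of_castSucc_lt _ _ (by simpa [Fin.lt_def] using h)]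
      apply Fin.ext; simp [ePos, h]
    · rw [Fin.succAbove_of_le_castSucc _ _ (by simpa [Fin.le_def] using h)]
      apply Fin.ext; simp [ePos, Nat.not_lt.2 h]
  rw [h2, insPerm_apply_succAbove]
  simp

lemma word_insPerm_low (τ : Equiv.Perm (Fin n)) (j : Fin (n + 1)) {i : ℕ} (hij : i < j.1) :
    word (n + 1) (insPerm τ j) i = word n τ i := by
  have hi : i < n := by have := j.isLt; omega
  have h := word_insPerm_ePos τ j hi
  rwa [show ePos j.1 i = i from if_pos hij] at h

lemma word_insPerm_high (τ : Equiv.Perm (Fin n)) (j : Fin (n + 1)) {i : ℕ}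
    (hij : j.1 ≤ i) (hi : i < n) :
    word (n + 1) (insPerm τ j) (i + 1) = word n τ i := by
  have h := word_insPerm_ePos τ j hi
  rwa [show ePos j.1 i = i + 1 from if_neg (by omega)] at h

lemma invG_insPerm (τ : Equiv.Perm (Fin n)) (j : Fin (n + 1))
    (hnotop : ∀ x, ¬ ltP (n + 1) x) :
    invG (n + 1) ltP (insPerm τ j) =
      invG n ltP τ + Acnt n (fun b => ltP (word n τ b) (n + 1)) j.1 := by
  have hj : j.1 ≤ n := Nat.lt_succ_iff.1 j.isLt
  set σ := insPerm τ j with hσ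
  set F : ℕ → ℕ → ℕ := fun a b =>
    if a < b ∧ word (n + 1) σ b < word (n + 1) σ a ∧
        ¬ ltP (word (n + 1) σ a) (word (n + 1) σ b) ∧
        ¬ ltP (word (n + 1) σ b) (word (n + 1) σ a) then 1 else 0 with hF
  have h0 : invG (n + 1) ltP σ = ∑ a ∈ range (n + 1), ∑ b ∈ range (n + 1), F a b := by
    unfold invG
    rw [Finset.card_filter, Finset.sum_product]
  have h1 : ∀ a, ∑ b ∈ range (n + 1), F a b = F a j.1 + ∑ b ∈ range n, F a (ePos j.1 b) :=
    fun a => sum_range_decomp n j.1 hj _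
  have hFjj : F j.1 j.1 = 0 := if_neg (fun h => lt_irrefl _ h.1)
  have hFj : ∀ b ∈ range n, F j.1 (ePos j.1 b) =
      (if j.1 ≤ b ∧ ¬ ltP (word n τ b) (n + 1) then 1 else 0) := by
    intro b hb
    have hb' : b < n := mem_range.1 hb
    simp only [hF]
    rw [word_insPerm_self, word_insPerm_ePos τ j hb']
    refine if_congr ?_ rfl rfl
    constructor
    · rintro ⟨hh1, -, -, hh4⟩; exact ⟨lt_ePos.1 hh1, hh4⟩
    · rintro ⟨hh1, hh2⟩
      exact ⟨lt_ePos.2 hh1, by have := word_le n τ b; omega, hnotop _, hh2⟩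
  have hFaj : ∀ a ∈ range n, F (ePos j.1 a) j.1 = 0 := by
    intro a ha
    simp only [hF]
    apply if_neg
    rintro ⟨-, hh2, -, -⟩
    rw [word_insPerm_self, word_insPerm_ePos τ j (mem_range.1 ha)] at hh2
    have := word_le n τ a; omega
  have hFab : ∀ a ∈ range n, ∀ b ∈ range n, F (ePos j.1 a) (ePos j.1 b) =
      (if a < b ∧ word n τ b < word n τ a ∧ ¬ ltP (word n τ a) (word n τ b) ∧
        ¬ ltP (word n τ b) (word n τ a) then 1 else 0) := by
    intro a ha b hb
    simp only [hF]
    rw [word_insPerm_ePos τ j (mem_range.1 ha), word_insPerm_ePos τ j (mem_range.1 hb)]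
    exact if_congr (and_congr ePos_lt_ePos Iff.rfl) rfl rfl
  have h2 : invG n ltP τ = ∑ a ∈ range n, ∑ b ∈ range n,
      (if a < b ∧ word n τ b < word n τ a ∧ ¬ ltP (word n τ a) (word n τ b) ∧
        ¬ ltP (word n τ b) (word n τ a) then 1 else 0) := by
    unfold invG
    rw [Finset.card_filter, Finset.sum_product]
  have h3 : ∀ a ∈ range n,
      (F (ePos j.1 a) j.1 + ∑ b ∈ range n, F (ePos j.1 a) (ePos j.1 b)) =
        ∑ b ∈ range n, (if a < b ∧ word n τ b < word n τ a ∧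
          ¬ ltP (word n τ a) (word n τ b) ∧ ¬ ltP (word n τ b) (word n τ a) then 1 else 0) := by
    intro a ha
    rw [hFaj a ha, zero_add]
    exact Finset.sum_congr rfl (fun b hb => hFab a ha b hb)
  rw [h0, sum_range_decomp n j.1 hj (fun a => ∑ b ∈ range (n + 1), F a b), h1 j.1,
    hFjj, zero_add,
    Finset.sum_congr rfl hFj,
    show (∑ a ∈ range n, ∑ b ∈ range (n + 1), F (ePos j.1 a) b) =
        ∑ a ∈ range n, ∑ b ∈ range n, (if a < b ∧ word n τ b < word n τ a ∧
          ¬ ltP (word n τ a) (word n τ b) ∧ ¬ ltP (word n τ b) (word n τ a) then 1 else 0) from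
      Finset.sum_congr rfl fun a ha => (h1 _).trans (h3 a ha),
    ← h2]
  unfold Acnt
  ring

lemma majP_insPerm (τ : Equiv.Perm (Fin n)) (j : Fin (n + 1))
    (hnotop : ∀ x, ¬ ltP (n + 1) x)
    (hkey : ∀ i, ltP (word n τ (i + 1)) (word n τ i) → ltP (word n τ (i + 1)) (n + 1)) :
    majP (n + 1) ltP (insPerm τ j) =
      majP n ltP τ + DScnt n (fun k => ltP (word n τ (k + 1)) (word n τ k)) j.1
        + Ecnt n (fun b => ltP (word n τ b) (n + 1))
            (fun k => ltP (word n τ (k + 1)) (word n τ k)) j.1 := by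
  set σ := insPerm τ j with hσ
  set u : ℕ → ℕ := word n τ with hu
  set w : ℕ → ℕ := word (n + 1) σ with hw
  set d : ℕ → Prop := fun k => ltP (u (k + 1)) (u k) with hd
  set c : ℕ → Prop := fun b => ltP (u b) (n + 1) with hc
  show majP (n + 1) ltP σ = majP n ltP τ + DScnt n d j.1 + Ecnt n c d j.1
  have hmaj : majP (n + 1) ltP σ = ∑ i ∈ range n, if ltP (w (i + 1)) (w i) then i + 1 else 0 := by
    unfold majP
    rw [show n + 1 - 1 = n from rfl]
  rcases eq_or_lt_of_le (Nat.lt_succ_iff.1 j.isLt) with hj | hj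
  · -- j = n : insertion at the very end
    have hDS : DScnt n d j.1 = 0 := by
      unfold DScnt
      apply Finset.sum_eq_zero
      intro k hk
      exact if_neg (fun h => absurd h.1 (by simp only [mem_range] at hk; omega))
    have hE : Ecnt n c d j.1 = 0 := if_neg (fun h => absurd h.1 (by omega))
    rw [hmaj, hDS, hE, add_zero, add_zero]
    rcases Nat.eq_zero_or_pos n with rfl | hn
    · simp [majP]
    obtain ⟨m, rfl⟩ : ∃ m, n = m + 1 := ⟨n - 1, by omega⟩
    rw [Finset.sum_range_succ]
    have hwm : w (m + 1) = m + 1 + 1 := by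
      have h := word_insPerm_self τ j
      rw [hj] at h
      exact h
    rw [hwm, if_neg (hnotop _), add_zero]
    unfold majP
    rw [show m + 1 - 1 = m from rfl]
    refine Finset.sum_congr rfl (fun i hi => ?_)
    have hi' : i < m := mem_range.1 hi
    rw [show w i = u i from word_insPerm_low τ j (by omega),
      show w (i + 1) = u (i + 1) from word_insPerm_low τ j (by omega)]
  · -- j < n : insertion in the middle
    obtain ⟨m, rfl⟩ : ∃ m, n = m + 1 := ⟨n - 1, by omega⟩
    have hjm : j.1 ≤ m := by omega
    set lt : ℕ → ℕ := fun k => if k + 1 = j.1 ∧ d k then j.1 else 0 with hlt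
    have hterm : ∀ k ∈ range m,
        (if ltP (w (ePos j.1 k + 1)) (w (ePos j.1 k)) then ePos j.1 k + 1 else 0) + lt k =
          (if d k then k + 1 else 0) + (if j.1 ≤ k ∧ d k then 1 else 0) := by
      intro k hk
      have hk' : k < m := mem_range.1 hk
      rcases lt_trichotomy (k + 1) j.1 with h | h | h
      · rw [show ePos j.1 k = k from if_pos (by omega),
          show w (k + 1) = u (k + 1) from word_insPerm_low τ j (by omega),
          show w k = u k from word_insPerm_low τ j (by omega),
          show lt k = 0 from if_neg (fun hh => absurd hh.1 (by omega)),
          show (if j.1 ≤ k ∧ d k then 1 else 0) = 0 from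
            if_neg (fun hh => absurd hh.1 (by omega)),
          add_zero]
      · have hwk1 : w (k + 1) = m + 1 + 1 := by
          have hh := word_insPerm_self τ j
          rw [← h] at hh
          exact hh
        rw [show ePos j.1 k = k from if_pos (by omega), hwk1, if_neg (hnotop _), zero_add,
          show (if j.1 ≤ k ∧ d k then 1 else 0) = 0 from
            if_neg (fun hh => absurd hh.1 (by omega)),
          add_zero]
        show (if k + 1 = j.1 ∧ d k then (j.1 : ℕ) else 0) = (if d k then k + 1 else 0)
        by_cases hdk : d k
        · rw [if_pos ⟨h, hdk⟩, if_pos hdk, h]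
        · rw [if_neg (fun hh => hdk hh.2), if_neg hdk]
      · have hjk : j.1 ≤ k := by omega
        rw [show ePos j.1 k = k + 1 from if_neg (by omega),
          show w (k + 1) = u k from word_insPerm_high τ j hjk (by omega),
          show w (k + 1 + 1) = u (k + 1) from word_insPerm_high τ j (by omega) (by omega),
          show lt k = 0 from if_neg (fun hh => absurd hh.1 (by omega)),
          add_zero]
        show (if d k then k + 1 + 1 else 0) =
          (if d k then k + 1 else 0) + (if j.1 ≤ k ∧ d k then 1 else 0)
        by_cases hdk : d k
        · rw [if_pos hdk, if_pos hdk, if_pos ⟨hjk, hdk⟩]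
        · rw [if_neg hdk, if_neg hdk, if_neg (fun hh => hdk hh.2)]
    have hLval : ∑ k ∈ range m, lt k = (if 1 ≤ j.1 ∧ d (j.1 - 1) then j.1 else 0) := by
      rcases Nat.eq_zero_or_pos j.1 with hj0 | hj0
      · rw [Finset.sum_eq_zero (fun k hk => if_neg (fun hh => absurd hh.1 (by omega))),
          if_neg (fun hh => absurd hh.1 (by omega))]
      · obtain ⟨t, ht⟩ : ∃ t, j.1 = t + 1 := ⟨j.1 - 1, by omega⟩
        rw [Finset.sum_eq_single_of_mem t (mem_range.2 (by omega))
          (fun k _ hkt => if_neg (fun hh => hkt (by have := hh.1; omega)))]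
        show (if t + 1 = j.1 ∧ d t then (j.1 : ℕ) else 0) =
          (if 1 ≤ j.1 ∧ d (j.1 - 1) then (j.1 : ℕ) else 0)
        simp only [ht, Nat.add_sub_cancel]
        by_cases hdt : d t
        · simp [hdt]
        · simp [hdt]
    have hG : (if ltP (w (j.1 + 1)) (w j.1) then j.1 + 1 else 0) =
        (if c j.1 then j.1 + 1 else 0) := by
      rw [show w (j.1 + 1) = u j.1 from word_insPerm_high τ j le_rfl (by omega),
        show w j.1 = m + 1 + 1 from word_insPerm_self τ j]
    have hmajτ : majP (m + 1) ltP τ = ∑ k ∈ range m, (if d k then k + 1 else 0) := by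
      unfold majP
      rw [show m + 1 - 1 = m from rfl]
    have hDS : DScnt (m + 1) d j.1 = ∑ k ∈ range m, (if j.1 ≤ k ∧ d k then 1 else 0) := by
      unfold DScnt
      rw [show m + 1 - 1 = m from rfl]
    have hsum : majP (m + 1 + 1) ltP σ + ∑ k ∈ range m, lt k =
        (if c j.1 then j.1 + 1 else 0) + (majP (m + 1) ltP τ + DScnt (m + 1) d j.1) := by
      rw [hmaj, sum_range_decomp m j.1 hjm
        (fun i => if ltP (w (i + 1)) (w i) then i + 1 else 0), hG, hmajτ, hDS]
      rw [add_assoc, ← Finset.sum_add_distrib, Finset.sum_congr rfl hterm,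
        Finset.sum_add_distrib]
    have hGE : (if c j.1 then j.1 + 1 else 0) =
        Ecnt (m + 1) c d j.1 + (if 1 ≤ j.1 ∧ d (j.1 - 1) then j.1 else 0) := by
      unfold Ecnt
      by_cases hcj : c j.1
      · rw [if_pos hcj, if_pos ⟨hj, hcj⟩]
        by_cases hld : 1 ≤ j.1 ∧ d (j.1 - 1)
        · rw [if_pos hld, if_pos hld]; omega
        · rw [if_neg hld, if_neg hld]
      · have h2 : ¬ (1 ≤ j.1 ∧ d (j.1 - 1)) := by
          rintro ⟨h1, hdd⟩
          have h3 := hkey (j.1 - 1) hdd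
          rw [Nat.sub_add_cancel h1] at h3
          exact hcj h3
        rw [if_neg hcj, if_neg (fun hh => hcj hh.2), if_neg h2]
    rw [hLval] at hsum
    omega

end Insertion

lemma insPerm_bijective (n : ℕ) :
    Function.Bijective (fun p : Equiv.Perm (Fin n) × Fin (n + 1) => insPerm p.1 p.2) := by
  rw [Fintype.bijective_iff_injective_and_card]
  constructor
  · rintro ⟨τ, j⟩ ⟨τ', j'⟩ h
    simp only at h
    have hj : j = j' := by
      by_contra hne
      obtain ⟨i, hi⟩ := Fin.exists_succAbove_eq hne
      have h1 : insPerm τ j j = Fin.last n := insPerm_apply_self τ j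
      have h2 : insPerm τ' j' j = (τ' i).castSucc := by
        rw [← hi]; exact insPerm_apply_succAbove τ' j' i
      rw [h, h2] at h1
      exact absurd h1 (Fin.castSucc_lt_last (τ' i)).ne
    subst hj
    have hτ : τ = τ' := by
      apply Equiv.ext
      intro i
      have h1 : insPerm τ j (j.succAbove i) = insPerm τ' j (j.succAbove i) := by rw [h]
      rw [insPerm_apply_succAbove, insPerm_apply_succAbove] at h1
      exact Fin.castSucc_injective n h1
    rw [hτ]
  · rw [Fintype.card_prod, Fintype.card_perm, Fintype.card_perm, Fintype.card_fin,
      Fintype.card_fin, Nat.factorial_succ, Nat.mul_comm]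

lemma majP_restrict (n : ℕ) (ltP : ℕ → ℕ → Prop) [DecidableRel ltP]
    (τ : Equiv.Perm (Fin n)) :
    majP n ltP τ = majP n (fun x y => ltP x y ∧ y ≤ n) τ := by
  unfold majP
  exact Finset.sum_congr rfl
    (fun i _ => if_congr ⟨fun h => ⟨h, word_le n τ i⟩, And.left⟩ rfl rfl)

lemma invG_restrict (n : ℕ) (ltP : ℕ → ℕ → Prop) [DecidableRel ltP]
    (τ : Equiv.Perm (Fin n)) :
    invG n ltP τ = invG n (fun x y => ltP x y ∧ y ≤ n) τ := by
  unfold invG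
  congr 1
  refine Finset.filter_congr ?_
  rintro ⟨a, b⟩ hab
  simp only
  constructor
  · rintro ⟨h1, h2, h3, h4⟩
    exact ⟨h1, h2, fun hh => h3 hh.1, fun hh => h4 hh.1⟩
  · rintro ⟨h1, h2, h3, h4⟩
    exact ⟨h1, h2, fun hh => h3 ⟨hh, word_le n τ b⟩, fun hh => h4 ⟨hh, word_le n τ a⟩⟩

lemma aux (n : ℕ) : ∀ (ltP : ℕ → ℕ → Prop) (inst : DecidableRel ltP),
    (∀ x y, ltP x y → x ∈ Finset.Icc 1 n ∧ y ∈ Finset.Icc 1 n) →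
    (∀ x y z, ltP x y → ltP y z → ltP x z) →
    (∀ x y, ltP x y → x < y) →
    (∀ x y z, x ∈ Finset.Icc 1 n → y ∈ Finset.Icc 1 n → z ∈ Finset.Icc 1 n →
      y ≠ x → y ≠ z → ltP x z →
      ¬ ltP x y → ¬ ltP y x → ¬ ltP y z → ¬ ltP z y → x < y ∧ y < z) →
    ∑ σ : Equiv.Perm (Fin n),
      (X : Polynomial ℚ) ^ (majP n ltP σ + invG n ltP σ) = tfact ℚ n := by
  induction n with
  | zero =>
    intro ltP inst hmem htrans hnat hnuio
    have h0 : ∀ σ : Equiv.Perm (Fin 0), majP 0 ltP σ + invG 0 ltP σ = 0 := by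
      intro σ
      simp [majP, invG]
    rw [Finset.sum_congr rfl (fun σ _ => by rw [h0 σ, pow_zero])]
    simp [tfact, Fintype.card_perm]
  | succ n ih =>
    intro ltP inst hmem htrans hnat hnuio
    have hnotop : ∀ x, ¬ ltP (n + 1) x := by
      intro x h
      have h1 := hnat _ _ h
      have h2 := (hmem _ _ h).2
      simp only [Finset.mem_Icc] at h2
      omega
    have hkey : ∀ (τ : Equiv.Perm (Fin n)) (i : ℕ),
        ltP (word n τ (i + 1)) (word n τ i) → ltP (word n τ (i + 1)) (n + 1) := by
      intro τ i hdesc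
      by_contra hnc
      have hx := (hmem _ _ hdesc).1
      have hz := (hmem _ _ hdesc).2
      have hxle := word_le n τ (i + 1)
      have hzle := word_le n τ i
      by_cases hzM : ltP (word n τ i) (n + 1)
      · exact hnc (htrans _ _ _ hdesc hzM)
      · have hcon := hnuio (word n τ (i + 1)) (n + 1) (word n τ i) hx
          (by simp only [Finset.mem_Icc]; omega) hz (by omega) (by omega)
          hdesc hnc (hnotop _) (hnotop _) hzM
        omega
    -- transfer hypotheses to the restriction
    have hIH := ih (fun x y => ltP x y ∧ y ≤ n) (fun x y => instDecidableAnd)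
      (by
        rintro x y ⟨h, hy⟩
        have h1 := (hmem _ _ h).1
        have h2 := hnat _ _ h
        simp only [Finset.mem_Icc] at h1 ⊢
        omega)
      (by
        rintro x y z ⟨h1, -⟩ ⟨h2, hz⟩
        exact ⟨htrans _ _ _ h1 h2, hz⟩)
      (fun x y h => hnat _ _ h.1)
      (by
        intro x y z hx hy hz hyx hyz hxz hnxy hnyx hnyz hnzy
        simp only [Finset.mem_Icc] at hx hy hz
        exact hnuio x y z (by simp only [Finset.mem_Icc]; omega)
          (by simp only [Finset.mem_Icc]; omega) (by simp only [Finset.mem_Icc]; omega)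
          hyx hyz hxz.1
          (fun hh => hnxy ⟨hh, by omega⟩) (fun hh => hnyx ⟨hh, by omega⟩)
          (fun hh => hnyz ⟨hh, by omega⟩) (fun hh => hnzy ⟨hh, by omega⟩))
    have hstat : ∀ τ : Equiv.Perm (Fin n),
        majP n ltP τ + invG n ltP τ =
          majP n (fun x y => ltP x y ∧ y ≤ n) τ + invG n (fun x y => ltP x y ∧ y ≤ n) τ := by
      intro τ
      rw [majP_restrict, invG_restrict]
    have hins : ∀ (τ : Equiv.Perm (Fin n)) (j : Fin (n + 1)),
        majP (n + 1) ltP (insPerm τ j) + invG (n + 1) ltP (insPerm τ j) =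
          (majP n ltP τ + invG n ltP τ) +
            Dlt n (fun b => ltP (word n τ b) (n + 1))
              (fun k => ltP (word n τ (k + 1)) (word n τ k)) j.1 := by
      intro τ j
      rw [majP_insPerm ltP τ j hnotop (hkey τ), invG_insPerm ltP τ j hnotop]
      unfold Dlt
      ring
    rw [← Fintype.sum_bijective _ (insPerm_bijective n)
      (fun p : Equiv.Perm (Fin n) × Fin (n + 1) =>
        (X : Polynomial ℚ) ^ (majP (n + 1) ltP (insPerm p.1 p.2) +
          invG (n + 1) ltP (insPerm p.1 p.2)))
      (fun σ => (X : Polynomial ℚ) ^ (majP (n + 1) ltP σ + invG (n + 1) ltP σ))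
      (fun p => rfl)]
    rw [Fintype.sum_prod_type]
    have hinner : ∀ τ : Equiv.Perm (Fin n),
        (∑ j : Fin (n + 1), (X : Polynomial ℚ) ^ (majP (n + 1) ltP (insPerm τ j) +
            invG (n + 1) ltP (insPerm τ j))) =
          (X : Polynomial ℚ) ^ (majP n ltP τ + invG n ltP τ) * tnum ℚ (n + 1) := by
      intro τ
      calc (∑ j : Fin (n + 1), (X : Polynomial ℚ) ^ (majP (n + 1) ltP (insPerm τ j) +
              invG (n + 1) ltP (insPerm τ j)))
          = ∑ j : Fin (n + 1), (X : Polynomial ℚ) ^ (majP n ltP τ + invG n ltP τ) *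
              (X : Polynomial ℚ) ^ (Dlt n (fun b => ltP (word n τ b) (n + 1))
                (fun k => ltP (word n τ (k + 1)) (word n τ k)) j.1) :=
            Finset.sum_congr rfl (fun j _ => by rw [hins τ j, pow_add])
        _ = (X : Polynomial ℚ) ^ (majP n ltP τ + invG n ltP τ) *
              ∑ j : Fin (n + 1), (X : Polynomial ℚ) ^ (Dlt n (fun b => ltP (word n τ b) (n + 1))
                (fun k => ltP (word n τ (k + 1)) (word n τ k)) j.1) := by
            rw [Finset.mul_sum]
        _ = (X : Polynomial ℚ) ^ (majP n ltP τ + invG n ltP τ) *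
              ∑ j ∈ range (n + 1), (X : Polynomial ℚ) ^ (Dlt n (fun b => ltP (word n τ b) (n + 1))
                (fun k => ltP (word n τ (k + 1)) (word n τ k)) j) := by
            rw [Finset.sum_range (fun j => (X : Polynomial ℚ) ^
              (Dlt n (fun b => ltP (word n τ b) (n + 1))
                (fun k => ltP (word n τ (k + 1)) (word n τ k)) j))]
        _ = (X : Polynomial ℚ) ^ (majP n ltP τ + invG n ltP τ) * tnum ℚ (n + 1) := by
            rw [sum_X_pow_Dlt n _ _ (hkey τ)]
            rfl
    rw [Finset.sum_congr rfl (fun τ _ => hinner τ), ← Finset.sum_mul,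
      Finset.sum_congr rfl (fun τ _ => by rw [hstat τ]), hIH]
    unfold tfact
    rw [Finset.prod_range_succ]

end MahonAux

/-- For every natural unit interval order `P` on `[n]` with incomparability graph `G`,
the statistic `maj_P + inv_G` is Mahonian: `∑_{σ ∈ S_n} q^{maj_P(σ)+inv_G(σ)} = [n]_q!`. -/
theorem majP_add_invG_mahonian (n : ℕ) (ltP : ℕ → ℕ → Prop) [DecidableRel ltP]
    (hmem : ∀ x y, ltP x y → x ∈ Finset.Icc 1 n ∧ y ∈ Finset.Icc 1 n)
    (htrans : ∀ x y z, ltP x y → ltP y z → ltP x z)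
    (hnat : ∀ x y, ltP x y → x < y)
    (hnuio : ∀ x y z, x ∈ Finset.Icc 1 n → y ∈ Finset.Icc 1 n → z ∈ Finset.Icc 1 n →
      y ≠ x → y ≠ z → ltP x z →
      ¬ ltP x y → ¬ ltP y x → ¬ ltP y z → ¬ ltP z y → x < y ∧ y < z) :
    ∑ σ : Equiv.Perm (Fin n),
      (Polynomial.X : Polynomial ℚ) ^ (majP n ltP σ + invG n ltP σ) = tfact ℚ n := by
  with_reducible exact MahonAux.aux n ltP ‹DecidableRel ltP› hmem htrans hnat hnuio
end

section
/- Let A(t) and B(t) be polynomials in ℚ[t] that are nonnegative, unimodal, and palindromic with centers of symmetry c_A and c_B respectively. Then A(t)·B(t) is nonnegative, unimodal, and palindromic with center of symmetry c_A + c_B. Moreover, if c_A = c_B then A(t)+B(t) is nonnegative, unimodal, and palindromic with center c_A. -/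
/-!
Write `A = ∑ dᵢ Xⁱ (1 + X + ⋯ + X^(n - 2i))` with `dᵢ = aᵢ - aᵢ₋₁`, the coefficients of
`(1 - X) A`; nonnegativity and unimodality make every `dᵢ` with `2i ≤ n` nonnegative, so `A`
is a nonnegative combination of palindromic "interval" polynomials with the same center.
Multiplying `B` by `1 + X + ⋯ + X^L` takes window sums of its coefficients, and these increase
up to the new center because the coefficient entering the window dominates the one leaving it.
Palindromicity of the product is multiplicativity of `reflect`.
-/

/-- `f` is nonnegative, unimodal and palindromic with center of symmetry `c`: all
coefficients are `≥ 0`, they weakly increase up to the center, coefficients in positions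
summing to `2c` agree, and coefficients vanish beyond `2c`. -/
def PUP (f : Polynomial ℚ) (c : ℚ) : Prop :=
  (∀ i : ℕ, 0 ≤ f.coeff i) ∧
  (∀ i j : ℕ, i ≤ j → (j : ℚ) ≤ c → f.coeff i ≤ f.coeff j) ∧
  (∀ i j : ℕ, (i : ℚ) + (j : ℚ) = 2 * c → f.coeff i = f.coeff j) ∧
  (∀ i : ℕ, 2 * c < (i : ℚ) → f.coeff i = 0)

open Polynomial Finset

namespace Polynomial

lemma coeff_geom_sum {R : Type*} [Semiring R] (L k : ℕ) :
    (∑ p ∈ range (L + 1), (X : R[X]) ^ p).coeff k = if k ≤ L then 1 else 0 := by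
  simp [finsetSum_coeff, coeff_X_pow]

lemma sum_range_coeff_one_sub_X_mul {R : Type*} [Ring R] (f : R[X]) (K : ℕ) :
    ∑ i ∈ range (K + 1), ((1 - X) * f).coeff i = f.coeff K := by
  have hdiff (i : ℕ) : ((1 - X) * f).coeff i = (X * f).coeff (i + 1) - (X * f).coeff i := by
    simp [sub_mul, coeff_X_mul]
  rw [sum_congr rfl fun i _ => hdiff i, sum_range_sub, coeff_X_mul, coeff_X_mul_zero, sub_zero]

lemma coeff_X_pow_mul_geom_sum {R : Type*} [Semiring R] (i L k : ℕ) :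
    (X ^ i * ∑ p ∈ range (L + 1), (X : R[X]) ^ p).coeff k =
      if i ≤ k ∧ k ≤ i + L then 1 else 0 := by
  rw [coeff_X_pow_mul', coeff_geom_sum]
  split_ifs <;> first | rfl | omega

section Semiring

variable {R : Type*} [Semiring R] [PartialOrder R]

lemma coeff_mul_nonneg [IsOrderedRing R] {p q : R[X]} (hp : ∀ i, 0 ≤ p.coeff i)
    (hq : ∀ i, 0 ≤ q.coeff i) (k : ℕ) : 0 ≤ (p * q).coeff k := by
  rw [coeff_mul]
  exact sum_nonneg fun x _ => mul_nonneg (hp x.1) (hq x.2)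

lemma monotoneOn_coeff_X_pow_mul {p : R[X]} {N : ℕ} (hmono : MonotoneOn p.coeff (Set.Iic N))
    (hp : ∀ k, 0 ≤ p.coeff k) (i : ℕ) : MonotoneOn (X ^ i * p).coeff (Set.Iic (N + i)) := by
  intro a ha b hb hab
  simp only [Set.mem_Iic, coeff_X_pow_mul'] at *
  split_ifs with hia hib hib
  · exact hmono (by simp; omega) (by simp; omega) (by omega)
  · omega
  · exact hp _
  · rfl

/-- `n` is twice the center of symmetry. -/
structure IsPalindromicUnimodal (n : ℕ) (f : R[X]) : Prop where
  coeff_nonneg : ∀ i, 0 ≤ f.coeff i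
  monotoneOn_coeff : MonotoneOn f.coeff (Set.Iic (n / 2))
  reflect_eq : reflect n f = f
  natDegree_le : f.natDegree ≤ n

namespace IsPalindromicUnimodal

variable {n : ℕ} {f g : R[X]}

lemma coeff_symm (hf : IsPalindromicUnimodal n f) {k : ℕ} (hk : k ≤ n) :
    f.coeff (n - k) = f.coeff k := by
  conv_rhs => rw [← hf.reflect_eq, coeff_reflect, revAt_le hk]

lemma coeff_le_coeff (hf : IsPalindromicUnimodal n f) {i j : ℕ} (hij : i ≤ j)
    (hsum : i + j ≤ n) : f.coeff i ≤ f.coeff j := by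
  by_cases hj : 2 * j ≤ n
  · exact hf.monotoneOn_coeff (by simp; omega) (by simp; omega) hij
  · rw [← hf.coeff_symm (by omega : j ≤ n)]
    exact hf.monotoneOn_coeff (by simp; omega) (by simp; omega) (by omega)

theorem add [IsOrderedRing R] (hf : IsPalindromicUnimodal n f) (hg : IsPalindromicUnimodal n g) :
    IsPalindromicUnimodal n (f + g) where
  coeff_nonneg i := by rw [coeff_add]; exact add_nonneg (hf.coeff_nonneg i) (hg.coeff_nonneg i)
  monotoneOn_coeff _ hi _ hj hij := by
    simp only [coeff_add]
    exact add_le_add (hf.monotoneOn_coeff hi hj hij) (hg.monotoneOn_coeff hi hj hij)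
  reflect_eq := by rw [reflect_add, hf.reflect_eq, hg.reflect_eq]
  natDegree_le := natDegree_add_le_of_degree_le hf.natDegree_le hg.natDegree_le

end IsPalindromicUnimodal

end Semiring

namespace IsPalindromicUnimodal

variable {R : Type*} [Ring R] [PartialOrder R] {m n : ℕ} {f g : R[X]}

theorem eq_sum_C_mul_X_pow_mul_geom_sum (hf : IsPalindromicUnimodal m f) :
    f = ∑ i ∈ range (m / 2 + 1),
      C (((1 - X) * f).coeff i) * (X ^ i * ∑ p ∈ range (m - 2 * i + 1), X ^ p) := by
  ext k
  simp only [finsetSum_coeff, coeff_C_mul, coeff_X_pow_mul_geom_sum, mul_ite, mul_one, mul_zero]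
  rw [← sum_filter]
  rcases le_or_gt k m with hk | hk
  · rw [show (range (m / 2 + 1)).filter (fun i => i ≤ k ∧ k ≤ i + (m - 2 * i)) =
        range (min k (m - k) + 1) by ext; simp; omega, sum_range_coeff_one_sub_X_mul]
    rcases min_cases k (m - k) with ⟨hmin, -⟩ | ⟨hmin, -⟩
    · rw [hmin]
    · rw [hmin, hf.coeff_symm hk]
  · rw [show (range (m / 2 + 1)).filter (fun i => i ≤ k ∧ k ≤ i + (m - 2 * i)) = ∅ by
        ext; simp; omega, sum_empty]
    exact coeff_eq_zero_of_natDegree_lt (hf.natDegree_le.trans_lt hk)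

variable [IsOrderedRing R]

lemma coeff_one_sub_X_mul_nonneg (hf : IsPalindromicUnimodal n f) {i : ℕ} (hi : i ≤ n / 2) :
    0 ≤ ((1 - X) * f).coeff i := by
  rcases i with _ | j
  · simpa [sub_mul, coeff_X_mul_zero] using hf.coeff_nonneg 0
  · simpa [sub_mul, coeff_X_mul] using hf.monotoneOn_coeff (by simp; omega) hi j.le_succ

lemma monotoneOn_coeff_geom_sum_mul (hg : IsPalindromicUnimodal n g) (L : ℕ) :
    MonotoneOn ((∑ p ∈ range (L + 1), X ^ p) * g).coeff (Set.Iic ((L + n) / 2)) := by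
  set G : R[X] := ∑ p ∈ range (L + 1), X ^ p
  refine monotoneOn_of_le_add_one Set.ordConnected_Iic fun k _ _ hk => ?_
  replace hk : 2 * (k + 1) ≤ L + n := by simp at hk; omega
  have hG : X * G + 1 = X ^ (L + 1) + G := by rw [← geom_sum_succ, geom_sum_succ']
  -- Moving the window one step gains `g_(k+1)` and loses `g_(k-L)`.
  have hstep := congrArg (coeff · (k + 1)) (congrArg (· * g) hG)
  simp only [add_mul, one_mul, mul_assoc, coeff_add, coeff_X_mul, coeff_X_pow_mul'] at hstep
  have hlost : (if L + 1 ≤ k + 1 then g.coeff (k + 1 - (L + 1)) else 0) ≤ g.coeff (k + 1) := by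
    split_ifs
    · exact hg.coeff_le_coeff (by omega) (by omega)
    · exact hg.coeff_nonneg _
  refine le_of_add_le_add_right (a := g.coeff (k + 1)) ?_
  rw [hstep]
  exact (add_le_add_left hlost _).trans_eq (add_comm _ _)

theorem mul (hf : IsPalindromicUnimodal m f) (hg : IsPalindromicUnimodal n g) :
    IsPalindromicUnimodal (m + n) (f * g) where
  coeff_nonneg := coeff_mul_nonneg hf.coeff_nonneg hg.coeff_nonneg
  monotoneOn_coeff a ha b hb hab := by
    rw [hf.eq_sum_C_mul_X_pow_mul_geom_sum, sum_mul]
    simp only [finsetSum_coeff, mul_assoc, coeff_C_mul]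
    refine sum_le_sum fun i hi => mul_le_mul_of_nonneg_left ?_
      (hf.coeff_one_sub_X_mul_nonneg (by simpa [Nat.lt_succ_iff] using hi))
    have hGg : ∀ k, 0 ≤ ((∑ p ∈ range (m - 2 * i + 1), X ^ p) * g).coeff k :=
      coeff_mul_nonneg (fun k => by rw [coeff_geom_sum]; split_ifs <;> simp) hg.coeff_nonneg
    have := monotoneOn_coeff_X_pow_mul (hg.monotoneOn_coeff_geom_sum_mul (m - 2 * i)) hGg i
    simp only [mem_range, Set.mem_Iic] at hi ha hb
    exact this (by simp; omega) (by simp; omega) hab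
  reflect_eq := by
    rw [reflect_mul _ _ hf.natDegree_le hg.natDegree_le, hf.reflect_eq, hg.reflect_eq]
  natDegree_le := natDegree_mul_le.trans (add_le_add hf.natDegree_le hg.natDegree_le)

end IsPalindromicUnimodal

end Polynomial

theorem pup_div_two_iff (f : ℚ[X]) (n : ℕ) : PUP f (n / 2) ↔ IsPalindromicUnimodal n f := by
  have hcenter : 2 * ((n : ℚ) / 2) = n := by ring
  have hhalf (j : ℕ) : (j : ℚ) ≤ n / 2 ↔ j ≤ n / 2 := by
    rw [le_div_iff₀ two_pos, Nat.le_div_iff_mul_le two_pos]; norm_cast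
  simp only [PUP, hcenter]
  constructor
  · rintro ⟨hnonneg, hmono, hpal, hvanish⟩
    have hdeg : f.natDegree ≤ n :=
      natDegree_le_iff_coeff_eq_zero.2 fun i hi => hvanish i (by exact_mod_cast hi)
    refine ⟨hnonneg, fun i _ j hj hij => hmono i j hij ((hhalf j).2 hj), ?_, hdeg⟩
    ext i
    rw [coeff_reflect]
    by_cases hi : i ≤ n
    · rw [revAt_le hi]
      exact hpal _ _ (by push_cast [Nat.cast_sub hi]; ring)
    · rw [revAt_eq_self_of_lt (not_le.1 hi)]
  · intro hf
    refine ⟨hf.coeff_nonneg, fun i j hij hj => ?_, fun i j hij => ?_, fun i hi =>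
      coeff_eq_zero_of_natDegree_lt (hf.natDegree_le.trans_lt (by exact_mod_cast hi))⟩
    · have hj : j ≤ n / 2 := (hhalf j).1 hj
      exact hf.monotoneOn_coeff (hij.trans hj) hj hij
    have hsum : i + j = n := by exact_mod_cast hij
    rw [← hf.coeff_symm (by omega : j ≤ n)]
    congr 1
    omega

/-- If `A` and `B` are nonnegative, unimodal, palindromic with centers `c_A = n_A/2` and
`c_B = n_B/2`, then `A·B` is nonnegative, unimodal, palindromic with center `c_A + c_B`;
and if moreover `c_A = c_B` then so is `A + B` with center `c_A`. -/
theorem unimodal_palindromic_tool (A B : Polynomial ℚ) (nA nB : ℕ) (cA cB : ℚ)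
    (hcA : cA = (nA : ℚ) / 2) (hcB : cB = (nB : ℚ) / 2)
    (hA : PUP A cA) (hB : PUP B cB) :
    PUP (A * B) (cA + cB) ∧ (cA = cB → PUP (A + B) cA) := by
  subst hcA hcB
  refine ⟨?_, fun hc => ?_⟩
  · rw [← add_div, ← Nat.cast_add, pup_div_two_iff]
    exact ((pup_div_two_iff A nA).1 hA).mul ((pup_div_two_iff B nB).1 hB)
  · rw [hc] at hA ⊢
    rw [pup_div_two_iff] at hA hB ⊢
    exact hA.add hB
end
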